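/- arXiv:2407.16212 — 6 statements merged into one kernel-verified Lean document; each statement's English description precedes it below -/
import Mathlib

section
/- In the linear-Gaussian model, with Γ_{Θ|Y} = (G^⊤ Γ_{Y|Θ}^{-1} G + Γ_Θ^{-1})^{-1} and Γ_Y = G Γ_Θ G^⊤ + Γ_{Y|Θ}, the parameter-space pencil (Γ_Θ, Γ_{Θ|Y}) and the data-space pencil (Γ_Y, Γ_{Y|Θ}) have identical generalized eigenvalues strictly greater than one, counted with multiplicity; these eigenvalues are exactly 1 + λ_j for the positive eigenvalues λ_j of Γ_Θ^{1/2} G^⊤ Γ_{Y|Θ}^{-1} G Γ_Θ^{1/2}. -/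
open Matrix

section Aux

noncomputable def Matrix.PosSemidef.sqrt {𝕜 : Type*} [RCLike 𝕜] {n : Type*} [Fintype n]
    [DecidableEq n] [PartialOrder 𝕜] {A : Matrix n n 𝕜} (hA : A.PosSemidef) : Matrix n n 𝕜 :=
  hA.1.eigenvectorUnitary.1 * diagonal ((↑) ∘ (√·) ∘ hA.1.eigenvalues) *
  (star hA.1.eigenvectorUnitary : Matrix n n 𝕜)

lemma Matrix.PosSemidef.posSemidef_sqrt {n : Type*} [Fintype n] [DecidableEq n]
    {A : Matrix n n ℝ} (hA : A.PosSemidef) : hA.sqrt.PosSemidef := by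
  unfold Matrix.PosSemidef.sqrt
  have hd : (diagonal (RCLike.ofReal ∘ (√·) ∘ hA.1.eigenvalues) : Matrix n n ℝ).PosSemidef :=
    PosSemidef.diagonal (fun i => by simp [Real.sqrt_nonneg])
  have := hd.mul_mul_conjTranspose_same (hA.1.eigenvectorUnitary : Matrix n n ℝ)
  rwa [star_eq_conjTranspose]

lemma Matrix.PosSemidef.sqrt_mul_self {n : Type*} [Fintype n] [DecidableEq n]
    {A : Matrix n n ℝ} (hA : A.PosSemidef) : hA.sqrt * hA.sqrt = A := by
  unfold Matrix.PosSemidef.sqrt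
  have hU : (star hA.1.eigenvectorUnitary : Matrix n n ℝ) * hA.1.eigenvectorUnitary.1 = 1 :=
    Unitary.coe_star_mul_self _
  conv_rhs => rw [hA.1.spectral_theorem, Unitary.conjStarAlgAut_apply]
  have hdd : (diagonal (RCLike.ofReal ∘ (√·) ∘ hA.1.eigenvalues) : Matrix n n ℝ) *
      diagonal (RCLike.ofReal ∘ (√·) ∘ hA.1.eigenvalues) = diagonal (RCLike.ofReal ∘ hA.1.eigenvalues) := by
    rw [diagonal_mul_diagonal]; congr 1; funext i
    simp [Real.mul_self_sqrt (hA.eigenvalues_nonneg i)]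
  calc _ = (hA.1.eigenvectorUnitary.1 * diagonal (RCLike.ofReal ∘ (√·) ∘ hA.1.eigenvalues)) *
        ((star hA.1.eigenvectorUnitary : Matrix n n ℝ) * hA.1.eigenvectorUnitary.1) *
        (diagonal (RCLike.ofReal ∘ (√·) ∘ hA.1.eigenvalues) * (star hA.1.eigenvectorUnitary : Matrix n n ℝ)) := by
        simp only [Matrix.mul_assoc]
    _ = _ := by rw [hU, Matrix.mul_one, ← hdd]; simp only [Matrix.mul_assoc]

lemma rank_add_ker {m n : ℕ} (X : Matrix (Fin m) (Fin n) ℝ) :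
    X.rank + Module.finrank ℝ (LinearMap.ker X.mulVecLin) = n := by
  have := LinearMap.finrank_range_add_finrank_ker X.mulVecLin
  rwa [Module.finrank_fintype_fun_eq_card, Fintype.card_fin, ← Matrix.rank] at this

lemma ker_comm_finrank {n p : ℕ} (N : Matrix (Fin n) (Fin p) ℝ) {c : ℝ} (hc : c ≠ 0) :
    Module.finrank ℝ (LinearMap.ker (N * Nᵀ - c • 1).mulVecLin)
      = Module.finrank ℝ (LinearMap.ker (Nᵀ * N - c • 1).mulVecLin) := by
  have mem1 : ∀ v : Fin n → ℝ, v ∈ LinearMap.ker (N * Nᵀ - c • 1).mulVecLin ↔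
      (N * Nᵀ) *ᵥ v = c • v := by
    intro v
    simp [LinearMap.mem_ker, mulVecLin_apply, sub_mulVec, smul_mulVec, one_mulVec,
      sub_eq_zero]
    rw [← mulVec_transpose, mulVec_mulVec]
  have mem2 : ∀ v : Fin p → ℝ, v ∈ LinearMap.ker (Nᵀ * N - c • 1).mulVecLin ↔
      (Nᵀ * N) *ᵥ v = c • v := by
    intro v
    simp [LinearMap.mem_ker, mulVecLin_apply, sub_mulVec, smul_mulVec, one_mulVec,
      sub_eq_zero]
    rw [← mulVec_transpose, mulVec_mulVec]
  refine LinearEquiv.finrank_eq ?_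
  refine
    { toFun := fun v => ⟨Nᵀ *ᵥ v.1, ?_⟩
      map_add' := ?_
      map_smul' := ?_
      invFun := fun w => ⟨c⁻¹ • (N *ᵥ w.1), ?_⟩
      left_inv := ?_
      right_inv := ?_ }
  · rcases v with ⟨v, hv⟩
    rw [mem1] at hv
    rw [mem2, mulVec_mulVec, Matrix.mul_assoc, ← mulVec_mulVec, hv, mulVec_smul]
  · intro x y; ext1; simp [mulVec_add]
  · intro t x; ext1; simp [mulVec_smul]
  · rcases w with ⟨w, hw⟩
    rw [mem2] at hw
    rw [mem1, mulVec_smul, mulVec_mulVec, Matrix.mul_assoc, ← mulVec_mulVec, hw, mulVec_smul,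
      smul_comm]
  · rintro ⟨v, hv⟩
    rw [mem1] at hv
    ext1
    simp only [mulVec_smul, mulVec_mulVec, hv]
    rw [smul_smul, inv_mul_cancel₀ hc, one_smul]
  · rintro ⟨w, hw⟩
    rw [mem2] at hw
    ext1
    simp only [mulVec_smul, mulVec_mulVec]
    rw [hw, smul_smul, inv_mul_cancel₀ hc, one_smul]

lemma eig_count {m : ℕ} (A : Matrix (Fin m) (Fin m) ℝ) (hA : A.IsHermitian) (μ : ℝ) :
    Multiset.count μ (Multiset.map hA.eigenvalues Finset.univ.val) + (A - μ • 1).rank = m := by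
  classical
  set U := (IsHermitian.eigenvectorUnitary hA : Matrix (Fin m) (Fin m) ℝ) with hUdef
  have hU : U * star U = 1 := mem_unitaryGroup_iff.mp (IsHermitian.eigenvectorUnitary hA).2
  have hU' : star U * U = 1 := mem_unitaryGroup_iff'.mp (IsHermitian.eigenvectorUnitary hA).2
  have hdetU : IsUnit U.det :=
    IsUnit.of_mul_eq_one _ (by rw [← det_mul, hU, det_one])
  have hdetU' : IsUnit (star U).det :=
    IsUnit.of_mul_eq_one _ (by rw [← det_mul, hU', det_one])
  have hspec : A - μ • 1 = U * diagonal (fun i => hA.eigenvalues i - μ) * star U := by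
    have h1 : A = U * diagonal (RCLike.ofReal ∘ hA.eigenvalues) * star U := by
      rw [hUdef, ← Unitary.coe_star]; exact hA.spectral_theorem
    have h2 : (μ • 1 : Matrix (Fin m) (Fin m) ℝ) = U * (μ • 1) * star U := by
      rw [Matrix.mul_smul, Matrix.mul_one, Matrix.smul_mul, hU]
    calc A - μ • 1 = U * diagonal (RCLike.ofReal ∘ hA.eigenvalues) * star U
          - U * (μ • 1) * star U := by rw [← h1, ← h2]
      _ = U * (diagonal (RCLike.ofReal ∘ hA.eigenvalues) - μ • 1) * star U := by
          rw [Matrix.mul_sub, Matrix.sub_mul]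
      _ = U * diagonal (fun i => hA.eigenvalues i - μ) * star U := by
          congr 1
          congr 1
          rw [smul_one_eq_diagonal, ← diagonal_sub]
          congr 1
  have hrank : (A - μ • 1).rank = Fintype.card {i // hA.eigenvalues i - μ ≠ 0} := by
    rw [hspec, rank_mul_eq_left_of_isUnit_det _ _ hdetU', rank_mul_eq_right_of_isUnit_det _ _ hdetU,
      rank_diagonal]
  have hcount : Multiset.count μ (Multiset.map hA.eigenvalues Finset.univ.val)
      = (Finset.univ.filter fun i => μ = hA.eigenvalues i).card := by
    rw [Multiset.count_map]; rfl
  rw [hcount, hrank, Fintype.card_subtype]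
  have : (Finset.univ.filter fun i => hA.eigenvalues i - μ ≠ 0)
      = (Finset.univ.filter fun i => ¬(μ = hA.eigenvalues i)) := by
    apply Finset.filter_congr
    intro i _
    exact not_congr (by constructor <;> intro h <;> linarith)
  rw [this, Finset.card_filter_add_card_filter_not, Finset.card_univ, Fintype.card_fin]

end Aux

/-- In the linear-Gaussian model, the parameter-space pencil
`(Γ_Θ, Γ_{Θ|Y})` and the data-space pencil `(Γ_Y, Γ_{Y|Θ})` have identical
generalized eigenvalues strictly greater than one, counted with multiplicity;
these eigenvalues are exactly `1 + λ_j` for the positive eigenvalues `λ_j` of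
`Γ_Θ^{1/2} Gᵀ Γ_{Y|Θ}⁻¹ G Γ_Θ^{1/2}`.  Generalized eigenvalues of a pencil
`(A, B)` with `B` positive definite are the eigenvalues of
`B^{-1/2} A B^{-1/2}`. -/
theorem stmt_4
    (n p : ℕ)
    (G : Matrix (Fin n) (Fin p) ℝ)
    (ΓΘ : Matrix (Fin p) (Fin p) ℝ) (hΓΘ : ΓΘ.PosDef)
    (ΓYΘ : Matrix (Fin n) (Fin n) ℝ) (hΓYΘ : ΓYΘ.PosDef)
    (Γpost : Matrix (Fin p) (Fin p) ℝ)
    (hΓpost : Γpost = (Gᵀ * ΓYΘ⁻¹ * G + ΓΘ⁻¹)⁻¹)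
    (ΓY : Matrix (Fin n) (Fin n) ℝ)
    (hΓY : ΓY = G * ΓΘ * Gᵀ + ΓYΘ)
    -- square roots of the inverses of the "B" matrices of the two pencils,
    -- and of the prior covariance
    (hPinv : (Γpost⁻¹).PosSemidef)
    (hDinv : (ΓYΘ⁻¹).PosSemidef)
    (SP : Matrix (Fin p) (Fin p) ℝ) (hSP : SP = hPinv.sqrt)
    (SD : Matrix (Fin n) (Fin n) ℝ) (hSD : SD = hDinv.sqrt)
    (SG : Matrix (Fin p) (Fin p) ℝ) (hSG : SG = hΓΘ.posSemidef.sqrt)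
    -- the three symmetric matrices whose eigenvalues are compared
    (hP : (SP * ΓΘ * SP).IsHermitian)
    (hD : (SD * ΓY * SD).IsHermitian)
    (hM : (SG * (Gᵀ * ΓYΘ⁻¹ * G) * SG).IsHermitian) :
    Multiset.filter (fun x : ℝ => 1 < x)
        (Multiset.map hP.eigenvalues Finset.univ.val) =
      Multiset.filter (fun x : ℝ => 1 < x)
        (Multiset.map hD.eigenvalues Finset.univ.val) ∧
    Multiset.filter (fun x : ℝ => 1 < x)
        (Multiset.map hP.eigenvalues Finset.univ.val) =
      Multiset.map (fun x : ℝ => 1 + x)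
        (Multiset.filter (fun x : ℝ => 0 < x)
          (Multiset.map hM.eigenvalues Finset.univ.val)) := by
  classical
  -- symmetry of the square roots
  have hSPt : SPᵀ = SP := by
    rw [hSP, ← conjTranspose_eq_transpose_of_trivial]
    exact hPinv.posSemidef_sqrt.isHermitian
  have hSDt : SDᵀ = SD := by
    rw [hSD, ← conjTranspose_eq_transpose_of_trivial]
    exact hDinv.posSemidef_sqrt.isHermitian
  have hSGt : SGᵀ = SG := by
    rw [hSG, ← conjTranspose_eq_transpose_of_trivial]
    exact hΓΘ.posSemidef.posSemidef_sqrt.isHermitian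
  have hSPSP : SP * SP = Γpost⁻¹ := by rw [hSP]; exact hPinv.sqrt_mul_self
  have hSDSD : SD * SD = ΓYΘ⁻¹ := by rw [hSD]; exact hDinv.sqrt_mul_self
  have hSGSG : SG * SG = ΓΘ := by rw [hSG]; exact hΓΘ.posSemidef.sqrt_mul_self
  -- positive definiteness facts
  have hYinv : (ΓYΘ⁻¹).PosDef := hΓYΘ.inv
  have hsemi : (Gᵀ * ΓYΘ⁻¹ * G).PosSemidef := by
    have := hYinv.posSemidef.conjTranspose_mul_mul_same G
    rwa [conjTranspose_eq_transpose_of_trivial] at this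
  have hsum : (Gᵀ * ΓYΘ⁻¹ * G + ΓΘ⁻¹).PosDef := Matrix.PosDef.posSemidef_add hsemi hΓΘ.inv
  have hpostinv_eq : Γpost⁻¹ = Gᵀ * ΓYΘ⁻¹ * G + ΓΘ⁻¹ := by
    rw [hΓpost, nonsing_inv_nonsing_inv _ hsum.det_pos.ne'.isUnit]
  have hpostinvPD : (Γpost⁻¹).PosDef := hpostinv_eq ▸ hsum
  -- determinants of the square roots are units
  have hdSP : IsUnit SP.det := by
    have h1 : SP.det * SP.det = (Γpost⁻¹).det := by rw [← det_mul, hSPSP]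
    have h2 := hpostinvPD.det_pos
    refine isUnit_iff_ne_zero.mpr fun h => ?_
    rw [h, mul_zero] at h1; rw [← h1] at h2; exact lt_irrefl _ h2
  have hdSD : IsUnit SD.det := by
    have h1 : SD.det * SD.det = (ΓYΘ⁻¹).det := by rw [← det_mul, hSDSD]
    have h2 := hYinv.det_pos
    refine isUnit_iff_ne_zero.mpr fun h => ?_
    rw [h, mul_zero] at h1; rw [← h1] at h2; exact lt_irrefl _ h2
  have hdSG : IsUnit SG.det := by
    have h1 : SG.det * SG.det = ΓΘ.det := by rw [← det_mul, hSGSG]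
    have h2 := hΓΘ.det_pos
    refine isUnit_iff_ne_zero.mpr fun h => ?_
    rw [h, mul_zero] at h1; rw [← h1] at h2; exact lt_irrefl _ h2
  -- inverse sandwich identities
  have hSGinv : SG * ΓΘ⁻¹ * SG = 1 := by
    have h1 : ΓΘ⁻¹ = SG⁻¹ * SG⁻¹ := by rw [← hSGSG, Matrix.mul_inv_rev]
    rw [h1]
    have h2 : SG * (SG⁻¹ * SG⁻¹) * SG = (SG * SG⁻¹) * (SG⁻¹ * SG) := by
      simp only [Matrix.mul_assoc]
    rw [h2, mul_nonsing_inv _ hdSG, nonsing_inv_mul _ hdSG, mul_one]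
  have hSDYSD : SD * ΓYΘ * SD = 1 := by
    have h0 : ΓYΘ = SD⁻¹ * SD⁻¹ := by
      rw [← nonsing_inv_nonsing_inv ΓYΘ hΓYΘ.det_pos.ne'.isUnit, ← hSDSD, Matrix.mul_inv_rev]
    rw [h0]
    have h2 : SD * (SD⁻¹ * SD⁻¹) * SD = (SD * SD⁻¹) * (SD⁻¹ * SD) := by
      simp only [Matrix.mul_assoc]
    rw [h2, mul_nonsing_inv _ hdSD, nonsing_inv_mul _ hdSD, mul_one]
  -- the rectangular matrix N and its Gram matrices
  have hNt : (SD * G * SG)ᵀ = SG * Gᵀ * SD := by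
    rw [transpose_mul, transpose_mul, hSGt, hSDt, ← Matrix.mul_assoc]
  have hNNt : (SD * G * SG) * (SD * G * SG)ᵀ = SD * (G * ΓΘ * Gᵀ) * SD := by
    rw [hNt, ← hSGSG]; simp only [Matrix.mul_assoc]
  have hNtN : (SD * G * SG)ᵀ * (SD * G * SG) = SG * (Gᵀ * ΓYΘ⁻¹ * G) * SG := by
    rw [hNt, ← hSDSD]; simp only [Matrix.mul_assoc]
  -- key identity: SG Γpost⁻¹ SG = M + 1
  have key1 : SG * Γpost⁻¹ * SG = SG * (Gᵀ * ΓYΘ⁻¹ * G) * SG + 1 := by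
    rw [hpostinv_eq, Matrix.mul_add, Matrix.add_mul, hSGinv]
  -- similarity of the type KL vs LK
  have hKL : (SP * SG) * (SG * SP) = SP * ΓΘ * SP := by
    rw [← hSGSG]; simp only [Matrix.mul_assoc]
  have hLK : (SG * SP) * (SP * SG) = SG * (Gᵀ * ΓYΘ⁻¹ * G) * SG + 1 := by
    rw [← key1, ← hSPSP]; simp only [Matrix.mul_assoc]
  have hdK : IsUnit ((SP * SG).det) := by rw [det_mul]; exact hdSP.mul hdSG
  have rank_sim : ∀ μ : ℝ,
      ((SP * SG) * (SG * SP) - μ • 1).rank = ((SG * SP) * (SP * SG) - μ • 1).rank := by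
    intro μ
    have h1 : ((SP * SG) * (SG * SP) - μ • 1) * (SP * SG)
        = (SP * SG) * ((SG * SP) * (SP * SG) - μ • 1) := by
      rw [Matrix.sub_mul, Matrix.mul_sub, Matrix.smul_mul, Matrix.mul_smul, one_mul,
        Matrix.mul_one, Matrix.mul_assoc]
    calc ((SP * SG) * (SG * SP) - μ • 1).rank
        = (((SP * SG) * (SG * SP) - μ • 1) * (SP * SG)).rank :=
          (rank_mul_eq_left_of_isUnit_det _ _ hdK).symm
      _ = ((SP * SG) * ((SG * SP) * (SP * SG) - μ • 1)).rank := by rw [h1]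
      _ = ((SG * SP) * (SP * SG) - μ • 1).rank :=
          rank_mul_eq_right_of_isUnit_det _ _ hdK
  have hMM1 : ∀ μ : ℝ, SG * (Gᵀ * ΓYΘ⁻¹ * G) * SG + 1 - μ • (1 : Matrix (Fin p) (Fin p) ℝ)
      = SG * (Gᵀ * ΓYΘ⁻¹ * G) * SG - (μ - 1) • 1 := by
    intro μ; rw [sub_smul, one_smul]; abel
  -- rank identities for the three pencils
  have RP : ∀ μ : ℝ, (SP * ΓΘ * SP - μ • 1).rank
      = (SG * (Gᵀ * ΓYΘ⁻¹ * G) * SG - (μ - 1) • 1).rank := by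
    intro μ
    rw [← hKL, rank_sim μ, hLK, hMM1]
  have hB_eq : SD * ΓY * SD = (SD * G * SG) * (SD * G * SG)ᵀ + 1 := by
    rw [hΓY, Matrix.mul_add, Matrix.add_mul, hSDYSD, hNNt]
  have RD : ∀ μ : ℝ, (SD * ΓY * SD - μ • 1).rank
      = ((SD * G * SG) * (SD * G * SG)ᵀ - (μ - 1) • 1).rank := by
    intro μ
    rw [hB_eq, sub_smul, one_smul]
    congr 1
    abel
  have R3 : ∀ μ : ℝ, μ ≠ 1 →
      ((SD * G * SG) * (SD * G * SG)ᵀ - (μ - 1) • 1).rank + p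
        = (SG * (Gᵀ * ΓYΘ⁻¹ * G) * SG - (μ - 1) • 1).rank + n := by
    intro μ hμ
    have hc : μ - 1 ≠ 0 := sub_ne_zero.mpr hμ
    have k1 := rank_add_ker ((SD * G * SG) * (SD * G * SG)ᵀ - (μ - 1) • 1)
    have k2 := rank_add_ker ((SD * G * SG)ᵀ * (SD * G * SG) - (μ - 1) • 1)
    have ke := ker_comm_finrank (SD * G * SG) hc
    rw [hNtN] at k2 ke
    omega
  -- eigenvalue counting
  have EP := fun μ : ℝ => eig_count _ hP μ
  have ED := fun μ : ℝ => eig_count _ hD μ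
  have EM := fun μ : ℝ => eig_count _ hM μ
  have key_cnt : ∀ μ : ℝ, 1 < μ →
      Multiset.count μ (Multiset.map hP.eigenvalues Finset.univ.val)
        = Multiset.count μ (Multiset.map hD.eigenvalues Finset.univ.val) ∧
      Multiset.count μ (Multiset.map hP.eigenvalues Finset.univ.val)
        = Multiset.count (μ - 1) (Multiset.map hM.eigenvalues Finset.univ.val) := by
    intro μ h
    have hμ1 : μ ≠ 1 := by linarith
    have e1 := EP μ
    have e2 := ED μ
    have e3 := EM (μ - 1)
    rw [RP μ] at e1
    rw [RD μ] at e2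
    have r3 := R3 μ hμ1
    constructor <;> omega
  constructor
  · refine Multiset.ext.mpr fun μ => ?_
    rw [Multiset.count_filter, Multiset.count_filter]
    by_cases h : 1 < μ
    · rw [if_pos h, if_pos h]; exact (key_cnt μ h).1
    · rw [if_neg h, if_neg h]
  · refine Multiset.ext.mpr fun μ => ?_
    rw [Multiset.count_filter]
    by_cases h : 1 < μ
    · rw [if_pos h]
      have hinj : Function.Injective (fun x : ℝ => 1 + x) := fun a b hab => by
        simpa using hab
      calc Multiset.count μ (Multiset.map hP.eigenvalues Finset.univ.val)
          = Multiset.count (μ - 1) (Multiset.map hM.eigenvalues Finset.univ.val) :=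
            (key_cnt μ h).2
        _ = Multiset.count (μ - 1) (Multiset.filter (fun x : ℝ => 0 < x)
              (Multiset.map hM.eigenvalues Finset.univ.val)) :=
            (Multiset.count_filter_of_pos (by linarith)).symm
        _ = Multiset.count ((fun x : ℝ => 1 + x) (μ - 1))
              (Multiset.map (fun x : ℝ => 1 + x) (Multiset.filter (fun x : ℝ => 0 < x)
                (Multiset.map hM.eigenvalues Finset.univ.val))) :=
            (Multiset.count_map_eq_count' _ _ hinj _).symm
        _ = Multiset.count μ (Multiset.map (fun x : ℝ => 1 + x)
              (Multiset.filter (fun x : ℝ => 0 < x)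
                (Multiset.map hM.eigenvalues Finset.univ.val))) := by
            congr 1
            show (1 + (μ - 1)) = μ
            ring
    · rw [if_neg h]
      symm
      rw [Multiset.count_eq_zero]
      intro hmem
      obtain ⟨x, hx, hxeq⟩ := Multiset.mem_map.mp hmem
      have hx0 : 0 < x := (Multiset.mem_filter.mp hx).2
      have hxeq' : 1 + x = μ := hxeq
      exact h (by linarith)
end

section
/- (TUBA bound.) For any measurable critic f : ℝ^p × ℝ^n → ℝ and any measurable a : ℝ^n → ℝ with a(y) > 0, provided all expectations below are finite, the mutual information satisfies I(Y;Θ) ≥ E_{Y,Θ}[f(Θ,Y)] − E_Y[E_Θ[e^{f(Θ,Y)}]/a(Y) + log a(Y) − 1], where E_{Y,Θ} is with respect to the joint density p(y,θ), the outer E_Y is with respect to the evidence p(y), and the inner E_Θ is with respect to the prior p_Θ independently of Y. -/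
open MeasureTheory Real

/-- TUBA bound: For any measurable critic `f` and any measurable
positive `a`, provided all expectations below are finite, the mutual
information satisfies
`I(Y;Θ) ≥ E_{Y,Θ}[f(Θ,Y)] − E_Y[E_Θ[e^{f(Θ,Y)}]/a(Y) + log a(Y) − 1]`,
where the inner expectation `E_Θ` is with respect to the prior, independently
of `Y`. -/
theorem stmt_7
    (n p : ℕ)
    (prior : (Fin p → ℝ) → ℝ)
    (lik : (Fin n → ℝ) → (Fin p → ℝ) → ℝ)
    (hprior_meas : Measurable prior)
    (hprior_nonneg : ∀ θ, 0 ≤ prior θ)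
    (hprior_one : ∫ θ, prior θ = 1)
    (hlik_meas : Measurable (fun z : (Fin n → ℝ) × (Fin p → ℝ) => lik z.1 z.2))
    (hlik_nonneg : ∀ y θ, 0 ≤ lik y θ)
    (hlik_one : ∀ θ, ∫ y, lik y θ = 1)
    (joint : (Fin n → ℝ) → (Fin p → ℝ) → ℝ)
    (hjoint : ∀ y θ, joint y θ = lik y θ * prior θ)
    (ev : (Fin n → ℝ) → ℝ)
    (hev : ∀ y, ev y = ∫ θ, lik y θ * prior θ)
    (f : (Fin p → ℝ) → (Fin n → ℝ) → ℝ)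
    (hf_meas : Measurable (fun z : (Fin p → ℝ) × (Fin n → ℝ) => f z.1 z.2))
    (a : (Fin n → ℝ) → ℝ)
    (ha_meas : Measurable a)
    (ha_pos : ∀ y, 0 < a y)
    (MI : ℝ)
    (hMI : MI = ∫ y, ∫ θ, joint y θ * Real.log (joint y θ / (ev y * prior θ)))
    (hIntMI : Integrable (fun z : (Fin n → ℝ) × (Fin p → ℝ) =>
      joint z.1 z.2 * Real.log (joint z.1 z.2 / (ev z.1 * prior z.2))))
    (hIntf : Integrable (fun z : (Fin n → ℝ) × (Fin p → ℝ) =>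
      joint z.1 z.2 * f z.2 z.1))
    (hIntInner : ∀ y, Integrable (fun θ => prior θ * Real.exp (f θ y)))
    (hIntOuter : Integrable (fun y : Fin n → ℝ =>
      ev y * ((∫ θ, prior θ * Real.exp (f θ y)) / a y + Real.log (a y) - 1))) :
    MI ≥ (∫ y, ∫ θ, joint y θ * f θ y)
      - ∫ y, ev y * ((∫ θ, prior θ * Real.exp (f θ y)) / a y + Real.log (a y) - 1) := by
  have hprior_int : Integrable prior := integrable_of_integral_eq_one hprior_one
  have hlik_int : ∀ θ, Integrable (fun y => lik y θ) := fun θ =>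
    integrable_of_integral_eq_one (hlik_one θ)
  -- joint is integrable on the product
  have hjoint_fun : (fun z : (Fin n → ℝ) × (Fin p → ℝ) => joint z.1 z.2)
      = fun z => lik z.1 z.2 * prior z.2 := funext fun z => hjoint z.1 z.2
  have hjoint_meas : Measurable (fun z : (Fin n → ℝ) × (Fin p → ℝ) => joint z.1 z.2) := by
    rw [hjoint_fun]; exact hlik_meas.mul (hprior_meas.comp measurable_snd)
  rw [Measure.volume_eq_prod] at hIntMI hIntf
  have hjoint_int : Integrable (fun z : (Fin n → ℝ) × (Fin p → ℝ) => joint z.1 z.2)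
      ((volume : Measure (Fin n → ℝ)).prod (volume : Measure (Fin p → ℝ))) := by
    rw [hjoint_fun]
    refine (integrable_prod_iff' ?_).2 ⟨?_, ?_⟩
    · exact (hlik_meas.mul (hprior_meas.comp measurable_snd)).aestronglyMeasurable
    · exact Filter.Eventually.of_forall fun θ => by simpa using (hlik_int θ).mul_const (prior θ)
    · have heq : ∀ θ : Fin p → ℝ, (∫ y, ‖lik y θ * prior θ‖) = prior θ := by
        intro θ
        have h1 : (fun y => ‖lik y θ * prior θ‖) = fun y => lik y θ * prior θ :=
          funext fun y => norm_of_nonneg (mul_nonneg (hlik_nonneg y θ) (hprior_nonneg θ))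
        rw [h1, integral_mul_const, hlik_one, one_mul]
      exact hprior_int.congr (Filter.Eventually.of_forall fun θ => (heq θ).symm)
  -- a.e. sections are integrable
  have hs1 := hIntMI.prod_right_ae
  have hs2 := hIntf.prod_right_ae
  have hs3 := hjoint_int.prod_right_ae
  -- the outer functions are integrable
  have hG_int : Integrable (fun y => ∫ θ, joint y θ * Real.log (joint y θ / (ev y * prior θ))) :=
    hIntMI.integral_prod_left
  have hF_int : Integrable (fun y => ∫ θ, joint y θ * f θ y) := hIntf.integral_prod_left
  have hev_nonneg : ∀ y, 0 ≤ ev y := fun y => by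
    rw [hev]
    exact integral_nonneg fun θ => mul_nonneg (hlik_nonneg y θ) (hprior_nonneg θ)
  -- the key a.e. pointwise-in-y inequality
  have key : ∀ᵐ y : Fin n → ℝ,
      (∫ θ, joint y θ * f θ y)
        - ev y * ((∫ θ, prior θ * Real.exp (f θ y)) / a y + Real.log (a y) - 1)
      ≤ ∫ θ, joint y θ * Real.log (joint y θ / (ev y * prior θ)) := by
    filter_upwards [hs1, hs2, hs3] with y h1 h2 h3
    have hjnn : ∀ θ, 0 ≤ joint y θ := fun θ => by
      rw [hjoint]; exact mul_nonneg (hlik_nonneg y θ) (hprior_nonneg θ)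
    have hje : (∫ θ, joint y θ) = ev y := by
      rw [hev]; exact integral_congr_ae (Filter.Eventually.of_forall fun θ => hjoint y θ)
    rcases eq_or_lt_of_le (hev_nonneg y) with hev0 | hevpos
    · -- case ev y = 0 : joint y · vanishes a.e.
      have hz : (fun θ => joint y θ) =ᵐ[volume] 0 :=
        (integral_eq_zero_iff_of_nonneg (fun θ => hjnn θ) h3).1 (hje.trans hev0.symm)
      have e1 : (∫ θ, joint y θ * Real.log (joint y θ / (ev y * prior θ))) = 0 := by
        rw [show (∫ θ, joint y θ * Real.log (joint y θ / (ev y * prior θ)))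
            = ∫ _θ : Fin p → ℝ, (0 : ℝ) from
          integral_congr_ae (by filter_upwards [hz] with θ hθ; simp [show joint y θ = 0 from hθ])]
        simp
      have e2 : (∫ θ, joint y θ * f θ y) = 0 := by
        rw [show (∫ θ, joint y θ * f θ y) = ∫ _θ : Fin p → ℝ, (0 : ℝ) from
          integral_congr_ae (by filter_upwards [hz] with θ hθ; simp [show joint y θ = 0 from hθ])]
        simp
      rw [e1, e2, ← hev0]
      simp
    · -- case 0 < ev y
      have ha := ha_pos y
      set m := ∫ θ, prior θ * Real.exp (f θ y) with hm
      -- pointwise-in-θ inequality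
      have hpt : ∀ θ, 0 ≤ joint y θ * Real.log (joint y θ / (ev y * prior θ))
          - joint y θ * f θ y + Real.log (a y) * joint y θ - joint y θ
          + (ev y / a y) * (prior θ * Real.exp (f θ y)) := by
        intro θ
        rcases eq_or_lt_of_le (hprior_nonneg θ) with hp0 | hppos
        · have hj0 : joint y θ = 0 := by rw [hjoint, ← hp0, mul_zero]
          simp [hj0, ← hp0]
        · rcases eq_or_lt_of_le (hjnn θ) with hj0 | hjpos
          · rw [← hj0]
            simp only [zero_mul, mul_zero, sub_zero, add_zero, zero_sub, neg_zero, zero_add]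
            exact mul_nonneg (div_nonneg hevpos.le ha.le)
              (mul_nonneg hppos.le (Real.exp_pos _).le)
          · set g := ev y / a y * (prior θ * Real.exp (f θ y)) with hg
            have hgpos : 0 < g :=
              mul_pos (div_pos hevpos ha) (mul_pos hppos (Real.exp_pos _))
            have hlogeq : Real.log (joint y θ / (ev y * prior θ))
                = Real.log (joint y θ / g) + f θ y - Real.log (a y) := by
              rw [Real.log_div hjpos.ne' (mul_pos hevpos hppos).ne',
                Real.log_mul hevpos.ne' hppos.ne',
                Real.log_div hjpos.ne' hgpos.ne', hg,
                Real.log_mul (div_pos hevpos ha).ne' (mul_pos hppos (Real.exp_pos _)).ne',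
                Real.log_div hevpos.ne' ha.ne',
                Real.log_mul hppos.ne' (Real.exp_pos _).ne', Real.log_exp]
              ring
            have hlog2 : 1 - g / joint y θ ≤ Real.log (joint y θ / g) := by
              have h := Real.log_le_sub_one_of_pos (div_pos hgpos hjpos)
              rw [Real.log_div hgpos.ne' hjpos.ne'] at h
              rw [Real.log_div hjpos.ne' hgpos.ne']
              linarith
            have h5 : joint y θ - g ≤ joint y θ * Real.log (joint y θ / g) := by
              have h6 := mul_le_mul_of_nonneg_left hlog2 hjpos.le
              have h7 : joint y θ * (1 - g / joint y θ) = joint y θ - g := by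
                field_simp
              linarith
            rw [hlogeq]
            have e : joint y θ * (Real.log (joint y θ / g) + f θ y - Real.log (a y))
                - joint y θ * f θ y + Real.log (a y) * joint y θ - joint y θ + g
                = joint y θ * Real.log (joint y θ / g) - joint y θ + g := by ring
            linarith [h5, e]
      -- integrate the pointwise inequality
      have hA := h1
      have hB := h2
      have hC : Integrable (fun θ => Real.log (a y) * joint y θ) := h3.const_mul _
      have hE : Integrable (fun θ => (ev y / a y) * (prior θ * Real.exp (f θ y))) :=
        (hIntInner y).const_mul _
      have hSnn : 0 ≤ ∫ θ, (joint y θ * Real.log (joint y θ / (ev y * prior θ))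
          - joint y θ * f θ y + Real.log (a y) * joint y θ - joint y θ
          + (ev y / a y) * (prior θ * Real.exp (f θ y))) :=
        integral_nonneg hpt
      have hAB : Integrable (fun θ => joint y θ * Real.log (joint y θ / (ev y * prior θ))
          - joint y θ * f θ y) volume := hA.sub hB
      have hABC : Integrable (fun θ => joint y θ * Real.log (joint y θ / (ev y * prior θ))
          - joint y θ * f θ y + Real.log (a y) * joint y θ) volume := hAB.add hC
      have hABCD : Integrable (fun θ => joint y θ * Real.log (joint y θ / (ev y * prior θ))
          - joint y θ * f θ y + Real.log (a y) * joint y θ - joint y θ) volume := hABC.sub h3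
      have e1 : (∫ θ, (joint y θ * Real.log (joint y θ / (ev y * prior θ))
            - joint y θ * f θ y + Real.log (a y) * joint y θ - joint y θ
            + (ev y / a y) * (prior θ * Real.exp (f θ y))))
          = (∫ θ, (joint y θ * Real.log (joint y θ / (ev y * prior θ))
            - joint y θ * f θ y + Real.log (a y) * joint y θ - joint y θ))
            + ∫ θ, (ev y / a y) * (prior θ * Real.exp (f θ y)) := integral_add hABCD hE
      have e2 : (∫ θ, (joint y θ * Real.log (joint y θ / (ev y * prior θ))
            - joint y θ * f θ y + Real.log (a y) * joint y θ - joint y θ))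
          = (∫ θ, (joint y θ * Real.log (joint y θ / (ev y * prior θ))
            - joint y θ * f θ y + Real.log (a y) * joint y θ))
            - ∫ θ, joint y θ := integral_sub hABC h3
      have e3 : (∫ θ, (joint y θ * Real.log (joint y θ / (ev y * prior θ))
            - joint y θ * f θ y + Real.log (a y) * joint y θ))
          = (∫ θ, (joint y θ * Real.log (joint y θ / (ev y * prior θ))
            - joint y θ * f θ y))
            + ∫ θ, Real.log (a y) * joint y θ := integral_add hAB hC
      have e4 : (∫ θ, (joint y θ * Real.log (joint y θ / (ev y * prior θ))
            - joint y θ * f θ y))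
          = (∫ θ, joint y θ * Real.log (joint y θ / (ev y * prior θ)))
            - ∫ θ, joint y θ * f θ y := integral_sub hA hB
      have e5 : (∫ θ, Real.log (a y) * joint y θ)
          = Real.log (a y) * ∫ θ, joint y θ := integral_const_mul _ _
      have e6 : (∫ θ, (ev y / a y) * (prior θ * Real.exp (f θ y)))
          = ev y / a y * m := integral_const_mul _ _
      rw [e1, e2, e3, e4, e5, e6, hje] at hSnn
      have hdm : ev y / a y * m = ev y * (m / a y) := by
        rw [div_mul_eq_mul_div, mul_div_assoc]
      rw [hdm] at hSnn
      have expand : ev y * (m / a y + Real.log (a y) - 1)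
          = ev y * (m / a y) + Real.log (a y) * ev y - ev y := by ring
      rw [expand]
      linarith
  rw [hMI, ge_iff_le,
    show (∫ y, ∫ θ, joint y θ * f θ y)
        - (∫ y, ev y * ((∫ θ, prior θ * Real.exp (f θ y)) / a y + Real.log (a y) - 1))
      = ∫ y, ((∫ θ, joint y θ * f θ y)
        - ev y * ((∫ θ, prior θ * Real.exp (f θ y)) / a y + Real.log (a y) - 1)) from
      (integral_sub hF_int hIntOuter).symm]
  exact integral_mono_ae (hF_int.sub hIntOuter) hG_int key
end

section
/- (NWJ bound.) For any measurable critic f : ℝ^p × ℝ^n → ℝ with all expectations below finite, the mutual information satisfies I(Y;Θ) ≥ E_{Y,Θ}[f(Θ,Y)] − e^{-1} E_Y[E_Θ[e^{f(Θ,Y)}]], where E_{Y,Θ} is with respect to the joint density, E_Y is with respect to the evidence p(y), and E_Θ is with respect to the prior p_Θ independently of Y; moreover equality holds when f(θ,y) = 1 + log(p(θ|y)/p_Θ(θ)). -/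
open MeasureTheory Real

private lemma nwj_pointwise {t s a : ℝ} (ht : 0 < t) (hs : 0 < s) :
    t * a - Real.exp (-1) * (s * Real.exp a) ≤ t * Real.log (t / s) := by
  have h1 : a - Real.log (t/s) ≤ Real.exp (a - Real.log (t/s) - 1) := by
    linarith [Real.add_one_le_exp (a - Real.log (t/s) - 1)]
  have h2 := mul_le_mul_of_nonneg_left h1 ht.le
  have h3 : t * Real.exp (a - Real.log (t/s) - 1) = Real.exp (-1) * (s * Real.exp a) := by
    rw [show a - Real.log (t/s) - 1 = a + (-1) - Real.log (t/s) by ring, Real.exp_sub,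
      Real.exp_add, Real.exp_log (div_pos ht hs)]
    field_simp
  nlinarith

/-- NWJ bound: For any measurable critic `f`, with all
expectations finite,
`I(Y;Θ) ≥ E_{Y,Θ}[f(Θ,Y)] − e⁻¹ E_Y[E_Θ[e^{f(Θ,Y)}]]`,
where `E_Θ` is with respect to the prior, independently of `Y`; moreover
equality holds when `f(θ,y) = 1 + log (p(θ|y)/p_Θ(θ))`. -/
theorem stmt_8
    (n p : ℕ)
    (prior : (Fin p → ℝ) → ℝ)
    (lik : (Fin n → ℝ) → (Fin p → ℝ) → ℝ)
    (hprior_meas : Measurable prior)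
    (hprior_pos : ∀ θ, 0 < prior θ)
    (hprior_one : ∫ θ, prior θ = 1)
    (hlik_meas : Measurable (fun z : (Fin n → ℝ) × (Fin p → ℝ) => lik z.1 z.2))
    (hlik_pos : ∀ y θ, 0 < lik y θ)
    (hlik_one : ∀ θ, ∫ y, lik y θ = 1)
    (joint : (Fin n → ℝ) → (Fin p → ℝ) → ℝ)
    (hjoint : ∀ y θ, joint y θ = lik y θ * prior θ)
    (ev : (Fin n → ℝ) → ℝ)
    (hev : ∀ y, ev y = ∫ θ, lik y θ * prior θ)
    (post : (Fin p → ℝ) → (Fin n → ℝ) → ℝ)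
    (hpost : ∀ θ y, post θ y = lik y θ * prior θ / ev y)
    (f : (Fin p → ℝ) → (Fin n → ℝ) → ℝ)
    (hf_meas : Measurable (fun z : (Fin p → ℝ) × (Fin n → ℝ) => f z.1 z.2))
    (MI : ℝ)
    (hMI : MI = ∫ y, ∫ θ, joint y θ * Real.log (joint y θ / (ev y * prior θ)))
    (A : ℝ)
    (hA : A = ∫ y, ∫ θ, joint y θ * f θ y)
    (B : ℝ)
    (hB : B = ∫ y, ev y * ∫ θ, prior θ * Real.exp (f θ y))
    (hIntMI : Integrable (fun z : (Fin n → ℝ) × (Fin p → ℝ) =>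
      joint z.1 z.2 * Real.log (joint z.1 z.2 / (ev z.1 * prior z.2))))
    (hIntf : Integrable (fun z : (Fin n → ℝ) × (Fin p → ℝ) =>
      joint z.1 z.2 * f z.2 z.1))
    (hIntInner : ∀ y, Integrable (fun θ => prior θ * Real.exp (f θ y)))
    (hIntOuter : Integrable (fun y : Fin n → ℝ =>
      ev y * ∫ θ, prior θ * Real.exp (f θ y))) :
    MI ≥ A - Real.exp (-1) * B ∧
    ((∀ θ y, f θ y = 1 + Real.log (post θ y / prior θ)) →
      MI = A - Real.exp (-1) * B) := by
  have hvol : (volume : Measure ((Fin n → ℝ) × (Fin p → ℝ))) =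
      (volume : Measure (Fin n → ℝ)).prod volume := Measure.volume_eq_prod _ _
  -- basic integrability of prior and likelihood
  have hprior_int : Integrable prior := by
    by_contra h
    rw [integral_undef h] at hprior_one; norm_num at hprior_one
  have hlik_int : ∀ θ, Integrable (fun y => lik y θ) := by
    intro θ
    by_contra h
    have := hlik_one θ
    rw [integral_undef h] at this; norm_num at this
  -- measurability pieces
  have hlp_meas : Measurable (fun z : (Fin n → ℝ) × (Fin p → ℝ) =>
      lik z.1 z.2 * prior z.2) := hlik_meas.mul (hprior_meas.comp measurable_snd)
  have hslice_meas : ∀ y, Measurable (fun θ => lik y θ * prior θ) := fun y =>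
    hlp_meas.comp (measurable_const.prodMk measurable_id)
  have hev_meas : Measurable ev := by
    have h1 : StronglyMeasurable (Function.uncurry
        (fun (y : Fin n → ℝ) (θ : Fin p → ℝ) => lik y θ * prior θ)) :=
      hlp_meas.stronglyMeasurable
    have : Measurable (fun y : Fin n → ℝ => ∫ θ, lik y θ * prior θ) :=
      h1.integral_prod_right.measurable
    have he : ev = fun y => ∫ θ, lik y θ * prior θ := funext hev
    rw [he]; exact this
  have hfyx_meas : Measurable (fun z : (Fin n → ℝ) × (Fin p → ℝ) => f z.2 z.1) :=
    hf_meas.comp (measurable_snd.prodMk measurable_fst)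
  -- lintegral facts
  set L : (Fin n → ℝ) → ENNReal :=
    fun y => ∫⁻ θ, ENNReal.ofReal (lik y θ * prior θ) with hL
  have hL_meas : Measurable L :=
    Measurable.lintegral_prod_right hlp_meas.ennreal_ofReal
  have fact1 : ∀ θ, ∫⁻ y, ENNReal.ofReal (lik y θ * prior θ) = ENNReal.ofReal (prior θ) := by
    intro θ
    have hm : Measurable (fun y => lik y θ) :=
      hlik_meas.comp (measurable_id.prodMk measurable_const)
    calc ∫⁻ y, ENNReal.ofReal (lik y θ * prior θ)
        = ∫⁻ y, ENNReal.ofReal (lik y θ) * ENNReal.ofReal (prior θ) := by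
          simp_rw [ENNReal.ofReal_mul (le_of_lt (hlik_pos _ θ))]
      _ = (∫⁻ y, ENNReal.ofReal (lik y θ)) * ENNReal.ofReal (prior θ) :=
          lintegral_mul_const _ hm.ennreal_ofReal
      _ = ENNReal.ofReal (∫ y, lik y θ) * ENNReal.ofReal (prior θ) := by
          rw [ofReal_integral_eq_lintegral_ofReal (hlik_int θ)
            (Filter.Eventually.of_forall fun y => (hlik_pos y θ).le)]
      _ = ENNReal.ofReal (prior θ) := by rw [hlik_one θ]; simp
  have fact2 : ∫⁻ z : (Fin n → ℝ) × (Fin p → ℝ),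
      ENNReal.ofReal (lik z.1 z.2 * prior z.2) = 1 := by
    rw [hvol, lintegral_prod_symm _ hlp_meas.ennreal_ofReal.aemeasurable]
    simp_rw [fact1]
    rw [← ofReal_integral_eq_lintegral_ofReal hprior_int
      (Filter.Eventually.of_forall fun θ => (hprior_pos θ).le), hprior_one]
    simp
  have fact2' : ∫⁻ y, L y = 1 := by
    rw [← fact2, hvol, lintegral_prod _ hlp_meas.ennreal_ofReal.aemeasurable]
  have hL_pos : ∀ y, 0 < L y := by
    intro y
    rw [hL]
    rw [lintegral_pos_iff_support (hslice_meas y).ennreal_ofReal]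
    have hsup : (Function.support fun θ => ENNReal.ofReal (lik y θ * prior θ)) =
        Set.univ := by
      ext θ
      simp [Function.mem_support,
        (ENNReal.ofReal_pos.mpr (mul_pos (hlik_pos y θ) (hprior_pos θ))).ne']
    rw [hsup]
    exact Measure.measure_univ_pos.mpr (NeZero.ne _)
  have hL_ae_lt : ∀ᵐ y : Fin n → ℝ ∂volume, L y < ⊤ :=
    ae_lt_top hL_meas (by rw [fact2']; exact ENNReal.one_ne_top)
  -- a.e. goodness of ev
  have hGood : ∀ᵐ y : Fin n → ℝ ∂volume, 0 < ev y := by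
    filter_upwards [hL_ae_lt] with y hy
    have hev_eq : ev y = (L y).toReal := by
      rw [hev y, integral_eq_lintegral_of_nonneg_ae (Filter.Eventually.of_forall fun θ =>
        (mul_pos (hlik_pos y θ) (hprior_pos θ)).le) (hslice_meas y).aestronglyMeasurable]
    rw [hev_eq]
    exact ENNReal.toReal_pos (hL_pos y).ne' hy.ne
  have hev_nonneg : ∀ y, 0 ≤ ev y := fun y => by
    rw [hev y]
    exact integral_nonneg fun θ => (mul_pos (hlik_pos y θ) (hprior_pos θ)).le
  -- the exponential-term function on the product
  set k : (Fin n → ℝ) × (Fin p → ℝ) → ℝ :=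
    fun z => ev z.1 * (prior z.2 * Real.exp (f z.2 z.1)) with hk
  have hk_meas : Measurable k :=
    (hev_meas.comp measurable_fst).mul
      ((hprior_meas.comp measurable_snd).mul hfyx_meas.exp)
  have hk_nonneg : ∀ z, 0 ≤ k z := fun z =>
    mul_nonneg (hev_nonneg _) (mul_nonneg (hprior_pos _).le (Real.exp_pos _).le)
  have hk_int : Integrable k := by
    rw [hvol]
    refine (integrable_prod_iff (hk_meas.aestronglyMeasurable.mono_measure
      hvol.le)).mpr ⟨?_, ?_⟩
    · exact Filter.Eventually.of_forall fun y => (hIntInner y).const_mul (ev y)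
    · have heq : (fun y : Fin n → ℝ => ∫ θ, ‖k (y, θ)‖) =
          fun y => ev y * ∫ θ, prior θ * Real.exp (f θ y) := by
        funext y
        rw [← integral_const_mul]
        congr 1
        funext θ
        rw [Real.norm_of_nonneg (hk_nonneg (y, θ))]
      rw [heq]
      exact hIntOuter
  have hk_integral : ∫ z : (Fin n → ℝ) × (Fin p → ℝ), k z = B := by
    have hk_int' := hk_int
    rw [hvol] at hk_int'
    rw [hvol, integral_prod _ hk_int', hB]
    simp only [hk]
    simp_rw [integral_const_mul]
  -- joint integrable with integral 1
  have hjoint_meas : Measurable (fun z : (Fin n → ℝ) × (Fin p → ℝ) => joint z.1 z.2) := by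
    simp_rw [hjoint]; exact hlp_meas
  have hjoint_int : Integrable (fun z : (Fin n → ℝ) × (Fin p → ℝ) => joint z.1 z.2) := by
    refine ⟨hjoint_meas.aestronglyMeasurable, ?_⟩
    rw [hasFiniteIntegral_iff_ofReal (Filter.Eventually.of_forall fun z => by
      rw [hjoint]; exact (mul_pos (hlik_pos _ _) (hprior_pos _)).le)]
    simp_rw [hjoint]
    rw [fact2]
    exact ENNReal.one_lt_top
  have hjoint_integral : ∫ z : (Fin n → ℝ) × (Fin p → ℝ), joint z.1 z.2 = 1 := by
    rw [integral_eq_lintegral_of_nonneg_ae (Filter.Eventually.of_forall fun z => by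
      rw [hjoint]; exact (mul_pos (hlik_pos _ _) (hprior_pos _)).le)
      hjoint_meas.aestronglyMeasurable]
    simp_rw [hjoint]
    rw [fact2]
    simp
  -- express MI and A as product integrals
  have hMI' : MI = ∫ z : (Fin n → ℝ) × (Fin p → ℝ), joint z.1 z.2 *
      Real.log (joint z.1 z.2 / (ev z.1 * prior z.2)) := by
    have hIntMI' := hIntMI
    rw [hvol] at hIntMI'
    rw [hMI, hvol, integral_prod _ hIntMI']
  have hA' : A = ∫ z : (Fin n → ℝ) × (Fin p → ℝ), joint z.1 z.2 * f z.2 z.1 := by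
    have hIntf' := hIntf
    rw [hvol] at hIntf'
    rw [hA, hvol, integral_prod _ hIntf']
  -- the a.e. goodness on the product
  have hGoodProd : ∀ᵐ z : (Fin n → ℝ) × (Fin p → ℝ) ∂volume, 0 < ev z.1 := by
    rw [hvol]
    exact Measure.quasiMeasurePreserving_fst.ae hGood
  constructor
  · -- the inequality
    have hle : (fun z : (Fin n → ℝ) × (Fin p → ℝ) =>
          joint z.1 z.2 * f z.2 z.1 - Real.exp (-1) * k z) ≤ᵐ[volume]
        (fun z => joint z.1 z.2 * Real.log (joint z.1 z.2 / (ev z.1 * prior z.2))) := by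
      filter_upwards [hGoodProd] with z hz
      have ht : 0 < joint z.1 z.2 := by
        rw [hjoint]; exact mul_pos (hlik_pos _ _) (hprior_pos _)
      have hs : 0 < ev z.1 * prior z.2 := mul_pos hz (hprior_pos _)
      have hmain := nwj_pointwise (t := joint z.1 z.2) (s := ev z.1 * prior z.2)
        (a := f z.2 z.1) ht hs
      have hkz : k z = ev z.1 * prior z.2 * Real.exp (f z.2 z.1) := by rw [hk]; ring
      simp only [hkz]
      linarith
    have hIntsub : Integrable (fun z : (Fin n → ℝ) × (Fin p → ℝ) =>
        joint z.1 z.2 * f z.2 z.1 - Real.exp (-1) * k z) volume :=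
      hIntf.sub (hk_int.const_mul (Real.exp (-1)))
    have hineq := integral_mono_ae hIntsub hIntMI hle
    have h2 : (∫ z : (Fin n → ℝ) × (Fin p → ℝ),
        (joint z.1 z.2 * f z.2 z.1 - Real.exp (-1) * k z)) = A - Real.exp (-1) * B := by
      rw [integral_sub hIntf (hk_int.const_mul _), integral_const_mul, hk_integral, hA']
    rw [h2] at hineq
    rw [hMI']
    exact hineq
  · -- equality case
    intro hfeq
    have hf_eq_r : ∀ θ y, f θ y = 1 + Real.log (joint y θ / (ev y * prior θ)) := by
      intro θ y
      rw [hfeq θ y, hpost θ y, hjoint y θ, div_div]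
    -- A = 1 + MI
    have hA_eq : A = 1 + MI := by
      rw [hA', hMI']
      have heq : (fun z : (Fin n → ℝ) × (Fin p → ℝ) => joint z.1 z.2 * f z.2 z.1) =
          fun z => joint z.1 z.2 + joint z.1 z.2 *
            Real.log (joint z.1 z.2 / (ev z.1 * prior z.2)) := by
        funext z
        rw [hf_eq_r]
        ring
      rw [heq, integral_add hjoint_int hIntMI, hjoint_integral]
    -- B = e
    have hB_eq : B = Real.exp 1 := by
      rw [← hk_integral]
      have hkeq : k =ᵐ[volume] fun z : (Fin n → ℝ) × (Fin p → ℝ) =>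
          Real.exp 1 * joint z.1 z.2 := by
        filter_upwards [hGoodProd] with z hz
        have ht : 0 < joint z.1 z.2 := by
          rw [hjoint]; exact mul_pos (hlik_pos _ _) (hprior_pos _)
        have hs : 0 < ev z.1 * prior z.2 := mul_pos hz (hprior_pos _)
        rw [hk]
        simp only
        rw [hf_eq_r, Real.exp_add, Real.exp_log (div_pos ht hs)]
        field_simp
        ring_nf; exact mul_inv_cancel₀ (hprior_pos z.2).ne'
      rw [integral_congr_ae hkeq, integral_const_mul, hjoint_integral, mul_one]
    rw [hA_eq, hB_eq, Real.exp_neg, inv_mul_cancel₀ (Real.exp_pos 1).ne']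
    ring
end

section
/- (Prior contrastive estimation bound.) Fix an integer M ≥ 1. Let Θ_1 ∼ p_Θ, let Y_1 have conditional density p(·|Θ_1) given Θ_1, and let Θ_2, …, Θ_M be i.i.d. with density p_Θ, independent of (Θ_1, Y_1). Define L^PCE(M) = E[ log( p(Y_1|Θ_1) / ( (1/M) Σ_{j=1}^M p(Y_1|Θ_j) ) ) ]. Then L^PCE(M) ≤ I(Y;Θ) and L^PCE(M) ≤ log M. -/
set_option maxHeartbeats 4000000


open MeasureTheory Real

/-- Prior contrastive estimation bound: With `Θ_1 ∼ p_Θ`,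
`Y_1 | Θ_1` drawn from the likelihood, and `Θ_2, …, Θ_M` i.i.d. from the prior
independently of `(Θ_1, Y_1)`,
`L^PCE(M) = E[log (p(Y_1|Θ_1) / ((1/M) Σ_j p(Y_1|Θ_j)))]` satisfies
`L^PCE(M) ≤ I(Y;Θ)` and `L^PCE(M) ≤ log M`. -/
theorem stmt_9
    (n p : ℕ)
    (M : ℕ) (hM : 1 ≤ M)
    (prior : (Fin p → ℝ) → ℝ)
    (lik : (Fin n → ℝ) → (Fin p → ℝ) → ℝ)
    (hprior_meas : Measurable prior)
    (hprior_nonneg : ∀ θ, 0 ≤ prior θ)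
    (hprior_one : ∫ θ, prior θ = 1)
    (hlik_meas : Measurable (fun z : (Fin n → ℝ) × (Fin p → ℝ) => lik z.1 z.2))
    (hlik_nonneg : ∀ y θ, 0 ≤ lik y θ)
    (hlik_one : ∀ θ, ∫ y, lik y θ = 1)
    (joint : (Fin n → ℝ) → (Fin p → ℝ) → ℝ)
    (hjoint : ∀ y θ, joint y θ = lik y θ * prior θ)
    (ev : (Fin n → ℝ) → ℝ)
    (hev : ∀ y, ev y = ∫ θ, lik y θ * prior θ)
    (MI : ℝ)
    (hMI : MI = ∫ y, ∫ θ, joint y θ * Real.log (joint y θ / (ev y * prior θ)))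
    (hIntMI : Integrable (fun z : (Fin n → ℝ) × (Fin p → ℝ) =>
      joint z.1 z.2 * Real.log (joint z.1 z.2 / (ev z.1 * prior z.2))))
    (LPCE : ℝ)
    (hLPCE : LPCE = ∫ θs : Fin M → (Fin p → ℝ), ∫ y : Fin n → ℝ,
      ((∏ j, prior (θs j)) * lik y (θs ⟨0, hM⟩)) *
        Real.log (lik y (θs ⟨0, hM⟩) / ((M : ℝ)⁻¹ * ∑ j, lik y (θs j))))
    (hIntL : Integrable (fun z : (Fin M → (Fin p → ℝ)) × (Fin n → ℝ) =>
      ((∏ j, prior (z.1 j)) * lik z.2 (z.1 ⟨0, hM⟩)) *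
        Real.log (lik z.2 (z.1 ⟨0, hM⟩) / ((M : ℝ)⁻¹ * ∑ j, lik z.2 (z.1 j))))) :
    LPCE ≤ MI ∧ LPCE ≤ Real.log M := by
  obtain ⟨m, rfl⟩ : ∃ m, M = m + 1 := ⟨M - 1, (Nat.succ_pred_eq_of_pos hM).symm⟩
  set i : Fin (m + 1) := ⟨0, hM⟩ with hidef
  -- scalar facts
  have hMposR : (0:ℝ) < ((m + 1 : ℕ) : ℝ) := by positivity
  have hMne : ((m + 1 : ℕ) : ℝ) ≠ 0 := ne_of_gt hMposR
  -- slice integrability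
  have hlik_int : ∀ θ, Integrable (fun y => lik y θ) := by
    intro θ; by_contra h
    have h1 := hlik_one θ
    rw [integral_undef h] at h1
    norm_num at h1
  have hprior_int : Integrable prior := by
    by_contra h
    rw [integral_undef h] at hprior_one
    norm_num at hprior_one
  have hJm : Measurable (fun z : (Fin n → ℝ) × (Fin p → ℝ) => lik z.1 z.2 * prior z.2) :=
    hlik_meas.mul (hprior_meas.comp measurable_snd)
  have hev_eq : ev = fun y => ∫ θ, lik y θ * prior θ := funext hev
  have hev_meas : Measurable ev := by
    rw [hev_eq]
    exact hJm.stronglyMeasurable.integral_prod_right'.measurable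
  have hev_nonneg : ∀ y, 0 ≤ ev y := fun y => by
    rw [hev]
    exact integral_nonneg fun θ => mul_nonneg (hlik_nonneg _ _) (hprior_nonneg _)
  -- the joint density is integrable on the product space
  have hJ : Integrable (fun z : (Fin n → ℝ) × (Fin p → ℝ) => lik z.1 z.2 * prior z.2)
      ((volume : Measure (Fin n → ℝ)).prod (volume : Measure (Fin p → ℝ))) := by
    refine (integrable_prod_iff' hJm.aestronglyMeasurable).2 ⟨?_, ?_⟩
    · exact Filter.Eventually.of_forall fun θ => (hlik_int θ).mul_const (prior θ)
    · have h1 : (fun θ => ∫ y, ‖lik y θ * prior θ‖) = prior := by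
        funext θ
        have h2 : (fun y => ‖lik y θ * prior θ‖) = fun y => lik y θ * prior θ :=
          funext fun y => norm_of_nonneg (mul_nonneg (hlik_nonneg _ _) (hprior_nonneg _))
        rw [h2, integral_mul_const, hlik_one, one_mul]
      rw [h1]; exact hprior_int
  have hJ_one : ∫ z : (Fin n → ℝ) × (Fin p → ℝ), lik z.1 z.2 * prior z.2
      ∂((volume : Measure (Fin n → ℝ)).prod (volume : Measure (Fin p → ℝ))) = 1 := by
    have h1 : ∫ z : (Fin n → ℝ) × (Fin p → ℝ), lik z.1 z.2 * prior z.2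
        ∂((volume : Measure (Fin n → ℝ)).prod (volume : Measure (Fin p → ℝ)))
        = ∫ θ, ∫ y, lik y θ * prior θ := integral_prod_symm _ hJ
    rw [h1]
    have h2 : ∀ θ, (∫ y, lik y θ * prior θ) = prior θ := fun θ => by
      rw [integral_mul_const, hlik_one, one_mul]
    calc ∫ θ, ∫ y, lik y θ * prior θ = ∫ θ, prior θ := by simp_rw [h2]
    _ = 1 := hprior_one
  have hev_int : Integrable ev := by
    rw [hev_eq]; exact hJ.integral_prod_left
  have hev_one : ∫ y, ev y = 1 := by
    rw [hev_eq]
    have h1 : ∫ y, ∫ θ, lik y θ * prior θ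
        = ∫ z : (Fin n → ℝ) × (Fin p → ℝ), lik z.1 z.2 * prior z.2
          ∂((volume : Measure (Fin n → ℝ)).prod (volume : Measure (Fin p → ℝ))) :=
      integral_integral (f := fun y θ => lik y θ * prior θ) hJ
    rw [h1, hJ_one]
  -- rewrite the MI integrand
  have hBpt : ∀ z : (Fin n → ℝ) × (Fin p → ℝ),
      joint z.1 z.2 * Real.log (joint z.1 z.2 / (ev z.1 * prior z.2))
        = lik z.1 z.2 * prior z.2 * Real.log (lik z.1 z.2 / ev z.1) := by
    intro z
    rw [hjoint]
    rcases eq_or_ne (prior z.2) 0 with h | h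
    · simp [h]
    · rw [mul_div_mul_right _ _ h]
  have hBeq : (fun z : (Fin n → ℝ) × (Fin p → ℝ) =>
      joint z.1 z.2 * Real.log (joint z.1 z.2 / (ev z.1 * prior z.2)))
      = fun z => lik z.1 z.2 * prior z.2 * Real.log (lik z.1 z.2 / ev z.1) := funext hBpt
  have hB_int : Integrable
      (fun z : (Fin n → ℝ) × (Fin p → ℝ) => lik z.1 z.2 * prior z.2 * Real.log (lik z.1 z.2 / ev z.1))
      ((volume : Measure (Fin n → ℝ)).prod (volume : Measure (Fin p → ℝ))) := by
    have h := hIntMI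
    rw [hBeq] at h
    exact h
  have hMI_eq : MI = ∫ z : (Fin n → ℝ) × (Fin p → ℝ),
      lik z.1 z.2 * prior z.2 * Real.log (lik z.1 z.2 / ev z.1)
      ∂((volume : Measure (Fin n → ℝ)).prod (volume : Measure (Fin p → ℝ))) := by
    rw [hMI]
    have h1 : ∫ y, ∫ θ, joint y θ * Real.log (joint y θ / (ev y * prior θ))
        = ∫ z : (Fin n → ℝ) × (Fin p → ℝ),
            joint z.1 z.2 * Real.log (joint z.1 z.2 / (ev z.1 * prior z.2))
            ∂((volume : Measure (Fin n → ℝ)).prod (volume : Measure (Fin p → ℝ))) :=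
      integral_integral (f := fun y θ => joint y θ * Real.log (joint y θ / (ev y * prior θ))) hIntMI
    rw [h1]
    exact integral_congr_ae (Filter.Eventually.of_forall hBpt)
  -- measurability of the bad set
  have hms : MeasurableSet {z : (Fin n → ℝ) × (Fin p → ℝ) |
      ev z.1 = 0 → lik z.1 z.2 * prior z.2 = 0} := by
    have h1 : MeasurableSet {z : (Fin n → ℝ) × (Fin p → ℝ) | ev z.1 = 0} :=
      measurableSet_eq_fun (hev_meas.comp measurable_fst) measurable_const
    have h2 : MeasurableSet {z : (Fin n → ℝ) × (Fin p → ℝ) | lik z.1 z.2 * prior z.2 = 0} :=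
      measurableSet_eq_fun hJm measurable_const
    have h3 : {z : (Fin n → ℝ) × (Fin p → ℝ) | ev z.1 = 0 → lik z.1 z.2 * prior z.2 = 0}
        = {z : (Fin n → ℝ) × (Fin p → ℝ) | ev z.1 = 0}ᶜ
          ∪ {z : (Fin n → ℝ) × (Fin p → ℝ) | lik z.1 z.2 * prior z.2 = 0} := by
      ext z; simp [imp_iff_not_or]
    rw [h3]
    exact h1.compl.union h2
  have hs_meas : MeasurableSet {z : (Fin n → ℝ) × (Fin p → ℝ) |
      ¬ (ev z.1 = 0 → lik z.1 z.2 * prior z.2 = 0)} := by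
    rw [← Set.compl_setOf]
    exact hms.compl
  have hbad : ∀ᵐ z : (Fin n → ℝ) × (Fin p → ℝ)
      ∂((volume : Measure (Fin n → ℝ)).prod (volume : Measure (Fin p → ℝ))),
      ev z.1 = 0 → lik z.1 z.2 * prior z.2 = 0 := by
    rw [Measure.ae_prod_iff_ae_ae hms]
    filter_upwards [hJ.prod_right_ae] with y hy
    rcases eq_or_ne (ev y) 0 with h0 | h0
    · have h1 : ∫ θ, lik y θ * prior θ = 0 := by rw [← hev y, h0]
      have h2 : (fun θ => lik y θ * prior θ) =ᵐ[(volume : Measure (Fin p → ℝ))] 0 :=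
        (integral_eq_zero_iff_of_nonneg_ae
          (Filter.Eventually.of_forall fun θ => mul_nonneg (hlik_nonneg _ _) (hprior_nonneg _))
          hy).1 h1
      filter_upwards [h2] with θ hθ _
      exact hθ
    · exact Filter.Eventually.of_forall fun θ h => absurd h h0
  have hbs_null : ((volume : Measure (Fin n → ℝ)).prod (volume : Measure (Fin p → ℝ)))
      {z : (Fin n → ℝ) × (Fin p → ℝ) | ¬ (ev z.1 = 0 → lik z.1 z.2 * prior z.2 = 0)} = 0 :=
    ae_iff.1 hbad
  have hc_null : ∀ᵐ θ : (Fin p → ℝ), (volume : Measure (Fin n → ℝ))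
      ((fun y => (y, θ)) ⁻¹' {z : (Fin n → ℝ) × (Fin p → ℝ) |
        ¬ (ev z.1 = 0 → lik z.1 z.2 * prior z.2 = 0)}) = 0 := by
    have h1 := Measure.prod_apply_symm
      (μ := (volume : Measure (Fin n → ℝ))) (ν := (volume : Measure (Fin p → ℝ))) hs_meas
    have h2 : ∫⁻ θ, (volume : Measure (Fin n → ℝ))
        ((fun y => (y, θ)) ⁻¹' {z : (Fin n → ℝ) × (Fin p → ℝ) |
          ¬ (ev z.1 = 0 → lik z.1 z.2 * prior z.2 = 0)}) = 0 := by
      rw [← h1]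
      exact hbs_null
    have h3 := (lintegral_eq_zero_iff (measurable_measure_prodMk_right hs_meas)).1 h2
    filter_upwards [h3] with θ hθ
    exact hθ
  -- bad sets on the big space
  have hbadΩ : ∀ j : Fin (m+1), ∀ᵐ z : (Fin (m+1) → Fin p → ℝ) × (Fin n → ℝ)
      ∂((volume : Measure (Fin (m+1) → Fin p → ℝ)).prod (volume : Measure (Fin n → ℝ))),
      ev z.2 = 0 → lik z.2 (z.1 j) * prior (z.1 j) = 0 := by
    intro j
    rw [ae_iff]
    have hpre : {z : (Fin (m+1) → Fin p → ℝ) × (Fin n → ℝ) |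
        ¬ (ev z.2 = 0 → lik z.2 (z.1 j) * prior (z.1 j) = 0)}
        = (fun z : (Fin (m+1) → Fin p → ℝ) × (Fin n → ℝ) => (z.2, z.1 j)) ⁻¹'
          {z : (Fin n → ℝ) × (Fin p → ℝ) | ¬ (ev z.1 = 0 → lik z.1 z.2 * prior z.2 = 0)} := rfl
    rw [hpre]
    have hTm : Measurable (fun z : (Fin (m+1) → Fin p → ℝ) × (Fin n → ℝ) => (z.2, z.1 j)) :=
      measurable_snd.prodMk ((measurable_pi_apply j).comp measurable_fst)
    rw [Measure.prod_apply (hTm hs_meas)]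
    have hN : (volume : Measure (Fin p → ℝ)) {θ : Fin p → ℝ |
        ¬ ((volume : Measure (Fin n → ℝ)) ((fun y => (y, θ)) ⁻¹'
          {z : (Fin n → ℝ) × (Fin p → ℝ) | ¬ (ev z.1 = 0 → lik z.1 z.2 * prior z.2 = 0)}) = 0)} = 0 :=
      ae_iff.1 hc_null
    have hNpre : (volume : Measure (Fin (m+1) → Fin p → ℝ))
        (Function.eval j ⁻¹' {θ : Fin p → ℝ |
          ¬ ((volume : Measure (Fin n → ℝ)) ((fun y => (y, θ)) ⁻¹'
            {z : (Fin n → ℝ) × (Fin p → ℝ) | ¬ (ev z.1 = 0 → lik z.1 z.2 * prior z.2 = 0)}) = 0)}) = 0 := by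
      rw [volume_pi]
      exact Measure.pi_eval_preimage_null _ hN
    have hae0 : (fun θs : Fin (m+1) → Fin p → ℝ => (volume : Measure (Fin n → ℝ))
        ((fun y => (y, θs j)) ⁻¹' {z : (Fin n → ℝ) × (Fin p → ℝ) |
          ¬ (ev z.1 = 0 → lik z.1 z.2 * prior z.2 = 0)}))
        =ᵐ[(volume : Measure (Fin (m+1) → Fin p → ℝ))] 0 := by
      rw [Filter.EventuallyEq, ae_iff]
      exact measure_mono_null (fun θs h => h) hNpre
    have h4 : ∫⁻ θs : Fin (m+1) → Fin p → ℝ, (volume : Measure (Fin n → ℝ))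
        (Prod.mk θs ⁻¹' ((fun z : (Fin (m+1) → Fin p → ℝ) × (Fin n → ℝ) => (z.2, z.1 j)) ⁻¹'
          {z : (Fin n → ℝ) × (Fin p → ℝ) | ¬ (ev z.1 = 0 → lik z.1 z.2 * prior z.2 = 0)}))
        = ∫⁻ _θs : Fin (m+1) → Fin p → ℝ, 0 := lintegral_congr_ae hae0
    rw [h4, lintegral_zero]
  -- the measure-preserving rearrangement map
  have hmpT : MeasurePreserving
      (fun z : (Fin (m+1) → Fin p → ℝ) × (Fin n → ℝ) =>
        ((z.1 i, z.2), fun k : Fin m => z.1 (i.succAbove k)))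
      ((volume : Measure (Fin (m+1) → Fin p → ℝ)).prod (volume : Measure (Fin n → ℝ)))
      (((volume : Measure (Fin p → ℝ)).prod (volume : Measure (Fin n → ℝ))).prod
        (volume : Measure (Fin m → Fin p → ℝ))) := by
    have h1 : MeasurePreserving
        (Prod.map (⇑(MeasurableEquiv.piFinSuccAbove (fun _ : Fin (m+1) => (Fin p → ℝ)) i))
          (id : (Fin n → ℝ) → (Fin n → ℝ)))
        ((volume : Measure (Fin (m+1) → Fin p → ℝ)).prod (volume : Measure (Fin n → ℝ)))
        (((volume : Measure (Fin p → ℝ)).prod (volume : Measure (Fin m → Fin p → ℝ))).prod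
          (volume : Measure (Fin n → ℝ))) :=
      (measurePreserving_piFinSuccAbove (fun _ : Fin (m+1) => (volume : Measure (Fin p → ℝ))) i).prod
        (MeasurePreserving.id _)
    have h2 := measurePreserving_prodAssoc (volume : Measure (Fin p → ℝ))
      (volume : Measure (Fin m → Fin p → ℝ)) (volume : Measure (Fin n → ℝ))
    have h3 : MeasurePreserving
        (Prod.map (id : (Fin p → ℝ) → (Fin p → ℝ))
          (Prod.swap : (Fin m → Fin p → ℝ) × (Fin n → ℝ) → (Fin n → ℝ) × (Fin m → Fin p → ℝ)))
        ((volume : Measure (Fin p → ℝ)).prod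
          ((volume : Measure (Fin m → Fin p → ℝ)).prod (volume : Measure (Fin n → ℝ))))
        ((volume : Measure (Fin p → ℝ)).prod
          ((volume : Measure (Fin n → ℝ)).prod (volume : Measure (Fin m → Fin p → ℝ)))) :=
      (MeasurePreserving.id _).prod Measure.measurePreserving_swap
    have h4 : MeasurePreserving
        (⇑(MeasurableEquiv.prodAssoc.symm :
          (Fin p → ℝ) × ((Fin n → ℝ) × (Fin m → Fin p → ℝ)) ≃ᵐ
            ((Fin p → ℝ) × (Fin n → ℝ)) × (Fin m → Fin p → ℝ)))
        ((volume : Measure (Fin p → ℝ)).prod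
          ((volume : Measure (Fin n → ℝ)).prod (volume : Measure (Fin m → Fin p → ℝ))))
        (((volume : Measure (Fin p → ℝ)).prod (volume : Measure (Fin n → ℝ))).prod
          (volume : Measure (Fin m → Fin p → ℝ))) :=
      MeasurePreserving.symm _ (measurePreserving_prodAssoc _ _ _)
    exact ((h4.comp h3).comp h2).comp h1
  have hTemb : MeasurableEmbedding
      (fun z : (Fin (m+1) → Fin p → ℝ) × (Fin n → ℝ) =>
        ((z.1 i, z.2), fun k : Fin m => z.1 (i.succAbove k))) := by
    exact (((MeasurableEquiv.piFinSuccAbove (fun _ : Fin (m+1) => (Fin p → ℝ)) i).prodCongr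
      (MeasurableEquiv.refl (Fin n → ℝ))).trans
      (MeasurableEquiv.prodAssoc.trans
        (((MeasurableEquiv.refl (Fin p → ℝ)).prodCongr MeasurableEquiv.prodComm).trans
          MeasurableEquiv.prodAssoc.symm))).measurableEmbedding
  -- lifting integrable functions from (θ, y) to the big space
  have lift : ∀ φ : (Fin p → ℝ) × (Fin n → ℝ) → ℝ,
      Integrable φ ((volume : Measure (Fin p → ℝ)).prod (volume : Measure (Fin n → ℝ))) →
      Integrable (fun z : (Fin (m+1) → Fin p → ℝ) × (Fin n → ℝ) =>
          φ (z.1 i, z.2) * ∏ k : Fin m, prior (z.1 (i.succAbove k)))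
        ((volume : Measure (Fin (m+1) → Fin p → ℝ)).prod (volume : Measure (Fin n → ℝ))) ∧
      ∫ z : (Fin (m+1) → Fin p → ℝ) × (Fin n → ℝ),
          φ (z.1 i, z.2) * ∏ k : Fin m, prior (z.1 (i.succAbove k))
          ∂((volume : Measure (Fin (m+1) → Fin p → ℝ)).prod (volume : Measure (Fin n → ℝ)))
        = ∫ u, φ u ∂((volume : Measure (Fin p → ℝ)).prod (volume : Measure (Fin n → ℝ))) := by
    intro φ hφ
    have hG : Integrable (fun r : Fin m → Fin p → ℝ => ∏ k, prior (r k)) :=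
      Integrable.fintype_prod (f := fun _ : Fin m => prior) fun _ => hprior_int
    have hGone : ∫ r : Fin m → Fin p → ℝ, ∏ k, prior (r k) = 1 := by
      rw [integral_fintype_prod_volume_eq_pow (ι := Fin m) prior, hprior_one, one_pow]
    have hF : Integrable (fun u : ((Fin p → ℝ) × (Fin n → ℝ)) × (Fin m → Fin p → ℝ) =>
        φ u.1 * ∏ k, prior (u.2 k))
        ((((volume : Measure (Fin p → ℝ)).prod (volume : Measure (Fin n → ℝ)))).prod
          (volume : Measure (Fin m → Fin p → ℝ))) := hφ.mul_prod hG
    have hFval : ∫ u : ((Fin p → ℝ) × (Fin n → ℝ)) × (Fin m → Fin p → ℝ),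
        φ u.1 * ∏ k, prior (u.2 k)
        ∂((((volume : Measure (Fin p → ℝ)).prod (volume : Measure (Fin n → ℝ)))).prod
          (volume : Measure (Fin m → Fin p → ℝ)))
        = ∫ u, φ u ∂((volume : Measure (Fin p → ℝ)).prod (volume : Measure (Fin n → ℝ))) := by
      refine (integral_prod_mul (L := ℝ) φ (fun r : Fin m → Fin p → ℝ => ∏ k, prior (r k))).trans ?_
      rw [hGone, mul_one]
    constructor
    · exact (hmpT.integrable_comp_emb hTemb).2 hF
    · exact (hmpT.integral_comp hTemb
        (fun u : ((Fin p → ℝ) × (Fin n → ℝ)) × (Fin m → Fin p → ℝ) =>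
          φ u.1 * ∏ k, prior (u.2 k))).trans hFval
  -- lifted functions
  have hφw_int : Integrable (fun u : (Fin p → ℝ) × (Fin n → ℝ) => lik u.2 u.1 * prior u.1)
      ((volume : Measure (Fin p → ℝ)).prod (volume : Measure (Fin n → ℝ))) := hJ.swap
  have hφw_one : ∫ u : (Fin p → ℝ) × (Fin n → ℝ), lik u.2 u.1 * prior u.1
      ∂((volume : Measure (Fin p → ℝ)).prod (volume : Measure (Fin n → ℝ))) = 1 := by
    exact (integral_prod_swap (μ := (volume : Measure (Fin n → ℝ)))
      (ν := (volume : Measure (Fin p → ℝ)))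
      (fun z : (Fin n → ℝ) × (Fin p → ℝ) => lik z.1 z.2 * prior z.2)).trans hJ_one
  have hφB_int : Integrable (fun u : (Fin p → ℝ) × (Fin n → ℝ) =>
      lik u.2 u.1 * prior u.1 * Real.log (lik u.2 u.1 / ev u.2))
      ((volume : Measure (Fin p → ℝ)).prod (volume : Measure (Fin n → ℝ))) := hB_int.swap
  have hφB_val : ∫ u : (Fin p → ℝ) × (Fin n → ℝ),
      lik u.2 u.1 * prior u.1 * Real.log (lik u.2 u.1 / ev u.2)
      ∂((volume : Measure (Fin p → ℝ)).prod (volume : Measure (Fin n → ℝ)))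
      = MI := by
    refine Eq.trans ?_ hMI_eq.symm
    exact integral_prod_swap (μ := (volume : Measure (Fin n → ℝ)))
      (ν := (volume : Measure (Fin p → ℝ)))
      (fun z : (Fin n → ℝ) × (Fin p → ℝ) => lik z.1 z.2 * prior z.2 * Real.log (lik z.1 z.2 / ev z.1))
  have hφe_int : Integrable (fun u : (Fin p → ℝ) × (Fin n → ℝ) => prior u.1 * ev u.2)
      ((volume : Measure (Fin p → ℝ)).prod (volume : Measure (Fin n → ℝ))) :=
    hprior_int.mul_prod hev_int
  have hφe_one : ∫ u : (Fin p → ℝ) × (Fin n → ℝ), prior u.1 * ev u.2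
      ∂((volume : Measure (Fin p → ℝ)).prod (volume : Measure (Fin n → ℝ))) = 1 := by
    rw [integral_prod_mul, hprior_one, hev_one, one_mul]
  -- big-space versions
  have hw := lift _ hφw_int
  have hw_int : Integrable (fun z : (Fin (m+1) → Fin p → ℝ) × (Fin n → ℝ) =>
      (∏ t, prior (z.1 t)) * lik z.2 (z.1 i))
      ((volume : Measure (Fin (m+1) → Fin p → ℝ)).prod (volume : Measure (Fin n → ℝ))) := by
    refine hw.1.congr (Filter.Eventually.of_forall fun z => ?_)
    simp only [Fin.prod_univ_succAbove (fun t => prior (z.1 t)) i]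
    ring
  have hw_one : ∫ z : (Fin (m+1) → Fin p → ℝ) × (Fin n → ℝ),
      (∏ t, prior (z.1 t)) * lik z.2 (z.1 i)
      ∂((volume : Measure (Fin (m+1) → Fin p → ℝ)).prod (volume : Measure (Fin n → ℝ))) = 1 := by
    have h1 : ∫ z : (Fin (m+1) → Fin p → ℝ) × (Fin n → ℝ),
        (∏ t, prior (z.1 t)) * lik z.2 (z.1 i)
        ∂((volume : Measure (Fin (m+1) → Fin p → ℝ)).prod (volume : Measure (Fin n → ℝ)))
        = ∫ z : (Fin (m+1) → Fin p → ℝ) × (Fin n → ℝ),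
          lik z.2 (z.1 i) * prior (z.1 i) * ∏ k : Fin m, prior (z.1 (i.succAbove k))
          ∂((volume : Measure (Fin (m+1) → Fin p → ℝ)).prod (volume : Measure (Fin n → ℝ))) := by
      refine integral_congr_ae (Filter.Eventually.of_forall fun z => ?_)
      simp only [Fin.prod_univ_succAbove (fun t => prior (z.1 t)) i]
      ring
    rw [h1]
    exact hw.2.trans hφw_one
  have hA := lift _ hφB_int
  have hA_int : Integrable (fun z : (Fin (m+1) → Fin p → ℝ) × (Fin n → ℝ) =>
      ((∏ t, prior (z.1 t)) * lik z.2 (z.1 i)) * Real.log (lik z.2 (z.1 i) / ev z.2))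
      ((volume : Measure (Fin (m+1) → Fin p → ℝ)).prod (volume : Measure (Fin n → ℝ))) := by
    refine hA.1.congr (Filter.Eventually.of_forall fun z => ?_)
    simp only [Fin.prod_univ_succAbove (fun t => prior (z.1 t)) i]
    ring
  have hA_val : ∫ z : (Fin (m+1) → Fin p → ℝ) × (Fin n → ℝ),
      ((∏ t, prior (z.1 t)) * lik z.2 (z.1 i)) * Real.log (lik z.2 (z.1 i) / ev z.2)
      ∂((volume : Measure (Fin (m+1) → Fin p → ℝ)).prod (volume : Measure (Fin n → ℝ))) = MI := by
    have h1 : ∫ z : (Fin (m+1) → Fin p → ℝ) × (Fin n → ℝ),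
        ((∏ t, prior (z.1 t)) * lik z.2 (z.1 i)) * Real.log (lik z.2 (z.1 i) / ev z.2)
        ∂((volume : Measure (Fin (m+1) → Fin p → ℝ)).prod (volume : Measure (Fin n → ℝ)))
        = ∫ z : (Fin (m+1) → Fin p → ℝ) × (Fin n → ℝ),
          lik z.2 (z.1 i) * prior (z.1 i) * Real.log (lik z.2 (z.1 i) / ev z.2)
            * ∏ k : Fin m, prior (z.1 (i.succAbove k))
          ∂((volume : Measure (Fin (m+1) → Fin p → ℝ)).prod (volume : Measure (Fin n → ℝ))) := by
      refine integral_congr_ae (Filter.Eventually.of_forall fun z => ?_)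
      simp only [Fin.prod_univ_succAbove (fun t => prior (z.1 t)) i]
      ring
    rw [h1]
    exact hA.2.trans hφB_val
  have hPev := lift _ hφe_int
  have hPev_int : Integrable (fun z : (Fin (m+1) → Fin p → ℝ) × (Fin n → ℝ) =>
      (∏ t, prior (z.1 t)) * ev z.2)
      ((volume : Measure (Fin (m+1) → Fin p → ℝ)).prod (volume : Measure (Fin n → ℝ))) := by
    refine hPev.1.congr (Filter.Eventually.of_forall fun z => ?_)
    simp only [Fin.prod_univ_succAbove (fun t => prior (z.1 t)) i]
    ring
  have hPev_one : ∫ z : (Fin (m+1) → Fin p → ℝ) × (Fin n → ℝ),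
      (∏ t, prior (z.1 t)) * ev z.2
      ∂((volume : Measure (Fin (m+1) → Fin p → ℝ)).prod (volume : Measure (Fin n → ℝ))) = 1 := by
    have h1 : ∫ z : (Fin (m+1) → Fin p → ℝ) × (Fin n → ℝ),
        (∏ t, prior (z.1 t)) * ev z.2
        ∂((volume : Measure (Fin (m+1) → Fin p → ℝ)).prod (volume : Measure (Fin n → ℝ)))
        = ∫ z : (Fin (m+1) → Fin p → ℝ) × (Fin n → ℝ),
          prior (z.1 i) * ev z.2 * ∏ k : Fin m, prior (z.1 (i.succAbove k))
          ∂((volume : Measure (Fin (m+1) → Fin p → ℝ)).prod (volume : Measure (Fin n → ℝ))) := by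
      refine integral_congr_ae (Filter.Eventually.of_forall fun z => ?_)
      simp only [Fin.prod_univ_succAbove (fun t => prior (z.1 t)) i]
      ring
    rw [h1]
    exact hPev.2.trans hφe_one
  -- symmetrization
  have sym : ∀ (j : Fin (m+1)) (c : (Fin n → ℝ) → ℝ → ℝ),
      (Integrable (fun z : (Fin (m+1) → Fin p → ℝ) × (Fin n → ℝ) =>
          ((∏ t, prior (z.1 t)) * lik z.2 (z.1 j)) * c z.2 (∑ t, lik z.2 (z.1 t)))
        ((volume : Measure (Fin (m+1) → Fin p → ℝ)).prod (volume : Measure (Fin n → ℝ))) ↔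
        Integrable (fun z : (Fin (m+1) → Fin p → ℝ) × (Fin n → ℝ) =>
          ((∏ t, prior (z.1 t)) * lik z.2 (z.1 i)) * c z.2 (∑ t, lik z.2 (z.1 t)))
        ((volume : Measure (Fin (m+1) → Fin p → ℝ)).prod (volume : Measure (Fin n → ℝ)))) ∧
      (∫ z : (Fin (m+1) → Fin p → ℝ) × (Fin n → ℝ),
          ((∏ t, prior (z.1 t)) * lik z.2 (z.1 j)) * c z.2 (∑ t, lik z.2 (z.1 t))
          ∂((volume : Measure (Fin (m+1) → Fin p → ℝ)).prod (volume : Measure (Fin n → ℝ)))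
        = ∫ z : (Fin (m+1) → Fin p → ℝ) × (Fin n → ℝ),
          ((∏ t, prior (z.1 t)) * lik z.2 (z.1 i)) * c z.2 (∑ t, lik z.2 (z.1 t))
          ∂((volume : Measure (Fin (m+1) → Fin p → ℝ)).prod (volume : Measure (Fin n → ℝ)))) := by
    intro j c
    have happly : ∀ (θs : Fin (m+1) → Fin p → ℝ) (k : Fin (m+1)),
        (MeasurableEquiv.piCongrLeft (fun _ : Fin (m+1) => (Fin p → ℝ)) (Equiv.swap i j)) θs k
          = θs ((Equiv.swap i j) k) := by
      intro θs k
      have h1 := Equiv.piCongrLeft_apply_apply (fun _ : Fin (m+1) => (Fin p → ℝ))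
        (Equiv.swap i j) θs ((Equiv.swap i j) k)
      rw [Equiv.swap_apply_self i j k] at h1
      rw [MeasurableEquiv.coe_piCongrLeft]
      exact h1
    have hTj_mp : MeasurePreserving
        (fun z : (Fin (m+1) → Fin p → ℝ) × (Fin n → ℝ) =>
          ((MeasurableEquiv.piCongrLeft (fun _ : Fin (m+1) => (Fin p → ℝ)) (Equiv.swap i j)) z.1, z.2))
        ((volume : Measure (Fin (m+1) → Fin p → ℝ)).prod (volume : Measure (Fin n → ℝ)))
        ((volume : Measure (Fin (m+1) → Fin p → ℝ)).prod (volume : Measure (Fin n → ℝ))) :=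
      (volume_measurePreserving_piCongrLeft (fun _ : Fin (m+1) => (Fin p → ℝ))
        (Equiv.swap i j)).prod (MeasurePreserving.id _)
    have hTj_emb : MeasurableEmbedding
        (fun z : (Fin (m+1) → Fin p → ℝ) × (Fin n → ℝ) =>
          ((MeasurableEquiv.piCongrLeft (fun _ : Fin (m+1) => (Fin p → ℝ)) (Equiv.swap i j)) z.1, z.2)) :=
      ((MeasurableEquiv.piCongrLeft (fun _ : Fin (m+1) => (Fin p → ℝ)) (Equiv.swap i j)).prodCongr
        (MeasurableEquiv.refl (Fin n → ℝ))).measurableEmbedding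
    have hcomp : ∀ z : (Fin (m+1) → Fin p → ℝ) × (Fin n → ℝ),
        ((∏ t, prior ((MeasurableEquiv.piCongrLeft (fun _ : Fin (m+1) => (Fin p → ℝ))
            (Equiv.swap i j)) z.1 t))
          * lik z.2 ((MeasurableEquiv.piCongrLeft (fun _ : Fin (m+1) => (Fin p → ℝ))
            (Equiv.swap i j)) z.1 j))
          * c z.2 (∑ t, lik z.2 ((MeasurableEquiv.piCongrLeft (fun _ : Fin (m+1) => (Fin p → ℝ))
            (Equiv.swap i j)) z.1 t))
        = ((∏ t, prior (z.1 t)) * lik z.2 (z.1 i)) * c z.2 (∑ t, lik z.2 (z.1 t)) := by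
      intro z
      simp only [happly]
      rw [Equiv.prod_comp (Equiv.swap i j) (fun t => prior (z.1 t)),
        Equiv.sum_comp (Equiv.swap i j) (fun t => lik z.2 (z.1 t)),
        Equiv.swap_apply_right i j]
    have hiff := hTj_mp.integrable_comp_emb hTj_emb
      (g := fun z : (Fin (m+1) → Fin p → ℝ) × (Fin n → ℝ) =>
        ((∏ t, prior (z.1 t)) * lik z.2 (z.1 j)) * c z.2 (∑ t, lik z.2 (z.1 t)))
    have hfeq : ((fun z : (Fin (m+1) → Fin p → ℝ) × (Fin n → ℝ) =>
        ((∏ t, prior (z.1 t)) * lik z.2 (z.1 j)) * c z.2 (∑ t, lik z.2 (z.1 t)))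
          ∘ (fun z : (Fin (m+1) → Fin p → ℝ) × (Fin n → ℝ) =>
            ((MeasurableEquiv.piCongrLeft (fun _ : Fin (m+1) => (Fin p → ℝ))
              (Equiv.swap i j)) z.1, z.2)))
        = fun z : (Fin (m+1) → Fin p → ℝ) × (Fin n → ℝ) =>
          ((∏ t, prior (z.1 t)) * lik z.2 (z.1 i)) * c z.2 (∑ t, lik z.2 (z.1 t)) :=
      funext fun z => hcomp z
    constructor
    · rw [← hiff, hfeq]
    · have hval := hTj_mp.integral_comp hTj_emb
        (fun z : (Fin (m+1) → Fin p → ℝ) × (Fin n → ℝ) =>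
          ((∏ t, prior (z.1 t)) * lik z.2 (z.1 j)) * c z.2 (∑ t, lik z.2 (z.1 t)))
      rw [← hval]
      exact integral_congr_ae (Filter.Eventually.of_forall fun z => hcomp z)
  -- symmetrized copies of w
  have hwj_int : ∀ j : Fin (m+1), Integrable
      (fun z : (Fin (m+1) → Fin p → ℝ) × (Fin n → ℝ) => (∏ t, prior (z.1 t)) * lik z.2 (z.1 j))
      ((volume : Measure (Fin (m+1) → Fin p → ℝ)).prod (volume : Measure (Fin n → ℝ))) := by
    intro j
    have h1 := (sym j (fun _ _ => (1:ℝ))).1.2 (by simpa using hw_int)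
    simpa using h1
  have hwj_one : ∀ j : Fin (m+1), ∫ z : (Fin (m+1) → Fin p → ℝ) × (Fin n → ℝ),
      (∏ t, prior (z.1 t)) * lik z.2 (z.1 j)
      ∂((volume : Measure (Fin (m+1) → Fin p → ℝ)).prod (volume : Measure (Fin n → ℝ))) = 1 := by
    intro j
    have h2 := (sym j (fun _ _ => (1:ℝ))).2
    simp only [mul_one] at h2
    exact h2.trans hw_one
  -- connect LPCE
  have hIntL' : Integrable (fun z : (Fin (m+1) → Fin p → ℝ) × (Fin n → ℝ) =>
      ((∏ t, prior (z.1 t)) * lik z.2 (z.1 i)) *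
        Real.log (lik z.2 (z.1 i) / (((m+1 : ℕ) : ℝ)⁻¹ * ∑ t, lik z.2 (z.1 t))))
      ((volume : Measure (Fin (m+1) → Fin p → ℝ)).prod (volume : Measure (Fin n → ℝ))) := hIntL
  have hLPCE' : LPCE = ∫ z : (Fin (m+1) → Fin p → ℝ) × (Fin n → ℝ),
      ((∏ t, prior (z.1 t)) * lik z.2 (z.1 i)) *
        Real.log (lik z.2 (z.1 i) / (((m+1 : ℕ) : ℝ)⁻¹ * ∑ t, lik z.2 (z.1 t)))
      ∂((volume : Measure (Fin (m+1) → Fin p → ℝ)).prod (volume : Measure (Fin n → ℝ))) := by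
    rw [hLPCE]
    exact integral_integral (f := fun (θs : Fin (m+1) → Fin p → ℝ) (y : Fin n → ℝ) =>
      ((∏ t, prior (θs t)) * lik y (θs i)) *
        Real.log (lik y (θs i) / (((m+1 : ℕ) : ℝ)⁻¹ * ∑ t, lik y (θs t)))) hIntL'
  -- a.e. splitting of the MI integrand
  have hsplit : ∀ᵐ z : (Fin (m+1) → Fin p → ℝ) × (Fin n → ℝ)
      ∂((volume : Measure (Fin (m+1) → Fin p → ℝ)).prod (volume : Measure (Fin n → ℝ))),
      ((∏ t, prior (z.1 t)) * lik z.2 (z.1 i)) * Real.log (lik z.2 (z.1 i) / ev z.2)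
      = ((∏ t, prior (z.1 t)) * lik z.2 (z.1 i)) *
          Real.log (lik z.2 (z.1 i) / (((m+1 : ℕ) : ℝ)⁻¹ * ∑ t, lik z.2 (z.1 t)))
        + ((∏ t, prior (z.1 t)) * lik z.2 (z.1 i)) *
          Real.log (((m+1 : ℕ) : ℝ)⁻¹ * (∑ t, lik z.2 (z.1 t)) / ev z.2) := by
    filter_upwards [hbadΩ i] with z hz
    rcases eq_or_ne ((∏ t, prior (z.1 t)) * lik z.2 (z.1 i)) 0 with h | h
    · rw [h]; ring
    · have hP : (∏ t, prior (z.1 t)) ≠ 0 := left_ne_zero_of_mul h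
      have hL : lik z.2 (z.1 i) ≠ 0 := right_ne_zero_of_mul h
      have hLpos : 0 < lik z.2 (z.1 i) := (hlik_nonneg _ _).lt_of_ne (Ne.symm hL)
      have hpri : prior (z.1 i) ≠ 0 := fun h0 => hP (Finset.prod_eq_zero (Finset.mem_univ i) h0)
      have hE : ev z.2 ≠ 0 := fun h0 => (mul_ne_zero hL hpri) (hz h0)
      have hSigpos : 0 < ∑ t, lik z.2 (z.1 t) :=
        lt_of_lt_of_le hLpos (Finset.single_le_sum (fun t _ => hlik_nonneg _ _) (Finset.mem_univ i))
      have hS : (((m+1 : ℕ) : ℝ)⁻¹ * ∑ t, lik z.2 (z.1 t)) ≠ 0 :=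
        ne_of_gt (mul_pos (by positivity) hSigpos)
      rw [Real.log_div hL hE, Real.log_div hL hS, Real.log_div hS hE]
      ring
  -- g is integrable
  have hg_int : Integrable (fun z : (Fin (m+1) → Fin p → ℝ) × (Fin n → ℝ) =>
      ((∏ t, prior (z.1 t)) * lik z.2 (z.1 i)) *
        Real.log (((m+1 : ℕ) : ℝ)⁻¹ * (∑ t, lik z.2 (z.1 t)) / ev z.2))
      ((volume : Measure (Fin (m+1) → Fin p → ℝ)).prod (volume : Measure (Fin n → ℝ))) := by
    refine (hA_int.sub hIntL').congr ?_
    filter_upwards [hsplit] with z hz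
    simp only [Pi.sub_apply]
    linarith [hz]
  -- MI = LPCE + ∫ g
  have hMI_val : MI = LPCE + ∫ z : (Fin (m+1) → Fin p → ℝ) × (Fin n → ℝ),
      ((∏ t, prior (z.1 t)) * lik z.2 (z.1 i)) *
        Real.log (((m+1 : ℕ) : ℝ)⁻¹ * (∑ t, lik z.2 (z.1 t)) / ev z.2)
      ∂((volume : Measure (Fin (m+1) → Fin p → ℝ)).prod (volume : Measure (Fin n → ℝ))) := by
    rw [← hA_val]
    calc ∫ z : (Fin (m+1) → Fin p → ℝ) × (Fin n → ℝ),
        ((∏ t, prior (z.1 t)) * lik z.2 (z.1 i)) * Real.log (lik z.2 (z.1 i) / ev z.2)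
        ∂((volume : Measure (Fin (m+1) → Fin p → ℝ)).prod (volume : Measure (Fin n → ℝ)))
        = ∫ z : (Fin (m+1) → Fin p → ℝ) × (Fin n → ℝ),
          (((∏ t, prior (z.1 t)) * lik z.2 (z.1 i)) *
            Real.log (lik z.2 (z.1 i) / (((m+1 : ℕ) : ℝ)⁻¹ * ∑ t, lik z.2 (z.1 t)))
          + ((∏ t, prior (z.1 t)) * lik z.2 (z.1 i)) *
            Real.log (((m+1 : ℕ) : ℝ)⁻¹ * (∑ t, lik z.2 (z.1 t)) / ev z.2))
          ∂((volume : Measure (Fin (m+1) → Fin p → ℝ)).prod (volume : Measure (Fin n → ℝ))) :=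
        integral_congr_ae hsplit
      _ = (∫ z : (Fin (m+1) → Fin p → ℝ) × (Fin n → ℝ),
          ((∏ t, prior (z.1 t)) * lik z.2 (z.1 i)) *
            Real.log (lik z.2 (z.1 i) / (((m+1 : ℕ) : ℝ)⁻¹ * ∑ t, lik z.2 (z.1 t)))
          ∂((volume : Measure (Fin (m+1) → Fin p → ℝ)).prod (volume : Measure (Fin n → ℝ))))
        + ∫ z : (Fin (m+1) → Fin p → ℝ) × (Fin n → ℝ),
          ((∏ t, prior (z.1 t)) * lik z.2 (z.1 i)) *
            Real.log (((m+1 : ℕ) : ℝ)⁻¹ * (∑ t, lik z.2 (z.1 t)) / ev z.2)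
          ∂((volume : Measure (Fin (m+1) → Fin p → ℝ)).prod (volume : Measure (Fin n → ℝ))) :=
        integral_add hIntL' hg_int
      _ = LPCE + _ := by rw [hLPCE']
  -- symmetrized copies of g
  have hgj_int : ∀ j : Fin (m+1), Integrable
      (fun z : (Fin (m+1) → Fin p → ℝ) × (Fin n → ℝ) =>
        ((∏ t, prior (z.1 t)) * lik z.2 (z.1 j)) *
          Real.log (((m+1 : ℕ) : ℝ)⁻¹ * (∑ t, lik z.2 (z.1 t)) / ev z.2))
      ((volume : Measure (Fin (m+1) → Fin p → ℝ)).prod (volume : Measure (Fin n → ℝ))) :=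
    fun j => (sym j (fun y s => Real.log (((m+1 : ℕ) : ℝ)⁻¹ * s / ev y))).1.2 hg_int
  have hgj_val : ∀ j : Fin (m+1),
      (∫ z : (Fin (m+1) → Fin p → ℝ) × (Fin n → ℝ),
        ((∏ t, prior (z.1 t)) * lik z.2 (z.1 j)) *
          Real.log (((m+1 : ℕ) : ℝ)⁻¹ * (∑ t, lik z.2 (z.1 t)) / ev z.2)
        ∂((volume : Measure (Fin (m+1) → Fin p → ℝ)).prod (volume : Measure (Fin n → ℝ))))
      = ∫ z : (Fin (m+1) → Fin p → ℝ) × (Fin n → ℝ),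
        ((∏ t, prior (z.1 t)) * lik z.2 (z.1 i)) *
          Real.log (((m+1 : ℕ) : ℝ)⁻¹ * (∑ t, lik z.2 (z.1 t)) / ev z.2)
        ∂((volume : Measure (Fin (m+1) → Fin p → ℝ)).prod (volume : Measure (Fin n → ℝ))) :=
    fun j => (sym j (fun y s => Real.log (((m+1 : ℕ) : ℝ)⁻¹ * s / ev y))).2
  -- P·S is integrable with integral 1
  have hPS_int : Integrable (fun z : (Fin (m+1) → Fin p → ℝ) × (Fin n → ℝ) =>
      (∏ t, prior (z.1 t)) * (((m+1 : ℕ) : ℝ)⁻¹ * ∑ t, lik z.2 (z.1 t)))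
      ((volume : Measure (Fin (m+1) → Fin p → ℝ)).prod (volume : Measure (Fin n → ℝ))) := by
    have h1 : Integrable (fun z : (Fin (m+1) → Fin p → ℝ) × (Fin n → ℝ) =>
        ∑ j : Fin (m+1), (∏ t, prior (z.1 t)) * lik z.2 (z.1 j))
        ((volume : Measure (Fin (m+1) → Fin p → ℝ)).prod (volume : Measure (Fin n → ℝ))) :=
      integrable_finset_sum _ (fun j _ => hwj_int j)
    refine (h1.const_mul (((m+1 : ℕ) : ℝ)⁻¹)).congr (Filter.Eventually.of_forall fun z => ?_)
    simp only
    rw [← Finset.mul_sum]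
    ring
  have hPS_one : ∫ z : (Fin (m+1) → Fin p → ℝ) × (Fin n → ℝ),
      (∏ t, prior (z.1 t)) * (((m+1 : ℕ) : ℝ)⁻¹ * ∑ t, lik z.2 (z.1 t))
      ∂((volume : Measure (Fin (m+1) → Fin p → ℝ)).prod (volume : Measure (Fin n → ℝ))) = 1 := by
    have h1 : ∫ z : (Fin (m+1) → Fin p → ℝ) × (Fin n → ℝ),
        (∏ t, prior (z.1 t)) * (((m+1 : ℕ) : ℝ)⁻¹ * ∑ t, lik z.2 (z.1 t))
        ∂((volume : Measure (Fin (m+1) → Fin p → ℝ)).prod (volume : Measure (Fin n → ℝ)))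
        = ∫ z : (Fin (m+1) → Fin p → ℝ) × (Fin n → ℝ),
          ((m+1 : ℕ) : ℝ)⁻¹ * ∑ j : Fin (m+1), (∏ t, prior (z.1 t)) * lik z.2 (z.1 j)
          ∂((volume : Measure (Fin (m+1) → Fin p → ℝ)).prod (volume : Measure (Fin n → ℝ))) := by
      refine integral_congr_ae (Filter.Eventually.of_forall fun z => ?_)
      simp only [← Finset.mul_sum]
      ring
    rw [h1, integral_const_mul,
      integral_finset_sum _ (fun j (_ : j ∈ Finset.univ) => hwj_int j)]
    have h2 : ∀ j : Fin (m+1), j ∈ Finset.univ →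
        (∫ z : (Fin (m+1) → Fin p → ℝ) × (Fin n → ℝ),
          (∏ t, prior (z.1 t)) * lik z.2 (z.1 j)
          ∂((volume : Measure (Fin (m+1) → Fin p → ℝ)).prod (volume : Measure (Fin n → ℝ))))
        = (1:ℝ) := fun j _ => hwj_one j
    rw [Finset.sum_congr rfl h2, Finset.sum_const, Finset.card_univ, Fintype.card_fin,
      nsmul_eq_mul, mul_one]
    exact inv_mul_cancel₀ hMne
  -- h is integrable with ∫ h = ∫ g
  have hh_int : Integrable (fun z : (Fin (m+1) → Fin p → ℝ) × (Fin n → ℝ) =>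
      ((∏ t, prior (z.1 t)) * (((m+1 : ℕ) : ℝ)⁻¹ * ∑ t, lik z.2 (z.1 t))) *
        Real.log (((m+1 : ℕ) : ℝ)⁻¹ * (∑ t, lik z.2 (z.1 t)) / ev z.2))
      ((volume : Measure (Fin (m+1) → Fin p → ℝ)).prod (volume : Measure (Fin n → ℝ))) := by
    have h1 : Integrable (fun z : (Fin (m+1) → Fin p → ℝ) × (Fin n → ℝ) =>
        ∑ j : Fin (m+1), ((∏ t, prior (z.1 t)) * lik z.2 (z.1 j)) *
          Real.log (((m+1 : ℕ) : ℝ)⁻¹ * (∑ t, lik z.2 (z.1 t)) / ev z.2))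
        ((volume : Measure (Fin (m+1) → Fin p → ℝ)).prod (volume : Measure (Fin n → ℝ))) :=
      integrable_finset_sum _ (fun j _ => hgj_int j)
    refine (h1.const_mul (((m+1 : ℕ) : ℝ)⁻¹)).congr (Filter.Eventually.of_forall fun z => ?_)
    simp only
    rw [← Finset.sum_mul, ← Finset.mul_sum]
    ring
  have hh_val : ∫ z : (Fin (m+1) → Fin p → ℝ) × (Fin n → ℝ),
      ((∏ t, prior (z.1 t)) * (((m+1 : ℕ) : ℝ)⁻¹ * ∑ t, lik z.2 (z.1 t))) *
        Real.log (((m+1 : ℕ) : ℝ)⁻¹ * (∑ t, lik z.2 (z.1 t)) / ev z.2)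
      ∂((volume : Measure (Fin (m+1) → Fin p → ℝ)).prod (volume : Measure (Fin n → ℝ)))
      = ∫ z : (Fin (m+1) → Fin p → ℝ) × (Fin n → ℝ),
        ((∏ t, prior (z.1 t)) * lik z.2 (z.1 i)) *
          Real.log (((m+1 : ℕ) : ℝ)⁻¹ * (∑ t, lik z.2 (z.1 t)) / ev z.2)
        ∂((volume : Measure (Fin (m+1) → Fin p → ℝ)).prod (volume : Measure (Fin n → ℝ))) := by
    have h1 : ∫ z : (Fin (m+1) → Fin p → ℝ) × (Fin n → ℝ),
        ((∏ t, prior (z.1 t)) * (((m+1 : ℕ) : ℝ)⁻¹ * ∑ t, lik z.2 (z.1 t))) *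
          Real.log (((m+1 : ℕ) : ℝ)⁻¹ * (∑ t, lik z.2 (z.1 t)) / ev z.2)
        ∂((volume : Measure (Fin (m+1) → Fin p → ℝ)).prod (volume : Measure (Fin n → ℝ)))
        = ∫ z : (Fin (m+1) → Fin p → ℝ) × (Fin n → ℝ),
          ((m+1 : ℕ) : ℝ)⁻¹ * ∑ j : Fin (m+1), ((∏ t, prior (z.1 t)) * lik z.2 (z.1 j)) *
            Real.log (((m+1 : ℕ) : ℝ)⁻¹ * (∑ t, lik z.2 (z.1 t)) / ev z.2)
          ∂((volume : Measure (Fin (m+1) → Fin p → ℝ)).prod (volume : Measure (Fin n → ℝ))) := by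
      refine integral_congr_ae (Filter.Eventually.of_forall fun z => ?_)
      simp only [← Finset.sum_mul, ← Finset.mul_sum]
      ring
    rw [h1, integral_const_mul,
      integral_finset_sum _ (fun j (_ : j ∈ Finset.univ) => hgj_int j)]
    rw [Finset.sum_congr rfl (fun j (_ : j ∈ Finset.univ) => hgj_val j), Finset.sum_const,
      Finset.card_univ, Fintype.card_fin, nsmul_eq_mul, ← mul_assoc]
    rw [inv_mul_cancel₀ hMne, one_mul]
  -- the pointwise lower bound
  have hlow : (fun z : (Fin (m+1) → Fin p → ℝ) × (Fin n → ℝ) =>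
      (∏ t, prior (z.1 t)) * (((m+1 : ℕ) : ℝ)⁻¹ * ∑ t, lik z.2 (z.1 t))
      - (∏ t, prior (z.1 t)) * ev z.2)
      ≤ᵐ[((volume : Measure (Fin (m+1) → Fin p → ℝ)).prod (volume : Measure (Fin n → ℝ)))]
      (fun z : (Fin (m+1) → Fin p → ℝ) × (Fin n → ℝ) =>
        ((∏ t, prior (z.1 t)) * (((m+1 : ℕ) : ℝ)⁻¹ * ∑ t, lik z.2 (z.1 t))) *
          Real.log (((m+1 : ℕ) : ℝ)⁻¹ * (∑ t, lik z.2 (z.1 t)) / ev z.2)) := by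
    have hball : ∀ᵐ z : (Fin (m+1) → Fin p → ℝ) × (Fin n → ℝ)
        ∂((volume : Measure (Fin (m+1) → Fin p → ℝ)).prod (volume : Measure (Fin n → ℝ))),
        ∀ j : Fin (m+1), ev z.2 = 0 → lik z.2 (z.1 j) * prior (z.1 j) = 0 :=
      ae_all_iff.2 hbadΩ
    filter_upwards [hball] with z hz
    have hPnn : (0:ℝ) ≤ ∏ t, prior (z.1 t) := Finset.prod_nonneg fun t _ => hprior_nonneg _
    have hSignn : (0:ℝ) ≤ ∑ t, lik z.2 (z.1 t) := Finset.sum_nonneg fun t _ => hlik_nonneg _ _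
    have hEnn : (0:ℝ) ≤ ev z.2 := hev_nonneg z.2
    rcases eq_or_lt_of_le hSignn with hSig0 | hSigpos
    · rw [← hSig0]
      nlinarith [mul_nonneg hPnn hEnn]
    · obtain ⟨j, hj⟩ : ∃ j : Fin (m+1), 0 < lik z.2 (z.1 j) := by
        by_contra hall
        push_neg at hall
        have h2 : ∑ t, lik z.2 (z.1 t) ≤ 0 :=
          Finset.sum_nonpos fun t _ => hall t
        linarith
      rcases eq_or_lt_of_le hPnn with hP0 | hPpos
      · rw [← hP0]
        nlinarith
      · have hpri : prior (z.1 j) ≠ 0 := by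
          intro h0
          have h1 : (∏ t, prior (z.1 t)) = 0 := Finset.prod_eq_zero (Finset.mem_univ j) h0
          rw [h1] at hPpos
          exact lt_irrefl _ hPpos
        have hE : ev z.2 ≠ 0 := fun h0 => (mul_ne_zero (ne_of_gt hj) hpri) (hz j h0)
        have hEpos : 0 < ev z.2 := hEnn.lt_of_ne (Ne.symm hE)
        have hSpos : 0 < ((m+1 : ℕ) : ℝ)⁻¹ * ∑ t, lik z.2 (z.1 t) :=
          mul_pos (by positivity) hSigpos
        have key : ∀ s e : ℝ, 0 < s → 0 < e → s - e ≤ s * Real.log (s / e) := by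
          intro s e hs he
          have hlog : Real.log (e / s) ≤ e / s - 1 := Real.log_le_sub_one_of_pos (div_pos he hs)
          have h1 : Real.log (e / s) = Real.log e - Real.log s :=
            Real.log_div (ne_of_gt he) (ne_of_gt hs)
          have h2 : Real.log (s / e) = Real.log s - Real.log e :=
            Real.log_div (ne_of_gt hs) (ne_of_gt he)
          have h3 : s * (e / s) = e := by field_simp
          nlinarith [mul_le_mul_of_nonneg_left hlog (le_of_lt hs)]
        have hkey := key _ _ hSpos hEpos
        nlinarith [mul_le_mul_of_nonneg_left hkey (le_of_lt hPpos)]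
  -- ∫ g ≥ 0
  have hg_nonneg : (0:ℝ) ≤ ∫ z : (Fin (m+1) → Fin p → ℝ) × (Fin n → ℝ),
      ((∏ t, prior (z.1 t)) * lik z.2 (z.1 i)) *
        Real.log (((m+1 : ℕ) : ℝ)⁻¹ * (∑ t, lik z.2 (z.1 t)) / ev z.2)
      ∂((volume : Measure (Fin (m+1) → Fin p → ℝ)).prod (volume : Measure (Fin n → ℝ))) := by
    have h1 : ∫ z : (Fin (m+1) → Fin p → ℝ) × (Fin n → ℝ),
        ((∏ t, prior (z.1 t)) * (((m+1 : ℕ) : ℝ)⁻¹ * ∑ t, lik z.2 (z.1 t))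
          - (∏ t, prior (z.1 t)) * ev z.2)
        ∂((volume : Measure (Fin (m+1) → Fin p → ℝ)).prod (volume : Measure (Fin n → ℝ))) = 0 := by
      have h0 : ∫ z : (Fin (m+1) → Fin p → ℝ) × (Fin n → ℝ),
          ((∏ t, prior (z.1 t)) * (((m+1 : ℕ) : ℝ)⁻¹ * ∑ t, lik z.2 (z.1 t))
            - (∏ t, prior (z.1 t)) * ev z.2)
          ∂((volume : Measure (Fin (m+1) → Fin p → ℝ)).prod (volume : Measure (Fin n → ℝ)))
          = (∫ z : (Fin (m+1) → Fin p → ℝ) × (Fin n → ℝ),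
              (∏ t, prior (z.1 t)) * (((m+1 : ℕ) : ℝ)⁻¹ * ∑ t, lik z.2 (z.1 t))
              ∂((volume : Measure (Fin (m+1) → Fin p → ℝ)).prod (volume : Measure (Fin n → ℝ))))
            - ∫ z : (Fin (m+1) → Fin p → ℝ) × (Fin n → ℝ),
              (∏ t, prior (z.1 t)) * ev z.2
              ∂((volume : Measure (Fin (m+1) → Fin p → ℝ)).prod (volume : Measure (Fin n → ℝ))) :=
        integral_sub hPS_int hPev_int
      rw [h0, hPS_one, hPev_one, sub_self]
    have hdiff_int : Integrable (fun z : (Fin (m+1) → Fin p → ℝ) × (Fin n → ℝ) =>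
        (∏ t, prior (z.1 t)) * (((m+1 : ℕ) : ℝ)⁻¹ * ∑ t, lik z.2 (z.1 t))
        - (∏ t, prior (z.1 t)) * ev z.2)
        ((volume : Measure (Fin (m+1) → Fin p → ℝ)).prod (volume : Measure (Fin n → ℝ))) :=
      hPS_int.sub hPev_int
    have h2 := integral_mono_ae hdiff_int hh_int hlow
    rw [h1] at h2
    linarith [hh_val, h2]
  constructor
  · rw [hMI_val]
    linarith
  · -- second bound : LPCE ≤ log (m+1)
    have hub : ∀ z : (Fin (m+1) → Fin p → ℝ) × (Fin n → ℝ),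
        ((∏ t, prior (z.1 t)) * lik z.2 (z.1 i)) *
          Real.log (lik z.2 (z.1 i) / (((m+1 : ℕ) : ℝ)⁻¹ * ∑ t, lik z.2 (z.1 t)))
        ≤ ((∏ t, prior (z.1 t)) * lik z.2 (z.1 i)) * Real.log ((m+1 : ℕ) : ℝ) := by
      intro z
      have hwnn : (0:ℝ) ≤ (∏ t, prior (z.1 t)) * lik z.2 (z.1 i) :=
        mul_nonneg (Finset.prod_nonneg fun t _ => hprior_nonneg _) (hlik_nonneg _ _)
      rcases eq_or_lt_of_le hwnn with h | h
      · rw [← h]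
        simp
      · have hL : 0 < lik z.2 (z.1 i) := by
          rcases (hlik_nonneg z.2 (z.1 i)).lt_or_eq with h' | h'
          · exact h'
          · exfalso
            rw [← h'] at h
            simp at h
        have hSig : 0 < ∑ t, lik z.2 (z.1 t) :=
          lt_of_lt_of_le hL (Finset.single_le_sum (fun t _ => hlik_nonneg _ _) (Finset.mem_univ i))
        have hSpos : 0 < ((m+1 : ℕ) : ℝ)⁻¹ * ∑ t, lik z.2 (z.1 t) := mul_pos (by positivity) hSig
        refine mul_le_mul_of_nonneg_left ?_ hwnn
        have hdiv : lik z.2 (z.1 i) / (((m+1 : ℕ) : ℝ)⁻¹ * ∑ t, lik z.2 (z.1 t))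
            ≤ ((m+1 : ℕ) : ℝ) := by
          rw [div_le_iff₀ hSpos, ← mul_assoc, mul_inv_cancel₀ hMne, one_mul]
          exact Finset.single_le_sum (fun t _ => hlik_nonneg _ _) (Finset.mem_univ i)
        exact Real.log_le_log (div_pos hL hSpos) hdiv
    rw [hLPCE']
    calc ∫ z : (Fin (m+1) → Fin p → ℝ) × (Fin n → ℝ),
        ((∏ t, prior (z.1 t)) * lik z.2 (z.1 i)) *
          Real.log (lik z.2 (z.1 i) / (((m+1 : ℕ) : ℝ)⁻¹ * ∑ t, lik z.2 (z.1 t)))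
        ∂((volume : Measure (Fin (m+1) → Fin p → ℝ)).prod (volume : Measure (Fin n → ℝ)))
        ≤ ∫ z : (Fin (m+1) → Fin p → ℝ) × (Fin n → ℝ),
          ((∏ t, prior (z.1 t)) * lik z.2 (z.1 i)) * Real.log ((m+1 : ℕ) : ℝ)
          ∂((volume : Measure (Fin (m+1) → Fin p → ℝ)).prod (volume : Measure (Fin n → ℝ))) :=
        integral_mono hIntL' (hw_int.mul_const _) hub
      _ = Real.log ((m+1 : ℕ) : ℝ) := by
        rw [integral_mul_const, hw_one, one_mul]
end

section
/- (Adaptive contrastive estimation bound.) Fix an integer M ≥ 1 and a jointly measurable family q(θ|y) of probability densities on ℝ^p with q(θ|y) > 0 wherever p(y|θ) p_Θ(θ) > 0. Let Θ_1 ∼ p_Θ, let Y_1 have conditional density p(·|Θ_1) given Θ_1, and, conditionally on Y_1, let Θ_2, …, Θ_M be i.i.d. with density q(·|Y_1). Define L^ACE(M,q) = E[ log( p(Y_1|Θ_1) / ( (1/M) Σ_{j=1}^M p(Y_1|Θ_j) p_Θ(Θ_j)/q(Θ_j|Y_1) ) ) ]. Then L^ACE(M,q) ≤ I(Y;Θ),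 and if q(θ|y) equals the posterior density p(θ|y) then L^ACE(M,q) = I(Y;Θ) for every M. -/
open MeasureTheory Real
open scoped ENNReal NNReal

private lemma integrable_of_integral_eq_one' {α : Type*} [MeasurableSpace α] {μ : Measure α}
    {f : α → ℝ} (h : ∫ x, f x ∂μ = 1) : Integrable f μ := by
  by_contra hc
  rw [integral_undef hc] at h
  exact zero_ne_one h

private lemma lintegral_ofReal_eq_one' {α : Type*} [MeasurableSpace α] {μ : Measure α}
    {f : α → ℝ} (hf : ∀ x, 0 ≤ f x) (h : ∫ x, f x ∂μ = 1) :
    ∫⁻ x, ENNReal.ofReal (f x) ∂μ = 1 := by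
  rw [← ofReal_integral_eq_lintegral_ofReal (integrable_of_integral_eq_one' h)
    (Filter.Eventually.of_forall hf), h, ENNReal.ofReal_one]

private lemma erase_eq_image_succAbove' {m : ℕ} (i : Fin (m + 1)) :
    Finset.univ.erase i = Finset.image i.succAbove Finset.univ := by
  ext x
  simp only [Finset.mem_erase, Finset.mem_univ, and_true, Finset.mem_image, true_and]
  constructor
  · exact fun hx => Fin.exists_succAbove_eq hx
  · rintro ⟨k, rfl⟩; exact Fin.succAbove_ne i k

private lemma prod_erase_succAbove' {m : ℕ} {β : Type*} [CommMonoid β] (i : Fin (m + 1))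
    (g : Fin (m + 1) → β) :
    ∏ j ∈ Finset.univ.erase i, g j = ∏ k : Fin m, g (i.succAbove k) := by
  rw [erase_eq_image_succAbove', Finset.prod_image]
  intro a _ b _ hab
  exact Fin.succAbove_right_injective hab

set_option maxHeartbeats 1000000 in
/-- Adaptive contrastive estimation bound: With `Θ_1 ∼ p_Θ`,
`Y_1 | Θ_1` from the likelihood, and, conditionally on `Y_1`, `Θ_2, …, Θ_M`
i.i.d. from a biasing density `q(·|Y_1)` (positive wherever the joint density
is positive),
`L^ACE(M,q) = E[log (p(Y_1|Θ_1) / ((1/M) Σ_j p(Y_1|Θ_j) p_Θ(Θ_j)/q(Θ_j|Y_1)))]`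
satisfies `L^ACE(M,q) ≤ I(Y;Θ)`, with equality for every `M` when `q` equals
the posterior density. -/
theorem stmt_10
    (n p : ℕ)
    (M : ℕ) (hM : 1 ≤ M)
    (prior : (Fin p → ℝ) → ℝ)
    (lik : (Fin n → ℝ) → (Fin p → ℝ) → ℝ)
    (hprior_meas : Measurable prior)
    (hprior_nonneg : ∀ θ, 0 ≤ prior θ)
    (hprior_one : ∫ θ, prior θ = 1)
    (hlik_meas : Measurable (fun z : (Fin n → ℝ) × (Fin p → ℝ) => lik z.1 z.2))
    (hlik_nonneg : ∀ y θ, 0 ≤ lik y θ)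
    (hlik_one : ∀ θ, ∫ y, lik y θ = 1)
    (joint : (Fin n → ℝ) → (Fin p → ℝ) → ℝ)
    (hjoint : ∀ y θ, joint y θ = lik y θ * prior θ)
    (ev : (Fin n → ℝ) → ℝ)
    (hev : ∀ y, ev y = ∫ θ, lik y θ * prior θ)
    (post : (Fin p → ℝ) → (Fin n → ℝ) → ℝ)
    (hpost : ∀ θ y, post θ y = lik y θ * prior θ / ev y)
    (q : (Fin p → ℝ) → (Fin n → ℝ) → ℝ)
    (hq_meas : Measurable (fun z : (Fin p → ℝ) × (Fin n → ℝ) => q z.1 z.2))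
    (hq_nonneg : ∀ θ y, 0 ≤ q θ y)
    (hq_one : ∀ y, ∫ θ, q θ y = 1)
    (hq_pos : ∀ θ y, 0 < lik y θ * prior θ → 0 < q θ y)
    (MI : ℝ)
    (hMI : MI = ∫ y, ∫ θ, joint y θ * Real.log (joint y θ / (ev y * prior θ)))
    (hIntMI : Integrable (fun z : (Fin n → ℝ) × (Fin p → ℝ) =>
      joint z.1 z.2 * Real.log (joint z.1 z.2 / (ev z.1 * prior z.2))))
    (LACE : ℝ)
    (hLACE : LACE = ∫ y : Fin n → ℝ, ∫ θs : Fin M → (Fin p → ℝ),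
      (prior (θs ⟨0, hM⟩) * lik y (θs ⟨0, hM⟩) *
          ∏ j ∈ Finset.univ.erase (⟨0, hM⟩ : Fin M), q (θs j) y) *
        Real.log (lik y (θs ⟨0, hM⟩) /
          ((M : ℝ)⁻¹ * ∑ j, lik y (θs j) * prior (θs j) / q (θs j) y)))
    (hIntL : Integrable (fun z : (Fin n → ℝ) × (Fin M → (Fin p → ℝ)) =>
      (prior (z.2 ⟨0, hM⟩) * lik z.1 (z.2 ⟨0, hM⟩) *
          ∏ j ∈ Finset.univ.erase (⟨0, hM⟩ : Fin M), q (z.2 j) z.1) *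
        Real.log (lik z.1 (z.2 ⟨0, hM⟩) /
          ((M : ℝ)⁻¹ * ∑ j, lik z.1 (z.2 j) * prior (z.2 j) / q (z.2 j) z.1)))) :
    LACE ≤ MI ∧ ((∀ θ y, q θ y = post θ y) → LACE = MI) := by
  obtain ⟨m, rfl⟩ : ∃ m', M = m' + 1 := ⟨M - 1, (Nat.succ_pred_eq_of_pos hM).symm⟩
  set i0 : Fin (m + 1) := ⟨0, hM⟩ with hi0def
  set S : (Fin n → ℝ) × (Fin (m + 1) → (Fin p → ℝ)) → ℝ :=
    fun z => ((m + 1 : ℕ) : ℝ)⁻¹ * ∑ j, lik z.1 (z.2 j) * prior (z.2 j) / q (z.2 j) z.1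
    with hSdef
  set w : (Fin n → ℝ) × (Fin (m + 1) → (Fin p → ℝ)) → ℝ :=
    fun z => prior (z.2 i0) * lik z.1 (z.2 i0) * ∏ j ∈ Finset.univ.erase i0, q (z.2 j) z.1
    with hwdef
  set L : (Fin n → ℝ) × (Fin (m + 1) → (Fin p → ℝ)) → ℝ :=
    fun z => w z * Real.log (lik z.1 (z.2 i0) / S z) with hLdef
  set f : (Fin n → ℝ) × (Fin p → ℝ) → ℝ :=
    fun z => joint z.1 z.2 * Real.log (joint z.1 z.2 / (ev z.1 * prior z.2)) with hfdef
  set A : (Fin n → ℝ) × (Fin (m + 1) → (Fin p → ℝ)) → ℝ :=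
    fun z => f (z.1, z.2 i0) * ∏ j ∈ Finset.univ.erase i0, q (z.2 j) z.1 with hAdef
  set K : (Fin n → ℝ) × (Fin (m + 1) → (Fin p → ℝ)) → ℝ :=
    fun z => w z * (ev z.1 / S z) with hKdef
  -- basic measurability
  have mθ : ∀ j, Measurable fun z : (Fin n → ℝ) × (Fin (m + 1) → (Fin p → ℝ)) => z.2 j :=
    fun j => (measurable_pi_apply j).comp measurable_snd
  have mlik : ∀ j, Measurable fun z : (Fin n → ℝ) × (Fin (m + 1) → (Fin p → ℝ)) =>
      lik z.1 (z.2 j) := fun j => hlik_meas.comp (measurable_fst.prodMk (mθ j))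
  have mprior : ∀ j, Measurable fun z : (Fin n → ℝ) × (Fin (m + 1) → (Fin p → ℝ)) =>
      prior (z.2 j) := fun j => hprior_meas.comp (mθ j)
  have mq : ∀ j, Measurable fun z : (Fin n → ℝ) × (Fin (m + 1) → (Fin p → ℝ)) =>
      q (z.2 j) z.1 := fun j => hq_meas.comp ((mθ j).prodMk measurable_fst)
  have mlp : Measurable fun z : (Fin n → ℝ) × (Fin p → ℝ) => lik z.1 z.2 * prior z.2 :=
    hlik_meas.mul (hprior_meas.comp measurable_snd)
  have mev : Measurable ev := by
    have : ev = fun y => ∫ θ, (fun z : (Fin n → ℝ) × (Fin p → ℝ) => lik z.1 z.2 * prior z.2) (y, θ) :=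
      funext hev
    rw [this]
    exact mlp.stronglyMeasurable.integral_prod_right'.measurable
  have mr : ∀ j, Measurable fun z : (Fin n → ℝ) × (Fin (m + 1) → (Fin p → ℝ)) =>
      lik z.1 (z.2 j) * prior (z.2 j) / q (z.2 j) z.1 :=
    fun j => ((mlik j).mul (mprior j)).div (mq j)
  have mS : Measurable S :=
    measurable_const.mul (Finset.measurable_sum Finset.univ fun j _ => mr j)
  have mqprod : Measurable fun z : (Fin n → ℝ) × (Fin (m + 1) → (Fin p → ℝ)) =>
      ∏ j ∈ Finset.univ.erase i0, q (z.2 j) z.1 :=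
    Finset.measurable_prod _ fun j _ => mq j
  have mw : Measurable w := (((mprior i0).mul (mlik i0)).mul mqprod)
  have mjoint : Measurable fun z : (Fin n → ℝ) × (Fin p → ℝ) => joint z.1 z.2 := by
    have : (fun z : (Fin n → ℝ) × (Fin p → ℝ) => joint z.1 z.2)
        = fun z => lik z.1 z.2 * prior z.2 := funext fun z => hjoint _ _
    rw [this]; exact mlp
  have mf : Measurable f :=
    mjoint.mul ((mjoint.div ((mev.comp measurable_fst).mul
      (hprior_meas.comp measurable_snd))).log)
  have mA : Measurable A :=
    (mf.comp (measurable_fst.prodMk (mθ i0))).mul mqprod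
  have mK : Measurable K := mw.mul ((mev.comp measurable_fst).div mS)
  have mL : Measurable L := mw.mul (((mlik i0).div mS).log)
  -- nonnegativity
  have hr_nonneg : ∀ j (z : (Fin n → ℝ) × (Fin (m + 1) → (Fin p → ℝ))),
      0 ≤ lik z.1 (z.2 j) * prior (z.2 j) / q (z.2 j) z.1 :=
    fun j z => div_nonneg (mul_nonneg (hlik_nonneg _ _) (hprior_nonneg _)) (hq_nonneg _ _)
  have hS_nonneg : ∀ z, 0 ≤ S z := fun z =>
    mul_nonneg (by positivity) (Finset.sum_nonneg fun j _ => hr_nonneg j z)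
  have hw_nonneg : ∀ z, 0 ≤ w z := fun z =>
    mul_nonneg (mul_nonneg (hprior_nonneg _) (hlik_nonneg _ _))
      (Finset.prod_nonneg fun j _ => hq_nonneg _ _)
  have hev_nonneg : ∀ y, 0 ≤ ev y := fun y => by
    rw [hev]
    exact integral_nonneg fun θ => mul_nonneg (hlik_nonneg _ _) (hprior_nonneg _)
  have hK_nonneg : ∀ z, 0 ≤ K z := fun z =>
    mul_nonneg (hw_nonneg z) (div_nonneg (hev_nonneg _) (hS_nonneg z))
  -- integrable versions of the statement hypotheses, over the explicit product measure
  have hIntL' : Integrable L ((volume : Measure (Fin n → ℝ)).prod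
      (volume : Measure (Fin (m + 1) → (Fin p → ℝ)))) := hIntL
  have hLACE' : LACE = ∫ z, L z ∂((volume : Measure (Fin n → ℝ)).prod
      (volume : Measure (Fin (m + 1) → (Fin p → ℝ)))) := by
    rw [integral_prod _ hIntL']; exact hLACE
  have hIntMI' : Integrable f ((volume : Measure (Fin n → ℝ)).prod
      (volume : Measure (Fin p → ℝ))) := hIntMI
  have hMI' : MI = ∫ z, f z ∂((volume : Measure (Fin n → ℝ)).prod
      (volume : Measure (Fin p → ℝ))) := by
    rw [integral_prod _ hIntMI']; exact hMI
  -- integrability of the densities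
  have hIntQ : ∀ y, Integrable (fun θ => q θ y) volume := fun y =>
    integrable_of_integral_eq_one' (hq_one y)
  have hQl : ∀ y, ∫⁻ θ, ENNReal.ofReal (q θ y) = 1 := fun y =>
    lintegral_ofReal_eq_one' (fun θ => hq_nonneg θ y) (hq_one y)
  -- product of q densities over Fin m
  have hQprodm_one : ∀ y, ∫ rs : Fin m → (Fin p → ℝ), ∏ k, q (rs k) y = 1 := by
    intro y
    rw [volume_pi, MeasureTheory.integral_fintype_prod_eq_prod (ι := Fin m) (fun _ a => q a y)]
    simp [hq_one y]
  have hQprodm_lone : ∀ y, ∫⁻ rs : Fin m → (Fin p → ℝ),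
      ENNReal.ofReal (∏ k, q (rs k) y) = 1 := fun y =>
    lintegral_ofReal_eq_one' (fun rs => Finset.prod_nonneg fun k _ => hq_nonneg _ _)
      (hQprodm_one y)
  have hQprodM_one : ∀ y, ∫ θs : Fin (m + 1) → (Fin p → ℝ), ∏ k, q (θs k) y = 1 := by
    intro y
    rw [volume_pi, MeasureTheory.integral_fintype_prod_eq_prod (ι := Fin (m + 1)) (fun _ a => q a y)]
    simp [hq_one y]
  have hQprodM_lone : ∀ y, ∫⁻ θs : Fin (m + 1) → (Fin p → ℝ),
      ENNReal.ofReal (∏ k, q (θs k) y) = 1 := fun y =>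
    lintegral_ofReal_eq_one' (fun θs => Finset.prod_nonneg fun k _ => hq_nonneg _ _)
      (hQprodM_one y)
  -- Tonelli for the joint density
  have mlp_y : ∀ y, Measurable fun θ => lik y θ * prior θ := fun y =>
    (hlik_meas.comp (measurable_const.prodMk measurable_id)).mul hprior_meas
  have mlik_t : ∀ θ, Measurable fun y => lik y θ := fun θ =>
    hlik_meas.comp (measurable_id.prodMk measurable_const)
  have hPriorl : ∫⁻ θ, ENNReal.ofReal (prior θ) = 1 :=
    lintegral_ofReal_eq_one' hprior_nonneg hprior_one
  have hLikl : ∀ θ, ∫⁻ y, ENNReal.ofReal (lik y θ) = 1 := fun θ =>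
    lintegral_ofReal_eq_one' (fun y => hlik_nonneg y θ) (hlik_one θ)
  have hJ : ∫⁻ y, ∫⁻ θ, ENNReal.ofReal (lik y θ * prior θ) = 1 := by
    have hm : AEMeasurable (Function.uncurry fun y θ => ENNReal.ofReal (lik y θ * prior θ))
        ((volume : Measure (Fin n → ℝ)).prod (volume : Measure (Fin p → ℝ))) :=
      (ENNReal.measurable_ofReal.comp mlp).aemeasurable
    rw [lintegral_lintegral_swap hm]
    have inner : ∀ θ, ∫⁻ y, ENNReal.ofReal (lik y θ * prior θ) = ENNReal.ofReal (prior θ) := by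
      intro θ
      calc ∫⁻ y, ENNReal.ofReal (lik y θ * prior θ)
          = ∫⁻ y, ENNReal.ofReal (lik y θ) * ENNReal.ofReal (prior θ) :=
            lintegral_congr fun y => ENNReal.ofReal_mul (hlik_nonneg y θ)
        _ = (∫⁻ y, ENNReal.ofReal (lik y θ)) * ENNReal.ofReal (prior θ) :=
            lintegral_mul_const _ (ENNReal.measurable_ofReal.comp (mlik_t θ))
        _ = ENNReal.ofReal (prior θ) := by rw [hLikl θ, one_mul]
    rw [lintegral_congr inner, hPriorl]
  have haeInt : ∀ᵐ y : Fin n → ℝ, Integrable (fun θ => lik y θ * prior θ) volume := by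
    have hmint : Measurable fun y => ∫⁻ θ, ENNReal.ofReal (lik y θ * prior θ) :=
      (ENNReal.measurable_ofReal.comp mlp).lintegral_prod_right'
    have hfin : ∀ᵐ y : Fin n → ℝ, (∫⁻ θ, ENNReal.ofReal (lik y θ * prior θ)) < ⊤ :=
      ae_lt_top hmint (by rw [hJ]; exact ENNReal.one_ne_top)
    filter_upwards [hfin] with y hy
    exact ⟨(mlp_y y).aestronglyMeasurable,
      (hasFiniteIntegral_iff_ofReal (Filter.Eventually.of_forall fun θ =>
        mul_nonneg (hlik_nonneg _ _) (hprior_nonneg _))).2 hy⟩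
  have haeEvl : ∀ᵐ y : Fin n → ℝ,
      ENNReal.ofReal (ev y) = ∫⁻ θ, ENNReal.ofReal (lik y θ * prior θ) := by
    filter_upwards [haeInt] with y hy
    rw [hev y]
    exact ofReal_integral_eq_lintegral_ofReal hy (Filter.Eventually.of_forall fun θ =>
      mul_nonneg (hlik_nonneg _ _) (hprior_nonneg _))
  have hEvl : ∫⁻ y, ENNReal.ofReal (ev y) = 1 := by
    rw [lintegral_congr_ae haeEvl]; exact hJ
  -- the exceptional null set
  have hNnull : ((volume : Measure (Fin n → ℝ)).prod
      (volume : Measure (Fin (m + 1) → (Fin p → ℝ))))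
      {z | 0 < lik z.1 (z.2 i0) * prior (z.2 i0) ∧ ev z.1 = 0} = 0 := by
    have hNm : MeasurableSet {z : (Fin n → ℝ) × (Fin (m + 1) → (Fin p → ℝ)) |
        0 < lik z.1 (z.2 i0) * prior (z.2 i0) ∧ ev z.1 = 0} := by
      refine (measurableSet_lt measurable_const ((mlik i0).mul (mprior i0))).inter ?_
      exact (mev.comp measurable_fst) (measurableSet_singleton 0)
    rw [Measure.measure_prod_null hNm]
    filter_upwards [haeInt] with y hy
    by_cases hevy : ev y = 0
    · have hsec : (Prod.mk y ⁻¹' {z : (Fin n → ℝ) × (Fin (m + 1) → (Fin p → ℝ)) |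
          0 < lik z.1 (z.2 i0) * prior (z.2 i0) ∧ ev z.1 = 0})
          = Function.eval i0 ⁻¹' {θ : Fin p → ℝ | 0 < lik y θ * prior θ} := by
        ext θs
        simp [hevy, Function.eval]
      have hA0 : (volume : Measure (Fin p → ℝ)) {θ : Fin p → ℝ | 0 < lik y θ * prior θ} = 0 := by
        have hint0 : ∫ θ, lik y θ * prior θ = 0 := (hev y).symm.trans hevy
        have h0 : (fun θ => lik y θ * prior θ) =ᵐ[volume] 0 :=
          (integral_eq_zero_iff_of_nonneg (fun θ =>
            mul_nonneg (hlik_nonneg _ _) (hprior_nonneg _)) hy).1 hint0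
        refine measure_mono_null (fun θ hθ => ?_) (ae_iff.1 h0)
        exact ne_of_gt hθ
      show (volume : Measure (Fin (m + 1) → (Fin p → ℝ))) _ = 0
      rw [hsec, volume_pi]
      exact Measure.pi_eval_preimage_null _ hA0
    · have hsec : (Prod.mk y ⁻¹' {z : (Fin n → ℝ) × (Fin (m + 1) → (Fin p → ℝ)) |
          0 < lik z.1 (z.2 i0) * prior (z.2 i0) ∧ ev z.1 = 0}) = ∅ := by
        ext θs; simp [hevy]
      show (volume : Measure (Fin (m + 1) → (Fin p → ℝ))) _ = 0
      rw [hsec]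
      simp
  -- the weight w integrates to 1
  have hwl : ∫⁻ z, ENNReal.ofReal (w z) ∂((volume : Measure (Fin n → ℝ)).prod
      (volume : Measure (Fin (m + 1) → (Fin p → ℝ)))) = 1 := by
    rw [lintegral_prod (fun z => ENNReal.ofReal (w z)) ((ENNReal.measurable_ofReal.comp mw).aemeasurable)]
    have key : ∀ᵐ y : Fin n → ℝ, ∫⁻ θs : Fin (m + 1) → (Fin p → ℝ),
        ENNReal.ofReal (w (y, θs)) = ENNReal.ofReal (ev y) := by
      filter_upwards [haeInt] with y hy
      classical
      set G : Fin (m + 1) → (Fin p → ℝ) → ℝ :=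
        fun j => if j = i0 then (fun a => prior a * lik y a) else (fun a => q a y) with hGdef
      have hGnn : ∀ j a, 0 ≤ G j a := by
        intro j a; by_cases hj : j = i0 <;>
          simp [hGdef, hj, mul_nonneg (hprior_nonneg _) (hlik_nonneg _ _), hq_nonneg]
      have hGint : ∀ j, Integrable (G j) volume := by
        intro j; by_cases hj : j = i0
        · simpa [hGdef, hj] using
            hy.congr (Filter.Eventually.of_forall fun a => (mul_comm (lik y a) (prior a)))
        · simpa [hGdef, hj] using hIntQ y
      have hwe : ∀ θs : Fin (m + 1) → (Fin p → ℝ), w (y, θs) = ∏ j, G j (θs j) := by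
        intro θs
        have h1 : ∏ j ∈ Finset.univ.erase i0, q (θs j) y
            = ∏ j ∈ Finset.univ.erase i0, G j (θs j) :=
          Finset.prod_congr rfl fun j hj => by simp [hGdef, (Finset.mem_erase.1 hj).1]
        calc w (y, θs)
            = prior (θs i0) * lik y (θs i0) * ∏ j ∈ Finset.univ.erase i0, q (θs j) y := rfl
          _ = G i0 (θs i0) * ∏ j ∈ Finset.univ.erase i0, G j (θs j) := by
              rw [h1]; simp [hGdef]
          _ = ∏ j, G j (θs j) := Finset.mul_prod_erase Finset.univ (fun j => G j (θs j)) (Finset.mem_univ i0)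
      have hGprod_int : Integrable (fun θs : Fin (m + 1) → (Fin p → ℝ) => ∏ j, G j (θs j))
          volume := Integrable.fintype_prod hGint
      have hGprod_val : ∫ θs : Fin (m + 1) → (Fin p → ℝ), ∏ j, G j (θs j) = ev y := by
        rw [volume_pi, MeasureTheory.integral_fintype_prod_eq_prod (ι := Fin (m + 1)) G,
          Finset.prod_eq_single i0 (fun b _ hb => by simp [hGdef, hb, hq_one y])
            (fun h => absurd (Finset.mem_univ i0) h)]
        simp only [hGdef, if_pos rfl]
        rw [hev y]
        exact integral_congr_ae (Filter.Eventually.of_forall fun a => mul_comm _ _)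
      calc ∫⁻ θs : Fin (m + 1) → (Fin p → ℝ), ENNReal.ofReal (w (y, θs))
          = ∫⁻ θs : Fin (m + 1) → (Fin p → ℝ), ENNReal.ofReal (∏ j, G j (θs j)) :=
            lintegral_congr fun θs => by rw [hwe]
        _ = ENNReal.ofReal (∫ θs : Fin (m + 1) → (Fin p → ℝ), ∏ j, G j (θs j)) :=
            (ofReal_integral_eq_lintegral_ofReal hGprod_int (Filter.Eventually.of_forall
              fun θs => Finset.prod_nonneg fun j _ => hGnn j _)).symm
        _ = ENNReal.ofReal (ev y) := by rw [hGprod_val]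
    rw [lintegral_congr_ae key, hEvl]
  have hwInt : Integrable w ((volume : Measure (Fin n → ℝ)).prod
      (volume : Measure (Fin (m + 1) → (Fin p → ℝ)))) := by
    refine ⟨mw.aestronglyMeasurable, ?_⟩
    rw [hasFiniteIntegral_iff_ofReal (Filter.Eventually.of_forall hw_nonneg), hwl]
    exact ENNReal.one_lt_top
  have hw1 : ∫ z, w z ∂((volume : Measure (Fin n → ℝ)).prod
      (volume : Measure (Fin (m + 1) → (Fin p → ℝ)))) = 1 := by
    rw [integral_eq_lintegral_of_nonneg_ae (Filter.Eventually.of_forall hw_nonneg)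
      mw.aestronglyMeasurable, hwl]
    rfl
  -- the A-functional equals MI
  set e : (Fin (m + 1) → (Fin p → ℝ)) ≃ᵐ ((Fin p → ℝ) × (Fin m → (Fin p → ℝ))) :=
    MeasurableEquiv.piFinSuccAbove (fun _ : Fin (m + 1) => (Fin p → ℝ)) i0 with hedef
  have he : MeasurePreserving e (volume : Measure (Fin (m + 1) → (Fin p → ℝ)))
      ((volume : Measure (Fin p → ℝ)).prod (volume : Measure (Fin m → (Fin p → ℝ)))) :=
    volume_preserving_piFinSuccAbove (fun _ : Fin (m + 1) => (Fin p → ℝ)) i0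
  set h2 : ((Fin n → ℝ) × (Fin p → ℝ)) × (Fin m → (Fin p → ℝ)) → ℝ :=
    fun zz => f zz.1 * ∏ k, q (zz.2 k) zz.1.1 with h2def
  have mh2 : Measurable h2 :=
    (mf.comp measurable_fst).mul (Finset.measurable_prod _ fun k _ =>
      hq_meas.comp ((((measurable_pi_apply k).comp measurable_snd).prodMk
        (measurable_fst.comp measurable_fst)) :
          Measurable fun zz : ((Fin n → ℝ) × (Fin p → ℝ)) × (Fin m → (Fin p → ℝ)) =>
            (zz.2 k, zz.1.1)))
  have h2fin : ∫⁻ zz, (‖h2 zz‖₊ : ℝ≥0∞) ∂(((volume : Measure (Fin n → ℝ)).prod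
      (volume : Measure (Fin p → ℝ))).prod (volume : Measure (Fin m → (Fin p → ℝ))))
      = ∫⁻ z, (‖f z‖₊ : ℝ≥0∞) ∂((volume : Measure (Fin n → ℝ)).prod
        (volume : Measure (Fin p → ℝ))) := by
    rw [lintegral_prod (fun zz => (‖h2 zz‖₊ : ℝ≥0∞)) (mh2.nnnorm.coe_nnreal_ennreal.aemeasurable)]
    refine lintegral_congr fun z => ?_
    have hcalc : ∀ rr : Fin m → (Fin p → ℝ), (‖h2 (z, rr)‖₊ : ℝ≥0∞)
        = (‖f z‖₊ : ℝ≥0∞) * ENNReal.ofReal (∏ k, q (rr k) z.1) := by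
      intro rr
      rw [show h2 (z, rr) = f z * ∏ k, q (rr k) z.1 from rfl, nnnorm_mul, ENNReal.coe_mul]
      congr 1
      rw [← Real.enorm_eq_ofReal (Finset.prod_nonneg fun k _ => hq_nonneg _ _), enorm_eq_nnnorm]
    simp_rw [hcalc]
    have hmq : Measurable fun rr : Fin m → (Fin p → ℝ) =>
        ENNReal.ofReal (∏ k, q (rr k) z.1) := by
      apply Measurable.ennreal_ofReal
      exact Finset.measurable_prod _ fun k _ =>
        hq_meas.comp (((measurable_pi_apply k).prodMk measurable_const) :
          Measurable fun rr : Fin m → (Fin p → ℝ) => (rr k, z.1))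
    rw [lintegral_const_mul _ hmq, hQprodm_lone z.1, mul_one]
  have h2int : Integrable h2 (((volume : Measure (Fin n → ℝ)).prod
      (volume : Measure (Fin p → ℝ))).prod (volume : Measure (Fin m → (Fin p → ℝ)))) := by
    refine ⟨mh2.aestronglyMeasurable, ?_⟩
    show (∫⁻ zz, (‖h2 zz‖₊ : ℝ≥0∞) ∂(((volume : Measure (Fin n → ℝ)).prod
      (volume : Measure (Fin p → ℝ))).prod (volume : Measure (Fin m → (Fin p → ℝ))))) < ⊤
    rw [h2fin]
    exact hIntMI'.2
  have h2val : ∫ zz, h2 zz ∂(((volume : Measure (Fin n → ℝ)).prod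
      (volume : Measure (Fin p → ℝ))).prod (volume : Measure (Fin m → (Fin p → ℝ)))) = MI := by
    rw [integral_prod _ h2int]
    have inner : ∀ z : (Fin n → ℝ) × (Fin p → ℝ),
        (∫ rr : Fin m → (Fin p → ℝ), h2 (z, rr)) = f z := by
      intro z
      calc ∫ rr : Fin m → (Fin p → ℝ), h2 (z, rr)
          = ∫ rr : Fin m → (Fin p → ℝ), f z * ∏ k, q (rr k) z.1 := rfl
        _ = f z * ∫ rr : Fin m → (Fin p → ℝ), ∏ k, q (rr k) z.1 := integral_const_mul _ _
        _ = f z := by rw [hQprodm_one z.1, mul_one]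
    rw [integral_congr_ae (Filter.Eventually.of_forall inner)]
    exact hMI'.symm
  have hΦ : MeasurePreserving (Prod.map (id : (Fin n → ℝ) → (Fin n → ℝ)) ⇑e.symm)
      ((volume : Measure (Fin n → ℝ)).prod ((volume : Measure (Fin p → ℝ)).prod
        (volume : Measure (Fin m → (Fin p → ℝ)))))
      ((volume : Measure (Fin n → ℝ)).prod
        (volume : Measure (Fin (m + 1) → (Fin p → ℝ)))) :=
    (MeasurePreserving.id volume).prod he.symm
  have hΦemb : MeasurableEmbedding (Prod.map (id : (Fin n → ℝ) → (Fin n → ℝ)) ⇑e.symm) :=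
    MeasurableEmbedding.id.prodMap e.symm.measurableEmbedding
  have hpa : MeasurePreserving (MeasurableEquiv.prodAssoc :
      (((Fin n → ℝ) × (Fin p → ℝ)) × (Fin m → (Fin p → ℝ))) ≃ᵐ
        ((Fin n → ℝ) × ((Fin p → ℝ) × (Fin m → (Fin p → ℝ)))))
      (((volume : Measure (Fin n → ℝ)).prod (volume : Measure (Fin p → ℝ))).prod
        (volume : Measure (Fin m → (Fin p → ℝ))))
      ((volume : Measure (Fin n → ℝ)).prod ((volume : Measure (Fin p → ℝ)).prod
        (volume : Measure (Fin m → (Fin p → ℝ))))) :=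
    measurePreserving_prodAssoc volume volume volume
  have hins : ∀ pr : (Fin p → ℝ) × (Fin m → (Fin p → ℝ)), e.symm pr = i0.insertNth pr.1 pr.2 := by
    intro pr
    rw [hedef, MeasurableEquiv.piFinSuccAbove_symm_apply]
    rfl
  have hAΦpa : ∀ zz : ((Fin n → ℝ) × (Fin p → ℝ)) × (Fin m → (Fin p → ℝ)),
      A (Prod.map (id : (Fin n → ℝ) → (Fin n → ℝ)) ⇑e.symm (MeasurableEquiv.prodAssoc zz))
        = h2 zz := by
    rintro ⟨⟨y, a⟩, rr⟩
    show A (y, e.symm (a, rr)) = f (y, a) * ∏ k, q (rr k) y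
    rw [show A (y, e.symm (a, rr)) = f (y, (e.symm (a, rr)) i0)
      * ∏ j ∈ Finset.univ.erase i0, q ((e.symm (a, rr)) j) y from rfl, hins (a, rr)]
    rw [Fin.insertNth_apply_same, prod_erase_succAbove' i0]
    congr 1
  have hAInt : Integrable A ((volume : Measure (Fin n → ℝ)).prod
      (volume : Measure (Fin (m + 1) → (Fin p → ℝ)))) := by
    have h1 : Integrable ((A ∘ Prod.map (id : (Fin n → ℝ) → (Fin n → ℝ)) ⇑e.symm) ∘
        ⇑(MeasurableEquiv.prodAssoc :
          (((Fin n → ℝ) × (Fin p → ℝ)) × (Fin m → (Fin p → ℝ))) ≃ᵐ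
            ((Fin n → ℝ) × ((Fin p → ℝ) × (Fin m → (Fin p → ℝ))))))
        (((volume : Measure (Fin n → ℝ)).prod (volume : Measure (Fin p → ℝ))).prod
          (volume : Measure (Fin m → (Fin p → ℝ)))) :=
      h2int.congr (Filter.Eventually.of_forall fun zz => ((hAΦpa zz).symm : _))
    exact (hΦ.integrable_comp_emb hΦemb).1
      ((hpa.integrable_comp_emb MeasurableEquiv.prodAssoc.measurableEmbedding).1 h1)
  have hAeq : ∫ z, A z ∂((volume : Measure (Fin n → ℝ)).prod
      (volume : Measure (Fin (m + 1) → (Fin p → ℝ)))) = MI := by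
    calc ∫ z, A z ∂((volume : Measure (Fin n → ℝ)).prod
        (volume : Measure (Fin (m + 1) → (Fin p → ℝ))))
        = ∫ x, A (Prod.map (id : (Fin n → ℝ) → (Fin n → ℝ)) ⇑e.symm x)
            ∂((volume : Measure (Fin n → ℝ)).prod ((volume : Measure (Fin p → ℝ)).prod
              (volume : Measure (Fin m → (Fin p → ℝ))))) := (hΦ.integral_comp hΦemb A).symm
      _ = ∫ zz, A (Prod.map (id : (Fin n → ℝ) → (Fin n → ℝ)) ⇑e.symm
            (MeasurableEquiv.prodAssoc zz))
            ∂(((volume : Measure (Fin n → ℝ)).prod (volume : Measure (Fin p → ℝ))).prod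
              (volume : Measure (Fin m → (Fin p → ℝ)))) :=
          (hpa.integral_comp MeasurableEquiv.prodAssoc.measurableEmbedding _).symm
      _ = ∫ zz, h2 zz ∂(((volume : Measure (Fin n → ℝ)).prod
            (volume : Measure (Fin p → ℝ))).prod
              (volume : Measure (Fin m → (Fin p → ℝ)))) :=
          integral_congr_ae (Filter.Eventually.of_forall hAΦpa)
      _ = MI := h2val
  -- the K-functional is bounded by 1
  have hKl : ∫⁻ z, ENNReal.ofReal (K z) ∂((volume : Measure (Fin n → ℝ)).prod
      (volume : Measure (Fin (m + 1) → (Fin p → ℝ)))) ≤ 1 := by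
    classical
    set qtot : (Fin n → ℝ) × (Fin (m + 1) → (Fin p → ℝ)) → ℝ :=
      fun z => ∏ j, q (z.2 j) z.1 with hqtotdef
    set fK : Fin (m + 1) → (Fin n → ℝ) × (Fin (m + 1) → (Fin p → ℝ)) → ℝ :=
      fun j z => qtot z * (lik z.1 (z.2 j) * prior (z.2 j) / q (z.2 j) z.1) * (ev z.1 / S z)
      with hfKdef
    have mqtot : Measurable qtot := Finset.measurable_prod _ fun j _ => mq j
    have hqtot_nonneg : ∀ z, 0 ≤ qtot z := fun z =>
      Finset.prod_nonneg fun _ _ => hq_nonneg _ _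
    have mfK : ∀ j, Measurable (fK j) := fun j => (mqtot.mul (mr j)).mul
      ((mev.comp measurable_fst).div mS)
    have mqev : Measurable fun z : (Fin n → ℝ) × (Fin (m + 1) → (Fin p → ℝ)) =>
        qtot z * ev z.1 := mqtot.mul (mev.comp measurable_fst)
    have hfK_nonneg : ∀ j z, 0 ≤ fK j z := fun j z =>
      mul_nonneg (mul_nonneg (hqtot_nonneg z) (hr_nonneg j z))
        (div_nonneg (hev_nonneg _) (hS_nonneg z))
    have hKeq : ∀ z, K z = fK i0 z := by
      intro z
      have hkey : prior (z.2 i0) * lik z.1 (z.2 i0)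
          = q (z.2 i0) z.1 * (lik z.1 (z.2 i0) * prior (z.2 i0) / q (z.2 i0) z.1) := by
        rcases eq_or_lt_of_le (hq_nonneg (z.2 i0) z.1) with h0 | hpos
        · have hlp0 : lik z.1 (z.2 i0) * prior (z.2 i0) = 0 := by
            by_contra hne
            have hpos' : 0 < lik z.1 (z.2 i0) * prior (z.2 i0) :=
              lt_of_le_of_ne (mul_nonneg (hlik_nonneg _ _) (hprior_nonneg _)) (Ne.symm hne)
            exact absurd (hq_pos _ _ hpos') (by rw [← h0]; exact lt_irrefl 0)
          rw [← h0, zero_mul]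
          linear_combination hlp0
        · field_simp
      calc K z = (prior (z.2 i0) * lik z.1 (z.2 i0)
              * ∏ j ∈ Finset.univ.erase i0, q (z.2 j) z.1) * (ev z.1 / S z) := rfl
        _ = (q (z.2 i0) z.1 * (lik z.1 (z.2 i0) * prior (z.2 i0) / q (z.2 i0) z.1)
              * ∏ j ∈ Finset.univ.erase i0, q (z.2 j) z.1) * (ev z.1 / S z) := by rw [hkey]
        _ = fK i0 z := by
            show _ = qtot z * (lik z.1 (z.2 i0) * prior (z.2 i0) / q (z.2 i0) z.1)
              * (ev z.1 / S z)
            rw [show qtot z = ∏ j, q (z.2 j) z.1 from rfl,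
              ← Finset.mul_prod_erase Finset.univ (fun j => q (z.2 j) z.1)
                (Finset.mem_univ i0)]
            ring
    have hswap : ∀ j : Fin (m + 1), ∫⁻ z, ENNReal.ofReal (fK j z) ∂((volume : Measure (Fin n → ℝ)).prod
      (volume : Measure (Fin (m + 1) → (Fin p → ℝ))))
        = ∫⁻ z, ENNReal.ofReal (fK i0 z) ∂((volume : Measure (Fin n → ℝ)).prod
      (volume : Measure (Fin (m + 1) → (Fin p → ℝ)))) := by
      intro j
      set σ : Equiv.Perm (Fin (m + 1)) := Equiv.swap i0 j with hσdef
      set τ : (Fin (m + 1) → (Fin p → ℝ)) ≃ᵐ (Fin (m + 1) → (Fin p → ℝ)) :=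
        MeasurableEquiv.piCongrLeft (fun _ : Fin (m + 1) => (Fin p → ℝ)) σ with hτdef
      have hτ : MeasurePreserving τ (volume : Measure (Fin (m + 1) → (Fin p → ℝ)))
          (volume : Measure (Fin (m + 1) → (Fin p → ℝ))) :=
        volume_measurePreserving_piCongrLeft _ σ
      have hτap : ∀ (g : Fin (m + 1) → (Fin p → ℝ)) (k), τ g k = g (σ.symm k) := by
        intro g k
        have h := Equiv.piCongrLeft_apply_apply (P := fun _ : Fin (m + 1) => (Fin p → ℝ))
          (e := σ) g (σ.symm k)
        rw [Equiv.apply_symm_apply] at h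
        rw [hτdef, MeasurableEquiv.coe_piCongrLeft]
        exact h
      have hΨ : MeasurePreserving (Prod.map (id : (Fin n → ℝ) → (Fin n → ℝ)) ⇑τ) ((volume : Measure (Fin n → ℝ)).prod
      (volume : Measure (Fin (m + 1) → (Fin p → ℝ)))) ((volume : Measure (Fin n → ℝ)).prod
      (volume : Measure (Fin (m + 1) → (Fin p → ℝ)))) :=
        (MeasurePreserving.id volume).prod hτ
      have hcomp : ∀ z, fK i0 (Prod.map (id : (Fin n → ℝ) → (Fin n → ℝ)) ⇑τ z) = fK j z := by
        rintro ⟨y, θs⟩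
        have h1 : qtot (y, τ θs) = qtot (y, θs) := by
          show (∏ k, q (τ θs k) y) = ∏ k, q (θs k) y
          calc ∏ k, q (τ θs k) y = ∏ k, q (θs (σ.symm k)) y :=
              Finset.prod_congr rfl fun k _ => by rw [hτap]
            _ = ∏ k, q (θs k) y := Equiv.prod_comp σ.symm (fun k => q (θs k) y)
        have h2 : S (y, τ θs) = S (y, θs) := by
          show ((m + 1 : ℕ) : ℝ)⁻¹ * (∑ k, lik y (τ θs k) * prior (τ θs k) / q (τ θs k) y)
            = ((m + 1 : ℕ) : ℝ)⁻¹ * ∑ k, lik y (θs k) * prior (θs k) / q (θs k) y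
          congr 1
          calc ∑ k, lik y (τ θs k) * prior (τ θs k) / q (τ θs k) y
              = ∑ k, lik y (θs (σ.symm k)) * prior (θs (σ.symm k)) / q (θs (σ.symm k)) y :=
              Finset.sum_congr rfl fun k _ => by rw [hτap]
            _ = _ := Equiv.sum_comp σ.symm
              (fun k => lik y (θs k) * prior (θs k) / q (θs k) y)
        have h3 : τ θs i0 = θs j := by
          rw [hτap]
          congr 1
        show qtot (y, τ θs) * (lik y (τ θs i0) * prior (τ θs i0) / q (τ θs i0) y)
            * (ev y / S (y, τ θs))
          = qtot (y, θs) * (lik y (θs j) * prior (θs j) / q (θs j) y) * (ev y / S (y, θs))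
        rw [h1, h2, h3]
      calc ∫⁻ z, ENNReal.ofReal (fK j z) ∂((volume : Measure (Fin n → ℝ)).prod
      (volume : Measure (Fin (m + 1) → (Fin p → ℝ))))
          = ∫⁻ z, ENNReal.ofReal
              (fK i0 (Prod.map (id : (Fin n → ℝ) → (Fin n → ℝ)) ⇑τ z)) ∂((volume : Measure (Fin n → ℝ)).prod
      (volume : Measure (Fin (m + 1) → (Fin p → ℝ)))) :=
            lintegral_congr fun z => by rw [hcomp]
        _ = ∫⁻ z, ENNReal.ofReal (fK i0 z) ∂((volume : Measure (Fin n → ℝ)).prod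
      (volume : Measure (Fin (m + 1) → (Fin p → ℝ)))) :=
            hΨ.lintegral_comp (mfK i0).ennreal_ofReal
    have hcast_pos : (0 : ℝ) < ((m + 1 : ℕ) : ℝ) := by positivity
    have hsum_le : ∀ z, ∑ j, fK j z ≤ ((m + 1 : ℕ) : ℝ) * (qtot z * ev z.1) := by
      intro z
      have hsum : ∑ j, fK j z
          = qtot z * (((m + 1 : ℕ) : ℝ) * S z) * (ev z.1 / S z) := by
        have h1 : ∑ j, fK j z
            = qtot z * (∑ j, lik z.1 (z.2 j) * prior (z.2 j) / q (z.2 j) z.1)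
              * (ev z.1 / S z) := by
          rw [show ∑ j, fK j z = ∑ j, qtot z
            * (lik z.1 (z.2 j) * prior (z.2 j) / q (z.2 j) z.1) * (ev z.1 / S z) from rfl,
            ← Finset.sum_mul, ← Finset.mul_sum]
        rw [h1]
        congr 2
        rw [show S z = ((m + 1 : ℕ) : ℝ)⁻¹
          * ∑ j, lik z.1 (z.2 j) * prior (z.2 j) / q (z.2 j) z.1 from rfl,
          mul_inv_cancel_left₀ (ne_of_gt hcast_pos)]
      rw [hsum]
      rcases eq_or_lt_of_le (hS_nonneg z) with hS0 | hSpos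
      · rw [← hS0]
        simp only [div_zero, mul_zero, zero_mul]
        exact mul_nonneg (le_of_lt hcast_pos)
          (mul_nonneg (hqtot_nonneg z) (hev_nonneg _))
      · have heq2 : qtot z * (((m + 1 : ℕ) : ℝ) * S z) * (ev z.1 / S z)
            = ((m + 1 : ℕ) : ℝ) * (qtot z * ev z.1) := by
          field_simp
        rw [heq2]
    have hbound : ∫⁻ z, ENNReal.ofReal (qtot z * ev z.1) ∂((volume : Measure (Fin n → ℝ)).prod
      (volume : Measure (Fin (m + 1) → (Fin p → ℝ)))) ≤ 1 := by
      rw [lintegral_prod (fun z => ENNReal.ofReal (qtot z * ev z.1))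
        (mqev.ennreal_ofReal.aemeasurable)]
      have inner : ∀ y, ∫⁻ θs : Fin (m + 1) → (Fin p → ℝ),
          ENNReal.ofReal (qtot (y, θs) * ev y) = ENNReal.ofReal (ev y) := by
        intro y
        have hms : Measurable fun θs : Fin (m + 1) → (Fin p → ℝ) =>
            ENNReal.ofReal (qtot (y, θs)) := by
          apply Measurable.ennreal_ofReal
          exact Finset.measurable_prod _ fun j _ =>
            hq_meas.comp (((measurable_pi_apply j).prodMk measurable_const) :
              Measurable fun θs : Fin (m + 1) → (Fin p → ℝ) => (θs j, y))
        calc ∫⁻ θs : Fin (m + 1) → (Fin p → ℝ), ENNReal.ofReal (qtot (y, θs) * ev y)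
            = ∫⁻ θs : Fin (m + 1) → (Fin p → ℝ),
                ENNReal.ofReal (ev y) * ENNReal.ofReal (qtot (y, θs)) :=
              lintegral_congr fun θs => by
                rw [mul_comm (qtot (y, θs)) (ev y), ENNReal.ofReal_mul (hev_nonneg y)]
          _ = ENNReal.ofReal (ev y)
              * ∫⁻ θs : Fin (m + 1) → (Fin p → ℝ), ENNReal.ofReal (qtot (y, θs)) :=
              lintegral_const_mul _ hms
          _ = ENNReal.ofReal (ev y) := by
              rw [show ∫⁻ θs : Fin (m + 1) → (Fin p → ℝ), ENNReal.ofReal (qtot (y, θs)) = 1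
                from hQprodM_lone y, mul_one]
      rw [lintegral_congr inner]
      exact le_of_eq hEvl
    have hcard : (Finset.univ : Finset (Fin (m + 1))).card = m + 1 := by simp
    have hmain : ((m + 1 : ℕ) : ℝ≥0∞) * ∫⁻ z, ENNReal.ofReal (fK i0 z) ∂((volume : Measure (Fin n → ℝ)).prod
      (volume : Measure (Fin (m + 1) → (Fin p → ℝ))))
        ≤ ((m + 1 : ℕ) : ℝ≥0∞) * 1 := by
      have hstep1 : ∑ j : Fin (m + 1), ∫⁻ z, ENNReal.ofReal (fK j z) ∂((volume : Measure (Fin n → ℝ)).prod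
      (volume : Measure (Fin (m + 1) → (Fin p → ℝ))))
          = ((m + 1 : ℕ) : ℝ≥0∞) * ∫⁻ z, ENNReal.ofReal (fK i0 z) ∂((volume : Measure (Fin n → ℝ)).prod
      (volume : Measure (Fin (m + 1) → (Fin p → ℝ)))) := by
        rw [Finset.sum_congr rfl fun j _ => hswap j, Finset.sum_const, hcard, nsmul_eq_mul]
      calc ((m + 1 : ℕ) : ℝ≥0∞) * ∫⁻ z, ENNReal.ofReal (fK i0 z) ∂((volume : Measure (Fin n → ℝ)).prod
      (volume : Measure (Fin (m + 1) → (Fin p → ℝ))))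
          = ∑ j : Fin (m + 1), ∫⁻ z, ENNReal.ofReal (fK j z) ∂((volume : Measure (Fin n → ℝ)).prod
      (volume : Measure (Fin (m + 1) → (Fin p → ℝ)))) := hstep1.symm
        _ = ∫⁻ z, ∑ j : Fin (m + 1), ENNReal.ofReal (fK j z) ∂((volume : Measure (Fin n → ℝ)).prod
      (volume : Measure (Fin (m + 1) → (Fin p → ℝ)))) :=
            (lintegral_finset_sum _ fun j _ => (mfK j).ennreal_ofReal).symm
        _ = ∫⁻ z, ENNReal.ofReal (∑ j, fK j z) ∂((volume : Measure (Fin n → ℝ)).prod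
      (volume : Measure (Fin (m + 1) → (Fin p → ℝ)))) :=
            lintegral_congr fun z =>
              (ENNReal.ofReal_sum_of_nonneg fun j _ => hfK_nonneg j z).symm
        _ ≤ ∫⁻ z, ENNReal.ofReal (((m + 1 : ℕ) : ℝ) * (qtot z * ev z.1)) ∂((volume : Measure (Fin n → ℝ)).prod
      (volume : Measure (Fin (m + 1) → (Fin p → ℝ)))) :=
            lintegral_mono fun z => ENNReal.ofReal_le_ofReal (hsum_le z)
        _ = ((m + 1 : ℕ) : ℝ≥0∞) * ∫⁻ z, ENNReal.ofReal (qtot z * ev z.1) ∂((volume : Measure (Fin n → ℝ)).prod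
      (volume : Measure (Fin (m + 1) → (Fin p → ℝ)))) := by
            rw [show (fun z : (Fin n → ℝ) × (Fin (m + 1) → (Fin p → ℝ)) =>
                ENNReal.ofReal (((m + 1 : ℕ) : ℝ) * (qtot z * ev z.1)))
                = fun z => ((m + 1 : ℕ) : ℝ≥0∞) * ENNReal.ofReal (qtot z * ev z.1) from
              funext fun z => by
                rw [ENNReal.ofReal_mul (le_of_lt hcast_pos), ENNReal.ofReal_natCast]]
            exact lintegral_const_mul _ mqev.ennreal_ofReal
        _ ≤ ((m + 1 : ℕ) : ℝ≥0∞) * 1 := mul_le_mul_right hbound _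
    have hfinal : ∫⁻ z, ENNReal.ofReal (fK i0 z) ∂((volume : Measure (Fin n → ℝ)).prod
      (volume : Measure (Fin (m + 1) → (Fin p → ℝ)))) ≤ 1 :=
      (ENNReal.mul_le_mul_iff_right (by exact_mod_cast Nat.succ_ne_zero m)
        (ENNReal.natCast_ne_top _)).1 hmain
    calc ∫⁻ z, ENNReal.ofReal (K z) ∂((volume : Measure (Fin n → ℝ)).prod
      (volume : Measure (Fin (m + 1) → (Fin p → ℝ))))
        = ∫⁻ z, ENNReal.ofReal (fK i0 z) ∂((volume : Measure (Fin n → ℝ)).prod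
      (volume : Measure (Fin (m + 1) → (Fin p → ℝ)))) := lintegral_congr fun z => by rw [hKeq]
      _ ≤ 1 := hfinal
  have hKInt : Integrable K ((volume : Measure (Fin n → ℝ)).prod
      (volume : Measure (Fin (m + 1) → (Fin p → ℝ)))) := by
    refine ⟨mK.aestronglyMeasurable, ?_⟩
    rw [hasFiniteIntegral_iff_ofReal (Filter.Eventually.of_forall hK_nonneg)]
    exact lt_of_le_of_lt hKl ENNReal.one_lt_top
  have hKle : ∫ z, K z ∂((volume : Measure (Fin n → ℝ)).prod
      (volume : Measure (Fin (m + 1) → (Fin p → ℝ)))) ≤ 1 := by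
    rw [integral_eq_lintegral_of_nonneg_ae (Filter.Eventually.of_forall hK_nonneg)
      mK.aestronglyMeasurable]
    have := ENNReal.toReal_mono ENNReal.one_ne_top hKl
    simpa using this
  -- pointwise inequality off the null set
  have hNae : ∀ᵐ z ∂((volume : Measure (Fin n → ℝ)).prod
      (volume : Measure (Fin (m + 1) → (Fin p → ℝ)))),
      ¬(0 < lik z.1 (z.2 i0) * prior (z.2 i0) ∧ ev z.1 = 0) :=
    measure_eq_zero_iff_ae_notMem.1 hNnull
  have hzero : ∀ z, w z = 0 → L z = 0 ∧ A z = 0 ∧ K z = 0 := by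
    intro z h0
    refine ⟨?_, ?_, ?_⟩
    · show w z * Real.log (lik z.1 (z.2 i0) / S z) = 0
      rw [h0, zero_mul]
    · have h0' : prior (z.2 i0) * lik z.1 (z.2 i0)
          * ∏ j ∈ Finset.univ.erase i0, q (z.2 j) z.1 = 0 := h0
      rcases mul_eq_zero.1 h0' with h1 | h2
      · have hf0 : f (z.1, z.2 i0) = 0 := by
          show joint z.1 (z.2 i0)
            * Real.log (joint z.1 (z.2 i0) / (ev z.1 * prior (z.2 i0))) = 0
          have hj0 : joint z.1 (z.2 i0) = 0 := by
            rw [hjoint]; linear_combination h1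
          rw [hj0, zero_mul]
        show f (z.1, z.2 i0) * ∏ j ∈ Finset.univ.erase i0, q (z.2 j) z.1 = 0
        rw [hf0, zero_mul]
      · show f (z.1, z.2 i0) * ∏ j ∈ Finset.univ.erase i0, q (z.2 j) z.1 = 0
        rw [h2, mul_zero]
    · show w z * (ev z.1 / S z) = 0
      rw [h0, zero_mul]
  have hwpos_parts : ∀ z, 0 < w z → 0 < prior (z.2 i0) ∧ 0 < lik z.1 (z.2 i0) ∧
      0 < ∏ j ∈ Finset.univ.erase i0, q (z.2 j) z.1 := by
    intro z hz
    have hwrfl : w z = prior (z.2 i0) * lik z.1 (z.2 i0)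
        * ∏ j ∈ Finset.univ.erase i0, q (z.2 j) z.1 := rfl
    have hp : prior (z.2 i0) ≠ 0 := by
      intro h
      rw [hwrfl, h, zero_mul, zero_mul] at hz
      exact lt_irrefl 0 hz
    have hl : lik z.1 (z.2 i0) ≠ 0 := by
      intro h
      rw [hwrfl, h, mul_zero, zero_mul] at hz
      exact lt_irrefl 0 hz
    have hpr : (∏ j ∈ Finset.univ.erase i0, q (z.2 j) z.1) ≠ 0 := by
      intro h
      rw [hwrfl, h, mul_zero] at hz
      exact lt_irrefl 0 hz
    exact ⟨lt_of_le_of_ne (hprior_nonneg _) (Ne.symm hp),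
      lt_of_le_of_ne (hlik_nonneg _ _) (Ne.symm hl),
      lt_of_le_of_ne (Finset.prod_nonneg fun _ _ => hq_nonneg _ _) (Ne.symm hpr)⟩
  have hptw : ∀ᵐ z ∂((volume : Measure (Fin n → ℝ)).prod
      (volume : Measure (Fin (m + 1) → (Fin p → ℝ)))), L z - A z ≤ K z - w z := by
    filter_upwards [hNae] with z hz
    rcases eq_or_lt_of_le (hw_nonneg z) with hw0 | hwpos
    · obtain ⟨hL0, hA0, hK0⟩ := hzero z hw0.symm
      rw [hL0, hA0, hK0, ← hw0]
    · obtain ⟨hp0, hl0, hprod0⟩ := hwpos_parts z hwpos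
      have hlp : 0 < lik z.1 (z.2 i0) * prior (z.2 i0) := mul_pos hl0 hp0
      have hevpos : 0 < ev z.1 :=
        lt_of_le_of_ne (hev_nonneg _) (Ne.symm fun h => hz ⟨hlp, h⟩)
      have hq0 : 0 < q (z.2 i0) z.1 := hq_pos _ _ hlp
      have hr0 : 0 < lik z.1 (z.2 i0) * prior (z.2 i0) / q (z.2 i0) z.1 := div_pos hlp hq0
      have hSpos : 0 < S z := by
        show 0 < ((m + 1 : ℕ) : ℝ)⁻¹
          * ∑ j, lik z.1 (z.2 j) * prior (z.2 j) / q (z.2 j) z.1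
        refine mul_pos (by positivity) ?_
        exact Finset.sum_pos' (fun j _ => hr_nonneg j z) ⟨i0, Finset.mem_univ i0, hr0⟩
      have hLz : L z = w z * (Real.log (lik z.1 (z.2 i0)) - Real.log (S z)) := by
        show w z * Real.log (lik z.1 (z.2 i0) / S z) = _
        rw [Real.log_div (ne_of_gt hl0) (ne_of_gt hSpos)]
      have hAz : A z = w z * (Real.log (lik z.1 (z.2 i0)) - Real.log (ev z.1)) := by
        show f (z.1, z.2 i0) * ∏ j ∈ Finset.univ.erase i0, q (z.2 j) z.1 = _
        rw [show f (z.1, z.2 i0) = joint z.1 (z.2 i0)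
            * Real.log (joint z.1 (z.2 i0) / (ev z.1 * prior (z.2 i0))) from rfl,
          hjoint,
          show lik z.1 (z.2 i0) * prior (z.2 i0) / (ev z.1 * prior (z.2 i0))
              = lik z.1 (z.2 i0) / ev z.1 from
            mul_div_mul_right _ _ (ne_of_gt hp0),
          Real.log_div (ne_of_gt hl0) (ne_of_gt hevpos),
          show w z = prior (z.2 i0) * lik z.1 (z.2 i0)
            * ∏ j ∈ Finset.univ.erase i0, q (z.2 j) z.1 from rfl]
        ring
      have hlog : Real.log (ev z.1) - Real.log (S z) ≤ ev z.1 / S z - 1 := by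
        have h := Real.log_le_sub_one_of_pos (div_pos hevpos hSpos)
        rwa [Real.log_div (ne_of_gt hevpos) (ne_of_gt hSpos)] at h
      calc L z - A z = w z * (Real.log (ev z.1) - Real.log (S z)) := by
            rw [hLz, hAz]; ring
        _ ≤ w z * (ev z.1 / S z - 1) :=
            mul_le_mul_of_nonneg_left hlog (le_of_lt hwpos)
        _ = K z - w z := by
            rw [show K z = w z * (ev z.1 / S z) from rfl]; ring
  -- assembly of the inequality
  have hineq : LACE ≤ MI := by
    have h1 : LACE - MI ≤ ∫ z, (K z - w z) ∂((volume : Measure (Fin n → ℝ)).prod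
        (volume : Measure (Fin (m + 1) → (Fin p → ℝ)))) := by
      have hd : LACE - MI = ∫ z, (L z - A z) ∂((volume : Measure (Fin n → ℝ)).prod
          (volume : Measure (Fin (m + 1) → (Fin p → ℝ)))) := by
        rw [hLACE', ← hAeq, ← integral_sub hIntL' hAInt]
      rw [hd]
      exact integral_mono_ae (hIntL'.sub hAInt) (hKInt.sub hwInt) hptw
    have h2 : ∫ z, (K z - w z) ∂((volume : Measure (Fin n → ℝ)).prod
        (volume : Measure (Fin (m + 1) → (Fin p → ℝ)))) ≤ 0 := by
      rw [integral_sub hKInt hwInt, hw1]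
      linarith [hKle]
    linarith
  refine ⟨hineq, fun hqp => ?_⟩
  -- equality case
  have heqae : ∀ᵐ z ∂((volume : Measure (Fin n → ℝ)).prod
      (volume : Measure (Fin (m + 1) → (Fin p → ℝ)))), L z = A z := by
    filter_upwards [hNae] with z hz
    rcases eq_or_lt_of_le (hw_nonneg z) with hw0 | hwpos
    · obtain ⟨hL0, hA0, _⟩ := hzero z hw0.symm
      rw [hL0, hA0]
    · obtain ⟨hp0, hl0, hprod0⟩ := hwpos_parts z hwpos
      have hlp : 0 < lik z.1 (z.2 i0) * prior (z.2 i0) := mul_pos hl0 hp0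
      have hevpos : 0 < ev z.1 :=
        lt_of_le_of_ne (hev_nonneg _) (Ne.symm fun h => hz ⟨hlp, h⟩)
      have hrj : ∀ j : Fin (m + 1),
          lik z.1 (z.2 j) * prior (z.2 j) / q (z.2 j) z.1 = ev z.1 := by
        intro j
        have hqj : q (z.2 j) z.1 = lik z.1 (z.2 j) * prior (z.2 j) / ev z.1 := by
          rw [hqp, hpost]
        by_cases hj : j = i0
        · subst hj
          rw [hqj, div_div_eq_mul_div, mul_div_cancel_left₀ _ (ne_of_gt hlp)]
        · have hqjne : q (z.2 j) z.1 ≠ 0 := by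
            intro h
            have h2 := Finset.prod_eq_zero (f := fun j => q (z.2 j) z.1)
              (Finset.mem_erase.2 ⟨hj, Finset.mem_univ j⟩) h
            rw [h2] at hprod0
            exact lt_irrefl 0 hprod0
          have hlpj : 0 < lik z.1 (z.2 j) * prior (z.2 j) := by
            have hqpos : 0 < q (z.2 j) z.1 :=
              lt_of_le_of_ne (hq_nonneg _ _) (Ne.symm hqjne)
            have heq3 : lik z.1 (z.2 j) * prior (z.2 j) = q (z.2 j) z.1 * ev z.1 := by
              rw [hqj, div_mul_cancel₀ _ (ne_of_gt hevpos)]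
            rw [heq3]
            exact mul_pos hqpos hevpos
          rw [hqj, div_div_eq_mul_div, mul_div_cancel_left₀ _ (ne_of_gt hlpj)]
      have hSz : S z = ev z.1 := by
        show ((m + 1 : ℕ) : ℝ)⁻¹
          * ∑ j, lik z.1 (z.2 j) * prior (z.2 j) / q (z.2 j) z.1 = ev z.1
        rw [Finset.sum_congr rfl fun j _ => hrj j, Finset.sum_const, Finset.card_fin,
          nsmul_eq_mul, inv_mul_cancel_left₀ (by positivity : ((m + 1 : ℕ) : ℝ) ≠ 0)]
      have hAz : A z = w z * Real.log (lik z.1 (z.2 i0) / ev z.1) := by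
        show f (z.1, z.2 i0) * ∏ j ∈ Finset.univ.erase i0, q (z.2 j) z.1 = _
        rw [show f (z.1, z.2 i0) = joint z.1 (z.2 i0)
            * Real.log (joint z.1 (z.2 i0) / (ev z.1 * prior (z.2 i0))) from rfl,
          hjoint,
          show lik z.1 (z.2 i0) * prior (z.2 i0) / (ev z.1 * prior (z.2 i0))
              = lik z.1 (z.2 i0) / ev z.1 from
            mul_div_mul_right _ _ (ne_of_gt hp0),
          show w z = prior (z.2 i0) * lik z.1 (z.2 i0)
            * ∏ j ∈ Finset.univ.erase i0, q (z.2 j) z.1 from rfl]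
        ring
      have hLz : L z = w z * Real.log (lik z.1 (z.2 i0) / ev z.1) := by
        show w z * Real.log (lik z.1 (z.2 i0) / S z) = _
        rw [hSz]
      rw [hLz, hAz]
  rw [hLACE', integral_congr_ae heqae, hAeq]
end

section
/- (InfoNCE bound.) Fix an integer M ≥ 1 and a measurable critic f : ℝ^p × ℝ^n → ℝ. Let Θ_1 ∼ p_Θ, let Y_1 have conditional density p(·|Θ_1) given Θ_1, and let Θ_2, …, Θ_M be i.i.d. with density p_Θ, independent of (Θ_1, Y_1). Define L^NCE(M,f) = E[ log( e^{f(Θ_1,Y_1)} / ( (1/M) Σ_{j=1}^M e^{f(Θ_j,Y_1)} ) ) ]. Then for every f and every M, L^NCE(M,f) ≤ I(Y;Θ) and L^NCE(M,f) ≤ log M. -/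
open MeasureTheory Real

lemma infoNCE_key {w q u L : ℝ} (hw : 0 ≤ w) (hq : 0 ≤ q) (hu : 0 < u)
    (h : 0 < w → 0 < q ∧ L = Real.log (w / q)) :
    w * Real.log u ≤ w * L + q * u - w := by
  rcases eq_or_lt_of_le hw with h0 | hw'
  · have : 0 ≤ q * u := mul_nonneg hq hu.le
    simp [← h0]
    linarith
  · obtain ⟨hq', hL⟩ := h hw'
    have hx : (0:ℝ) < u * q / w := by positivity
    have h1 : Real.log (u * q / w) ≤ u * q / w - 1 := Real.log_le_sub_one_of_pos hx
    have h2 : Real.log (u * q / w) = Real.log u - L := by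
      rw [hL, Real.log_div (by positivity) hw'.ne', Real.log_mul hu.ne' hq'.ne',
        Real.log_div hw'.ne' hq'.ne']
      ring
    rw [h2] at h1
    have h3 := mul_le_mul_of_nonneg_left h1 hw
    have h4 : w * (u * q / w - 1) = q * u - w := by field_simp
    rw [mul_sub, h4] at h3
    linarith

lemma integral_comp_mp {X Y : Type*} [MeasurableSpace X] [MeasurableSpace Y]
    {μ : Measure X} {ν : Measure Y} {φ : X → Y} (hφ : MeasurePreserving φ μ ν)
    {g : Y → ℝ} (hg : AEStronglyMeasurable g ν) :
    ∫ x, g (φ x) ∂μ = ∫ y, g y ∂ν := by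
  rw [← MeasureTheory.integral_map hφ.measurable.aemeasurable (hφ.map_eq.symm ▸ hg), hφ.map_eq]

set_option maxHeartbeats 2000000 in
/-- InfoNCE bound: With `Θ_1 ∼ p_Θ`, `Y_1 | Θ_1` from the
likelihood, and `Θ_2, …, Θ_M` i.i.d. from the prior independently of
`(Θ_1, Y_1)`, for any measurable critic `f`,
`L^NCE(M,f) = E[log (e^{f(Θ_1,Y_1)} / ((1/M) Σ_j e^{f(Θ_j,Y_1)}))]`
satisfies `L^NCE(M,f) ≤ I(Y;Θ)` and `L^NCE(M,f) ≤ log M`. -/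
theorem stmt_11
    (n p : ℕ)
    (M : ℕ) (hM : 1 ≤ M)
    (prior : (Fin p → ℝ) → ℝ)
    (lik : (Fin n → ℝ) → (Fin p → ℝ) → ℝ)
    (hprior_meas : Measurable prior)
    (hprior_nonneg : ∀ θ, 0 ≤ prior θ)
    (hprior_one : ∫ θ, prior θ = 1)
    (hlik_meas : Measurable (fun z : (Fin n → ℝ) × (Fin p → ℝ) => lik z.1 z.2))
    (hlik_nonneg : ∀ y θ, 0 ≤ lik y θ)
    (hlik_one : ∀ θ, ∫ y, lik y θ = 1)
    (joint : (Fin n → ℝ) → (Fin p → ℝ) → ℝ)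
    (hjoint : ∀ y θ, joint y θ = lik y θ * prior θ)
    (ev : (Fin n → ℝ) → ℝ)
    (hev : ∀ y, ev y = ∫ θ, lik y θ * prior θ)
    (f : (Fin p → ℝ) → (Fin n → ℝ) → ℝ)
    (hf_meas : Measurable (fun z : (Fin p → ℝ) × (Fin n → ℝ) => f z.1 z.2))
    (MI : ℝ)
    (hMI : MI = ∫ y, ∫ θ, joint y θ * Real.log (joint y θ / (ev y * prior θ)))
    (hIntMI : Integrable (fun z : (Fin n → ℝ) × (Fin p → ℝ) =>
      joint z.1 z.2 * Real.log (joint z.1 z.2 / (ev z.1 * prior z.2))))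
    (LNCE : ℝ)
    (hLNCE : LNCE = ∫ θs : Fin M → (Fin p → ℝ), ∫ y : Fin n → ℝ,
      ((∏ j, prior (θs j)) * lik y (θs ⟨0, hM⟩)) *
        Real.log (Real.exp (f (θs ⟨0, hM⟩) y) /
          ((M : ℝ)⁻¹ * ∑ j, Real.exp (f (θs j) y))))
    (hIntL : Integrable (fun z : (Fin M → (Fin p → ℝ)) × (Fin n → ℝ) =>
      ((∏ j, prior (z.1 j)) * lik z.2 (z.1 ⟨0, hM⟩)) *
        Real.log (Real.exp (f (z.1 ⟨0, hM⟩) z.2) /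
          ((M : ℝ)⁻¹ * ∑ j, Real.exp (f (z.1 j) z.2))))) :
    LNCE ≤ MI ∧ LNCE ≤ Real.log M := by
  obtain ⟨M', rfl⟩ : ∃ M', M = M' + 1 := ⟨M - 1, (Nat.succ_pred_eq_of_pos hM).symm⟩
  set i0 : Fin (M' + 1) := ⟨0, hM⟩ with hi0
  -- ### basic facts
  have hA : ∀ y θ, 0 ≤ lik y θ * prior θ := fun y θ =>
    mul_nonneg (hlik_nonneg y θ) (hprior_nonneg θ)
  have hev_nonneg : ∀ y, 0 ≤ ev y := fun y => (hev y) ▸ integral_nonneg fun θ => hA y θ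
  have hk_meas : Measurable fun z : (Fin n → ℝ) × (Fin p → ℝ) => lik z.1 z.2 * prior z.2 :=
    hlik_meas.mul (hprior_meas.comp measurable_snd)
  have hev_eq : ev = fun y => ∫ θ, lik y θ * prior θ := funext hev
  have hev_meas : Measurable ev := by
    rw [hev_eq]
    exact hk_meas.stronglyMeasurable.integral_prod_right'.measurable
  have hprior_int : Integrable prior := integrable_of_integral_eq_one hprior_one
  have hlik_int : ∀ θ, Integrable fun y => lik y θ := fun θ =>
    integrable_of_integral_eq_one (hlik_one θ)
  have hlik_lint : ∀ θ, ∫⁻ y, ENNReal.ofReal (lik y θ) = 1 := by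
    intro θ
    rw [← ofReal_integral_eq_lintegral_ofReal (hlik_int θ)
      (Filter.Eventually.of_forall fun y => hlik_nonneg y θ), hlik_one θ, ENNReal.ofReal_one]
  have hmeas1 : Measurable fun z : (Fin n → ℝ) × (Fin p → ℝ) =>
      ENNReal.ofReal (lik z.1 z.2 * prior z.2) := hk_meas.ennreal_ofReal
  have hk_lint : ∫⁻ z : (Fin n → ℝ) × (Fin p → ℝ), ENNReal.ofReal (lik z.1 z.2 * prior z.2) = 1 := by
    rw [Measure.volume_eq_prod _ _, lintegral_prod_symm _ hmeas1.aemeasurable]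
    have h1 : ∀ θ, ∫⁻ y, ENNReal.ofReal (lik y θ * prior θ) = ENNReal.ofReal (prior θ) := by
      intro θ
      rw [lintegral_congr (fun y => ENNReal.ofReal_mul (hlik_nonneg y θ)),
        lintegral_mul_const _ (by fun_prop), hlik_lint θ, one_mul]
    simp_rw [h1]
    rw [← ofReal_integral_eq_lintegral_ofReal hprior_int
      (Filter.Eventually.of_forall hprior_nonneg), hprior_one, ENNReal.ofReal_one]
  have hk_int : Integrable (fun z : (Fin n → ℝ) × (Fin p → ℝ) => lik z.1 z.2 * prior z.2) := by
    refine ⟨hk_meas.aestronglyMeasurable, ?_⟩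
    rw [hasFiniteIntegral_iff_ofReal (Filter.Eventually.of_forall fun z : (Fin n → ℝ) × (Fin p → ℝ) => hA z.1 z.2), hk_lint]
    exact ENNReal.one_lt_top
  have hk_int' : Integrable (fun z : (Fin n → ℝ) × (Fin p → ℝ) => lik z.1 z.2 * prior z.2)
      ((volume : Measure (Fin n → ℝ)).prod (volume : Measure (Fin p → ℝ))) := hk_int
  have hk_one : ∫ z : (Fin n → ℝ) × (Fin p → ℝ), lik z.1 z.2 * prior z.2 = 1 := by
    rw [integral_eq_lintegral_of_nonneg_ae (Filter.Eventually.of_forall fun z : (Fin n → ℝ) × (Fin p → ℝ) => hA z.1 z.2)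
      hk_meas.aestronglyMeasurable, hk_lint]
    simp
  have hev_int : Integrable ev := by
    rw [hev_eq]
    have := hk_int'.integral_prod_left
    exact this
  have hev_one : ∫ y, ev y = 1 := by
    have h2 : ∫ z : (Fin n → ℝ) × (Fin p → ℝ), lik z.1 z.2 * prior z.2
        = ∫ y, ∫ θ, lik y θ * prior θ :=
      MeasureTheory.integral_prod _ hk_int'
    simp_rw [hev]
    rw [← h2]
    exact hk_one
  have hev_lint : ∫⁻ y, ENNReal.ofReal (ev y) = 1 := by
    rw [← ofReal_integral_eq_lintegral_ofReal hev_int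
      (Filter.Eventually.of_forall hev_nonneg), hev_one, ENNReal.ofReal_one]
  -- ### a.e., positivity of evidence where the joint density is positive
  have m1 : Measurable fun z : (Fin (M' + 1) → (Fin p → ℝ)) × (Fin n → ℝ) => ev z.2 :=
    hev_meas.comp measurable_snd
  have m2 : Measurable fun z : (Fin (M' + 1) → (Fin p → ℝ)) × (Fin n → ℝ) =>
      lik z.2 (z.1 i0) * prior (z.1 i0) :=
    (hlik_meas.comp (measurable_snd.prodMk
      ((measurable_pi_apply i0).comp measurable_fst))).mul
      (hprior_meas.comp ((measurable_pi_apply i0).comp measurable_fst))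
  have hae : ∀ᵐ z : (Fin (M' + 1) → (Fin p → ℝ)) × (Fin n → ℝ),
      ev z.2 = 0 → lik z.2 (z.1 i0) * prior (z.1 i0) = 0 := by
    set N : Set ((Fin (M' + 1) → (Fin p → ℝ)) × (Fin n → ℝ)) :=
      {z | ev z.2 = 0 ∧ lik z.2 (z.1 i0) * prior (z.1 i0) ≠ 0} with hN
    have hNmeas : MeasurableSet N :=
      (measurableSet_eq_fun m1 measurable_const).inter
        ((measurableSet_eq_fun m2 measurable_const).compl)
    have hvol : volume N = 0 := by
      rw [Measure.volume_eq_prod _ _, Measure.prod_apply_symm hNmeas]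
      have hg0meas : Measurable fun y : Fin n → ℝ =>
          ∫⁻ θ, ENNReal.ofReal (lik y θ * prior θ) := hmeas1.lintegral_prod_right'
      have htot : ∫⁻ y : Fin n → ℝ, ∫⁻ θ, ENNReal.ofReal (lik y θ * prior θ) = 1 := by
        rw [← lintegral_prod _ hmeas1.aemeasurable]
        exact hk_lint
      have hfin : ∀ᵐ y : Fin n → ℝ, ∫⁻ θ, ENNReal.ofReal (lik y θ * prior θ) < ⊤ :=
        ae_lt_top hg0meas (by rw [htot]; exact ENNReal.one_ne_top)
      have hz : ∀ᵐ y : Fin n → ℝ,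
          (volume : Measure (Fin (M' + 1) → (Fin p → ℝ))) ((fun θs => (θs, y)) ⁻¹' N) = 0 := by
        filter_upwards [hfin] with y hy
        by_cases hevy : ev y = 0
        · have hmeasy : Measurable fun θ => lik y θ * prior θ :=
            hk_meas.comp (measurable_const.prodMk measurable_id)
          have hev_rep : ev y = (∫⁻ θ, ENNReal.ofReal (lik y θ * prior θ)).toReal := by
            rw [hev y]
            exact integral_eq_lintegral_of_nonneg_ae
              (Filter.Eventually.of_forall fun θ => hA y θ) hmeasy.aestronglyMeasurable
          have hl0 : ∫⁻ θ, ENNReal.ofReal (lik y θ * prior θ) = 0 := by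
            rcases (ENNReal.toReal_eq_zero_iff _).1 (hev_rep ▸ hevy) with h | h
            · exact h
            · exact absurd h hy.ne
          have hae0 : ∀ᵐ θ : Fin p → ℝ, lik y θ * prior θ = 0 := by
            filter_upwards [(lintegral_eq_zero_iff hmeasy.ennreal_ofReal).1 hl0] with θ hθ
            have : lik y θ * prior θ ≤ 0 := ENNReal.ofReal_eq_zero.1 hθ
            exact le_antisymm this (hA y θ)
          have hsub : ((fun θs => (θs, y)) ⁻¹' N) ⊆
              Function.eval i0 ⁻¹' {θ : Fin p → ℝ | lik y θ * prior θ ≠ 0} :=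
            fun θs hθs => hθs.2
          exact measure_mono_null hsub (Measure.pi_eval_preimage_null _ (ae_iff.1 hae0))
        · have : ((fun θs => (θs, y)) ⁻¹' N) = ∅ := by
            ext θs; simp [hN, hevy]
          rw [this, measure_empty]
      rw [lintegral_congr_ae hz, lintegral_zero]
    refine ae_iff.2 ?_
    have : {z : (Fin (M' + 1) → (Fin p → ℝ)) × (Fin n → ℝ) |
        ¬ (ev z.2 = 0 → lik z.2 (z.1 i0) * prior (z.1 i0) = 0)} = N := by
      ext z; simp [hN, Classical.not_imp]
    rw [this]
    exact hvol
  -- ### the rearrangement map Ψ and transfer of integrals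
  have hΨmp : MeasurePreserving
      (fun z : (Fin (M' + 1) → (Fin p → ℝ)) × (Fin n → ℝ) =>
        ((fun j => z.1 (i0.succAbove j), (z.1 i0, z.2)) :
          (Fin M' → (Fin p → ℝ)) × ((Fin p → ℝ) × (Fin n → ℝ))))
      volume volume := by
    have h1 : MeasurePreserving
        (fun z : (Fin (M' + 1) → (Fin p → ℝ)) × (Fin n → ℝ) =>
          (((MeasurableEquiv.piFinSuccAbove (fun _ => (Fin p → ℝ)) i0) z.1), z.2))
        volume volume :=
      (volume_preserving_piFinSuccAbove (fun _ : Fin (M' + 1) => (Fin p → ℝ)) i0).prod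
        (MeasurePreserving.id _)
    have h2 : MeasurePreserving
        (fun w : ((Fin p → ℝ) × (Fin M' → (Fin p → ℝ))) × (Fin n → ℝ) => (w.1.swap, w.2))
        volume volume :=
      (Measure.measurePreserving_swap (μ := volume) (ν := volume)).prod (MeasurePreserving.id _)
    have h3 : MeasurePreserving
        (fun w : ((Fin M' → (Fin p → ℝ)) × (Fin p → ℝ)) × (Fin n → ℝ) =>
          (w.1.1, (w.1.2, w.2))) volume volume :=
      measurePreserving_prodAssoc _ _ _
    exact (h3.comp (h2.comp h1))
  have htransfer : ∀ g : (Fin M' → (Fin p → ℝ)) × ((Fin p → ℝ) × (Fin n → ℝ)) → ℝ,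
      Measurable g → Integrable g volume →
      Integrable (fun z : (Fin (M' + 1) → (Fin p → ℝ)) × (Fin n → ℝ) =>
          g (fun j => z.1 (i0.succAbove j), (z.1 i0, z.2))) volume ∧
        ∫ z : (Fin (M' + 1) → (Fin p → ℝ)) × (Fin n → ℝ),
          g (fun j => z.1 (i0.succAbove j), (z.1 i0, z.2)) = ∫ w, g w := by
    intro g hg hgint
    exact ⟨(hΨmp.integrable_comp hg.aestronglyMeasurable).2 hgint,
      integral_comp_mp hΨmp hg.aestronglyMeasurable⟩
  -- ### prior products
  have hR_int : Integrable (fun r : Fin M' → (Fin p → ℝ) => ∏ j, prior (r j)) :=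
    Integrable.fintype_prod (f := fun _ : Fin M' => prior) fun _ => hprior_int
  have hR_one : ∫ r : Fin M' → (Fin p → ℝ), ∏ j, prior (r j) = 1 := by
    rw [integral_fintype_prod_volume_eq_prod (ι := Fin M') (f := fun _ => prior)]
    simp [hprior_one]
  have hR_meas : Measurable fun r : Fin M' → (Fin p → ℝ) => ∏ j, prior (r j) :=
    Finset.measurable_prod _ fun j _ => hprior_meas.comp (measurable_pi_apply j)
  have hP_int : Integrable (fun r : Fin (M' + 1) → (Fin p → ℝ) => ∏ j, prior (r j)) :=
    Integrable.fintype_prod (f := fun _ : Fin (M' + 1) => prior) fun _ => hprior_int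
  have hP_one : ∫ r : Fin (M' + 1) → (Fin p → ℝ), ∏ j, prior (r j) = 1 := by
    rw [integral_fintype_prod_volume_eq_prod (ι := Fin (M' + 1)) (f := fun _ => prior)]
    simp [hprior_one]
  have hP_meas : Measurable fun r : Fin (M' + 1) → (Fin p → ℝ) => ∏ j, prior (r j) :=
    Finset.measurable_prod _ fun j _ => hprior_meas.comp (measurable_pi_apply j)
  -- ### the joint density on (θ, y) (swapped coordinates)
  have hs : MeasurePreserving Prod.swap
      ((volume : Measure (Fin p → ℝ)).prod (volume : Measure (Fin n → ℝ)))
      ((volume : Measure (Fin n → ℝ)).prod (volume : Measure (Fin p → ℝ))) :=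
    Measure.measurePreserving_swap
  have hkk_meas : Measurable fun w : (Fin p → ℝ) × (Fin n → ℝ) => lik w.2 w.1 * prior w.1 :=
    (hlik_meas.comp (measurable_snd.prodMk measurable_fst)).mul (hprior_meas.comp measurable_fst)
  have hkk_int : Integrable (fun w : (Fin p → ℝ) × (Fin n → ℝ) => lik w.2 w.1 * prior w.1)
      volume := (hs.integrable_comp hk_meas.aestronglyMeasurable).2 hk_int'
  have hkk_one : ∫ w : (Fin p → ℝ) × (Fin n → ℝ), lik w.2 w.1 * prior w.1 = 1 :=
    (integral_comp_mp hs hk_meas.aestronglyMeasurable).trans hk_one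
  -- ### integrability and integral of the weight W
  have hTw_int : Integrable (fun w : (Fin M' → (Fin p → ℝ)) × ((Fin p → ℝ) × (Fin n → ℝ)) =>
      (∏ j, prior (w.1 j)) * (lik w.2.2 w.2.1 * prior w.2.1)) volume :=
    hR_int.mul_prod hkk_int
  have hTw_meas : Measurable fun w : (Fin M' → (Fin p → ℝ)) × ((Fin p → ℝ) × (Fin n → ℝ)) =>
      (∏ j, prior (w.1 j)) * (lik w.2.2 w.2.1 * prior w.2.1) :=
    (hR_meas.comp measurable_fst).mul (hkk_meas.comp measurable_snd)
  have hTw_one : ∫ w : (Fin M' → (Fin p → ℝ)) × ((Fin p → ℝ) × (Fin n → ℝ)),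
      (∏ j, prior (w.1 j)) * (lik w.2.2 w.2.1 * prior w.2.1) = 1 :=
    (integral_prod_mul (fun r : Fin M' → (Fin p → ℝ) => ∏ j, prior (r j))
      (fun c : (Fin p → ℝ) × (Fin n → ℝ) => lik c.2 c.1 * prior c.1)).trans
      (by rw [hR_one, hkk_one, one_mul])
  have hWfun : (fun z : (Fin (M' + 1) → (Fin p → ℝ)) × (Fin n → ℝ) =>
      (∏ j, prior (z.1 j)) * lik z.2 (z.1 i0)) =
      (fun z : (Fin (M' + 1) → (Fin p → ℝ)) × (Fin n → ℝ) =>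
        (fun w : (Fin M' → (Fin p → ℝ)) × ((Fin p → ℝ) × (Fin n → ℝ)) =>
          (∏ j, prior (w.1 j)) * (lik w.2.2 w.2.1 * prior w.2.1))
        (fun j => z.1 (i0.succAbove j), (z.1 i0, z.2))) := by
    funext z
    dsimp only
    rw [Fin.prod_univ_succAbove (fun j => prior (z.1 j)) i0]
    ring
  have hW_int : Integrable (fun z : (Fin (M' + 1) → (Fin p → ℝ)) × (Fin n → ℝ) =>
      (∏ j, prior (z.1 j)) * lik z.2 (z.1 i0)) volume := by
    rw [hWfun]
    exact (htransfer _ hTw_meas hTw_int).1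
  have hW_one : ∫ z : (Fin (M' + 1) → (Fin p → ℝ)) × (Fin n → ℝ),
      (∏ j, prior (z.1 j)) * lik z.2 (z.1 i0) = 1 := by
    rw [hWfun]
    exact ((htransfer _ hTw_meas hTw_int).2).trans hTw_one
  -- ### the MI integrand (swapped) and its extension
  have hIntMI' : Integrable (fun z : (Fin n → ℝ) × (Fin p → ℝ) =>
      joint z.1 z.2 * Real.log (joint z.1 z.2 / (ev z.1 * prior z.2)))
      ((volume : Measure (Fin n → ℝ)).prod (volume : Measure (Fin p → ℝ))) := hIntMI
  have hjm : Measurable fun c : (Fin p → ℝ) × (Fin n → ℝ) => joint c.2 c.1 := by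
    have he : (fun c : (Fin p → ℝ) × (Fin n → ℝ) => joint c.2 c.1)
        = fun c => lik c.2 c.1 * prior c.1 := funext fun c => hjoint _ _
    rw [he]; exact hkk_meas
  have hHs_meas : Measurable fun c : (Fin p → ℝ) × (Fin n → ℝ) =>
      joint c.2 c.1 * Real.log (joint c.2 c.1 / (ev c.2 * prior c.1)) :=
    hjm.mul (Real.measurable_log.comp (hjm.div
      ((hev_meas.comp measurable_snd).mul (hprior_meas.comp measurable_fst))))
  have hH_int : Integrable (fun c : (Fin p → ℝ) × (Fin n → ℝ) =>
      joint c.2 c.1 * Real.log (joint c.2 c.1 / (ev c.2 * prior c.1))) volume :=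
    (hs.integrable_comp hIntMI.aestronglyMeasurable).2 hIntMI
  have hMIprod : ∫ zc : (Fin n → ℝ) × (Fin p → ℝ),
      joint zc.1 zc.2 * Real.log (joint zc.1 zc.2 / (ev zc.1 * prior zc.2)) = MI := by
    rw [hMI]
    exact MeasureTheory.integral_prod _ hIntMI'
  have hH_one : ∫ c : (Fin p → ℝ) × (Fin n → ℝ),
      joint c.2 c.1 * Real.log (joint c.2 c.1 / (ev c.2 * prior c.1)) = MI :=
    (integral_comp_mp hs hIntMI.aestronglyMeasurable).trans hMIprod
  have hTg_int : Integrable (fun w : (Fin M' → (Fin p → ℝ)) × ((Fin p → ℝ) × (Fin n → ℝ)) =>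
      (∏ j, prior (w.1 j)) *
        (joint w.2.2 w.2.1 * Real.log (joint w.2.2 w.2.1 / (ev w.2.2 * prior w.2.1))))
      volume := hR_int.mul_prod hH_int
  have hTg_meas : Measurable fun w : (Fin M' → (Fin p → ℝ)) × ((Fin p → ℝ) × (Fin n → ℝ)) =>
      (∏ j, prior (w.1 j)) *
        (joint w.2.2 w.2.1 * Real.log (joint w.2.2 w.2.1 / (ev w.2.2 * prior w.2.1))) :=
    (hR_meas.comp measurable_fst).mul (hHs_meas.comp measurable_snd)
  have hTg_one : ∫ w : (Fin M' → (Fin p → ℝ)) × ((Fin p → ℝ) × (Fin n → ℝ)),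
      (∏ j, prior (w.1 j)) *
        (joint w.2.2 w.2.1 * Real.log (joint w.2.2 w.2.1 / (ev w.2.2 * prior w.2.1))) = MI :=
    (integral_prod_mul (fun r : Fin M' → (Fin p → ℝ) => ∏ j, prior (r j))
      (fun c : (Fin p → ℝ) × (Fin n → ℝ) =>
        joint c.2 c.1 * Real.log (joint c.2 c.1 / (ev c.2 * prior c.1)))).trans
      (by rw [hR_one, hH_one, one_mul])
  have hG2fun : (fun z : (Fin (M' + 1) → (Fin p → ℝ)) × (Fin n → ℝ) =>
      ((∏ j, prior (z.1 j)) * lik z.2 (z.1 i0)) *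
        Real.log (joint z.2 (z.1 i0) / (ev z.2 * prior (z.1 i0)))) =
      (fun z : (Fin (M' + 1) → (Fin p → ℝ)) × (Fin n → ℝ) =>
        (fun w : (Fin M' → (Fin p → ℝ)) × ((Fin p → ℝ) × (Fin n → ℝ)) =>
          (∏ j, prior (w.1 j)) *
            (joint w.2.2 w.2.1 * Real.log (joint w.2.2 w.2.1 / (ev w.2.2 * prior w.2.1))))
        (fun j => z.1 (i0.succAbove j), (z.1 i0, z.2))) := by
    funext z
    dsimp only
    rw [Fin.prod_univ_succAbove (fun j => prior (z.1 j)) i0, hjoint z.2 (z.1 i0)]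
    ring
  have hG2_int : Integrable (fun z : (Fin (M' + 1) → (Fin p → ℝ)) × (Fin n → ℝ) =>
      ((∏ j, prior (z.1 j)) * lik z.2 (z.1 i0)) *
        Real.log (joint z.2 (z.1 i0) / (ev z.2 * prior (z.1 i0)))) volume := by
    rw [hG2fun]
    exact (htransfer _ hTg_meas hTg_int).1
  have hG2_one : ∫ z : (Fin (M' + 1) → (Fin p → ℝ)) × (Fin n → ℝ),
      ((∏ j, prior (z.1 j)) * lik z.2 (z.1 i0)) *
        Real.log (joint z.2 (z.1 i0) / (ev z.2 * prior (z.1 i0))) = MI := by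
    rw [hG2fun]
    exact ((htransfer _ hTg_meas hTg_int).2).trans hTg_one
  -- ### the critic ratio and its symmetrization
  have hMc : (0:ℝ) < ((M' + 1 : ℕ) : ℝ) := by positivity
  have hS_pos : ∀ z : (Fin (M' + 1) → (Fin p → ℝ)) × (Fin n → ℝ),
      0 < ∑ j, Real.exp (f (z.1 j) z.2) :=
    fun z => Finset.sum_pos (fun j _ => Real.exp_pos _) Finset.univ_nonempty
  have hden_pos : ∀ z : (Fin (M' + 1) → (Fin p → ℝ)) × (Fin n → ℝ),
      0 < ((M' + 1 : ℕ) : ℝ)⁻¹ * ∑ j, Real.exp (f (z.1 j) z.2) :=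
    fun z => mul_pos (by positivity) (hS_pos z)
  have hU_pos : ∀ (k : Fin (M' + 1)) (z : (Fin (M' + 1) → (Fin p → ℝ)) × (Fin n → ℝ)),
      0 < Real.exp (f (z.1 k) z.2) / (((M' + 1 : ℕ) : ℝ)⁻¹ * ∑ j, Real.exp (f (z.1 j) z.2)) :=
    fun k z => div_pos (Real.exp_pos _) (hden_pos z)
  have hfz_meas : ∀ k : Fin (M' + 1),
      Measurable fun z : (Fin (M' + 1) → (Fin p → ℝ)) × (Fin n → ℝ) =>
        Real.exp (f (z.1 k) z.2) :=
    fun k => by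
      have hg : Measurable fun z : (Fin (M' + 1) → (Fin p → ℝ)) × (Fin n → ℝ) =>
          ((z.1 k, z.2) : (Fin p → ℝ) × (Fin n → ℝ)) :=
        ((measurable_pi_apply k).comp measurable_fst).prodMk measurable_snd
      exact Real.measurable_exp.comp (hf_meas.comp hg)
  have hS_meas : Measurable fun z : (Fin (M' + 1) → (Fin p → ℝ)) × (Fin n → ℝ) =>
      ∑ j, Real.exp (f (z.1 j) z.2) :=
    Finset.measurable_sum _ fun j _ => hfz_meas j
  have hq0_meas : Measurable fun z : (Fin (M' + 1) → (Fin p → ℝ)) × (Fin n → ℝ) =>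
      ev z.2 * ∏ j, prior (z.1 j) := m1.mul (hP_meas.comp measurable_fst)
  have hq0_nonneg : ∀ z : (Fin (M' + 1) → (Fin p → ℝ)) × (Fin n → ℝ),
      0 ≤ ev z.2 * ∏ j, prior (z.1 j) :=
    fun z => mul_nonneg (hev_nonneg _) (Finset.prod_nonneg fun j _ => hprior_nonneg _)
  have hQk_meas : ∀ k : Fin (M' + 1),
      Measurable fun z : (Fin (M' + 1) → (Fin p → ℝ)) × (Fin n → ℝ) =>
        (ev z.2 * ∏ j, prior (z.1 j)) *
          (Real.exp (f (z.1 k) z.2) /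
            (((M' + 1 : ℕ) : ℝ)⁻¹ * ∑ j, Real.exp (f (z.1 j) z.2))) :=
    fun k => hq0_meas.mul ((hfz_meas k).div (measurable_const.mul hS_meas))
  have hQk_nonneg : ∀ (k : Fin (M' + 1)) (z : (Fin (M' + 1) → (Fin p → ℝ)) × (Fin n → ℝ)), 0 ≤
      (ev z.2 * ∏ j, prior (z.1 j)) *
        (Real.exp (f (z.1 k) z.2) /
          (((M' + 1 : ℕ) : ℝ)⁻¹ * ∑ j, Real.exp (f (z.1 j) z.2))) :=
    fun k z => mul_nonneg (hq0_nonneg z) (hU_pos k z).le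
  -- lintegral of the base density q0
  have hP_lint : ∫⁻ r : Fin (M' + 1) → (Fin p → ℝ), ENNReal.ofReal (∏ j, prior (r j)) = 1 := by
    rw [← ofReal_integral_eq_lintegral_ofReal hP_int
      (Filter.Eventually.of_forall fun r => Finset.prod_nonneg fun j _ => hprior_nonneg _),
      hP_one, ENNReal.ofReal_one]
  have hq0_lint : ∫⁻ z : (Fin (M' + 1) → (Fin p → ℝ)) × (Fin n → ℝ),
      ENNReal.ofReal (ev z.2 * ∏ j, prior (z.1 j)) = 1 := by
    have hptw : ∀ z : (Fin (M' + 1) → (Fin p → ℝ)) × (Fin n → ℝ),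
        ENNReal.ofReal (ev z.2 * ∏ j, prior (z.1 j)) =
          ENNReal.ofReal (∏ j, prior (z.1 j)) * ENNReal.ofReal (ev z.2) := by
      intro z
      rw [mul_comm, ENNReal.ofReal_mul (Finset.prod_nonneg fun j _ => hprior_nonneg _)]
    rw [lintegral_congr hptw, Measure.volume_eq_prod _ _,
      lintegral_prod_mul (hP_meas.ennreal_ofReal.aemeasurable)
        (hev_meas.ennreal_ofReal.aemeasurable), hP_lint, hev_lint, one_mul]
  -- the index swap is measure preserving
  have hswap_mp : ∀ k : Fin (M' + 1), MeasurePreserving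
      (fun z : (Fin (M' + 1) → (Fin p → ℝ)) × (Fin n → ℝ) =>
        ((fun j => z.1 (Equiv.swap i0 k j), z.2) :
          (Fin (M' + 1) → (Fin p → ℝ)) × (Fin n → ℝ)))
      volume volume := by
    intro k
    have h := volume_measurePreserving_piCongrLeft (fun _ : Fin (M' + 1) => (Fin p → ℝ))
      (Equiv.swap i0 k)
    have hfun : ⇑(MeasurableEquiv.piCongrLeft (fun _ : Fin (M' + 1) => (Fin p → ℝ))
        (Equiv.swap i0 k)) = fun x => fun j => x (Equiv.swap i0 k j) := by
      funext x j
      rw [MeasurableEquiv.coe_piCongrLeft]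
      conv_lhs => rw [show j = Equiv.swap i0 k (Equiv.swap i0 k j) from
        (Equiv.swap_apply_self _ _ _).symm]
      exact Equiv.piCongrLeft_apply_apply _ _ _ _
    rw [hfun] at h
    exact h.prod (MeasurePreserving.id _)
  -- all the shifted lintegrals agree
  have hIk : ∀ k : Fin (M' + 1),
      ∫⁻ z : (Fin (M' + 1) → (Fin p → ℝ)) × (Fin n → ℝ), ENNReal.ofReal
        ((ev z.2 * ∏ j, prior (z.1 j)) *
          (Real.exp (f (z.1 k) z.2) /
            (((M' + 1 : ℕ) : ℝ)⁻¹ * ∑ j, Real.exp (f (z.1 j) z.2)))) =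
      ∫⁻ z : (Fin (M' + 1) → (Fin p → ℝ)) × (Fin n → ℝ), ENNReal.ofReal
        ((ev z.2 * ∏ j, prior (z.1 j)) *
          (Real.exp (f (z.1 i0) z.2) /
            (((M' + 1 : ℕ) : ℝ)⁻¹ * ∑ j, Real.exp (f (z.1 j) z.2)))) := by
    intro k
    have hc := (hswap_mp k).lintegral_comp ((hQk_meas i0).ennreal_ofReal)
    rw [← hc]
    refine lintegral_congr fun z => ?_
    dsimp only
    rw [Equiv.prod_comp (Equiv.swap i0 k) (fun j => prior (z.1 j)),
      Equiv.sum_comp (Equiv.swap i0 k) (fun j => Real.exp (f (z.1 j) z.2)),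
      Equiv.swap_apply_left]
  -- pointwise sum over the index
  have hptsum : ∀ z : (Fin (M' + 1) → (Fin p → ℝ)) × (Fin n → ℝ),
      ∑ k : Fin (M' + 1), ((ev z.2 * ∏ j, prior (z.1 j)) *
          (Real.exp (f (z.1 k) z.2) /
            (((M' + 1 : ℕ) : ℝ)⁻¹ * ∑ j, Real.exp (f (z.1 j) z.2)))) =
      (ev z.2 * ∏ j, prior (z.1 j)) * ((M' + 1 : ℕ) : ℝ) := by
    intro z
    rw [← Finset.mul_sum, ← Finset.sum_div]
    congr 1
    rw [div_eq_iff (hden_pos z).ne', ← mul_assoc, mul_inv_cancel₀ hMc.ne', one_mul]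
  -- conclude ∫⁻ Q = 1
  have hQ_lint : ∫⁻ z : (Fin (M' + 1) → (Fin p → ℝ)) × (Fin n → ℝ), ENNReal.ofReal
      ((ev z.2 * ∏ j, prior (z.1 j)) *
        (Real.exp (f (z.1 i0) z.2) /
          (((M' + 1 : ℕ) : ℝ)⁻¹ * ∑ j, Real.exp (f (z.1 j) z.2)))) = 1 := by
    have hsum1 : ∑ k : Fin (M' + 1),
        (∫⁻ z : (Fin (M' + 1) → (Fin p → ℝ)) × (Fin n → ℝ), ENNReal.ofReal
          ((ev z.2 * ∏ j, prior (z.1 j)) *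
            (Real.exp (f (z.1 k) z.2) /
              (((M' + 1 : ℕ) : ℝ)⁻¹ * ∑ j, Real.exp (f (z.1 j) z.2))))) =
        ((M' + 1 : ℕ) : ENNReal) * ∫⁻ z : (Fin (M' + 1) → (Fin p → ℝ)) × (Fin n → ℝ),
          ENNReal.ofReal ((ev z.2 * ∏ j, prior (z.1 j)) *
            (Real.exp (f (z.1 i0) z.2) /
              (((M' + 1 : ℕ) : ℝ)⁻¹ * ∑ j, Real.exp (f (z.1 j) z.2)))) := by
      rw [Finset.sum_congr rfl fun k _ => hIk k, Finset.sum_const, Finset.card_univ,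
        Fintype.card_fin, nsmul_eq_mul]
    have hsum2 : ∑ k : Fin (M' + 1),
        (∫⁻ z : (Fin (M' + 1) → (Fin p → ℝ)) × (Fin n → ℝ), ENNReal.ofReal
          ((ev z.2 * ∏ j, prior (z.1 j)) *
            (Real.exp (f (z.1 k) z.2) /
              (((M' + 1 : ℕ) : ℝ)⁻¹ * ∑ j, Real.exp (f (z.1 j) z.2))))) =
        ((M' + 1 : ℕ) : ENNReal) := by
      rw [← lintegral_finset_sum _ fun k _ => (hQk_meas k).ennreal_ofReal]
      have : ∀ z : (Fin (M' + 1) → (Fin p → ℝ)) × (Fin n → ℝ),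
          ∑ k : Fin (M' + 1), ENNReal.ofReal
            ((ev z.2 * ∏ j, prior (z.1 j)) *
              (Real.exp (f (z.1 k) z.2) /
                (((M' + 1 : ℕ) : ℝ)⁻¹ * ∑ j, Real.exp (f (z.1 j) z.2)))) =
          ENNReal.ofReal (ev z.2 * ∏ j, prior (z.1 j)) * ((M' + 1 : ℕ) : ENNReal) := by
        intro z
        rw [← ENNReal.ofReal_sum_of_nonneg fun k _ => hQk_nonneg k z, hptsum z,
          ENNReal.ofReal_mul (hq0_nonneg z), ENNReal.ofReal_natCast]
      rw [lintegral_congr this, lintegral_mul_const _ hq0_meas.ennreal_ofReal, hq0_lint, one_mul]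
    have hMne : ((M' + 1 : ℕ) : ENNReal) ≠ 0 := by simp
    have hMnt : ((M' + 1 : ℕ) : ENNReal) ≠ ⊤ := by simp
    have h12 := hsum1.symm.trans hsum2
    exact (ENNReal.mul_right_inj hMne hMnt).1 (by rw [mul_one]; exact h12)
  -- ### integrability and integral of Q
  have hQ_int : Integrable (fun z : (Fin (M' + 1) → (Fin p → ℝ)) × (Fin n → ℝ) =>
      (ev z.2 * ∏ j, prior (z.1 j)) *
        (Real.exp (f (z.1 i0) z.2) /
          (((M' + 1 : ℕ) : ℝ)⁻¹ * ∑ j, Real.exp (f (z.1 j) z.2)))) volume :=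
    ⟨(hQk_meas i0).aestronglyMeasurable, by
      rw [hasFiniteIntegral_iff_ofReal (Filter.Eventually.of_forall fun z => hQk_nonneg i0 z),
        hQ_lint]
      exact ENNReal.one_lt_top⟩
  have hQ_one : ∫ z : (Fin (M' + 1) → (Fin p → ℝ)) × (Fin n → ℝ),
      (ev z.2 * ∏ j, prior (z.1 j)) *
        (Real.exp (f (z.1 i0) z.2) /
          (((M' + 1 : ℕ) : ℝ)⁻¹ * ∑ j, Real.exp (f (z.1 j) z.2))) = 1 := by
    rw [integral_eq_lintegral_of_nonneg_ae (Filter.Eventually.of_forall fun z => hQk_nonneg i0 z)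
      (hQk_meas i0).aestronglyMeasurable, hQ_lint]
    simp
  -- ### LNCE as an integral over the product space
  have hIntLprod : Integrable (fun z : (Fin (M' + 1) → (Fin p → ℝ)) × (Fin n → ℝ) =>
      ((∏ j, prior (z.1 j)) * lik z.2 (z.1 i0)) *
        Real.log (Real.exp (f (z.1 i0) z.2) /
          (((M' + 1 : ℕ) : ℝ)⁻¹ * ∑ j, Real.exp (f (z.1 j) z.2))))
      ((volume : Measure (Fin (M' + 1) → (Fin p → ℝ))).prod
        (volume : Measure (Fin n → ℝ))) := hIntL
  have hLNCE' : LNCE = ∫ z : (Fin (M' + 1) → (Fin p → ℝ)) × (Fin n → ℝ),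
      ((∏ j, prior (z.1 j)) * lik z.2 (z.1 i0)) *
        Real.log (Real.exp (f (z.1 i0) z.2) /
          (((M' + 1 : ℕ) : ℝ)⁻¹ * ∑ j, Real.exp (f (z.1 j) z.2))) := by
    rw [hLNCE]
    exact MeasureTheory.integral_integral hIntLprod
  constructor
  · -- LNCE ≤ MI
    have haemono : (fun z : (Fin (M' + 1) → (Fin p → ℝ)) × (Fin n → ℝ) =>
        ((∏ j, prior (z.1 j)) * lik z.2 (z.1 i0)) *
          Real.log (Real.exp (f (z.1 i0) z.2) /
            (((M' + 1 : ℕ) : ℝ)⁻¹ * ∑ j, Real.exp (f (z.1 j) z.2)))) ≤ᵐ[volume]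
        (fun z : (Fin (M' + 1) → (Fin p → ℝ)) × (Fin n → ℝ) =>
          ((∏ j, prior (z.1 j)) * lik z.2 (z.1 i0)) *
            Real.log (joint z.2 (z.1 i0) / (ev z.2 * prior (z.1 i0))) +
          (ev z.2 * ∏ j, prior (z.1 j)) *
            (Real.exp (f (z.1 i0) z.2) /
              (((M' + 1 : ℕ) : ℝ)⁻¹ * ∑ j, Real.exp (f (z.1 j) z.2))) -
          (∏ j, prior (z.1 j)) * lik z.2 (z.1 i0)) := by
      filter_upwards [hae] with z hz
      refine infoNCE_key
        (mul_nonneg (Finset.prod_nonneg fun j _ => hprior_nonneg _) (hlik_nonneg _ _))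
        (hq0_nonneg z) (hU_pos i0 z) ?_
      intro hWpos
      have hPne : (∏ j, prior (z.1 j)) ≠ 0 := fun h0 => by simp [h0] at hWpos
      have hPpos : 0 < ∏ j, prior (z.1 j) :=
        lt_of_le_of_ne (Finset.prod_nonneg fun j _ => hprior_nonneg _) (Ne.symm hPne)
      have hlikpos : 0 < lik z.2 (z.1 i0) := by
        rcases (mul_pos_iff.1 hWpos) with ⟨_, h⟩ | ⟨h, _⟩
        · exact h
        · exact absurd hPpos (by linarith)
      have hpriorpos : 0 < prior (z.1 i0) := by
        have := Finset.prod_ne_zero_iff.1 hPne i0 (Finset.mem_univ i0)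
        exact lt_of_le_of_ne (hprior_nonneg _) (Ne.symm this)
      have hevpos : 0 < ev z.2 := by
        rcases lt_or_eq_of_le (hev_nonneg z.2) with h | h
        · exact h
        · exact absurd (hz h.symm) (mul_pos hlikpos hpriorpos).ne'
      refine ⟨mul_pos hevpos hPpos, ?_⟩
      have harg : joint z.2 (z.1 i0) / (ev z.2 * prior (z.1 i0)) =
          ((∏ j, prior (z.1 j)) * lik z.2 (z.1 i0)) / (ev z.2 * ∏ j, prior (z.1 j)) := by
        rw [hjoint z.2 (z.1 i0), div_eq_div_iff (by positivity) (by positivity)]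
        ring
      rw [harg]
    calc LNCE = ∫ z : (Fin (M' + 1) → (Fin p → ℝ)) × (Fin n → ℝ),
        ((∏ j, prior (z.1 j)) * lik z.2 (z.1 i0)) *
          Real.log (Real.exp (f (z.1 i0) z.2) /
            (((M' + 1 : ℕ) : ℝ)⁻¹ * ∑ j, Real.exp (f (z.1 j) z.2))) := hLNCE'
      _ ≤ ∫ z : (Fin (M' + 1) → (Fin p → ℝ)) × (Fin n → ℝ),
          (((∏ j, prior (z.1 j)) * lik z.2 (z.1 i0)) *
            Real.log (joint z.2 (z.1 i0) / (ev z.2 * prior (z.1 i0))) +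
          (ev z.2 * ∏ j, prior (z.1 j)) *
            (Real.exp (f (z.1 i0) z.2) /
              (((M' + 1 : ℕ) : ℝ)⁻¹ * ∑ j, Real.exp (f (z.1 j) z.2))) -
          (∏ j, prior (z.1 j)) * lik z.2 (z.1 i0)) :=
        integral_mono_ae hIntL ((hG2_int.add hQ_int).sub hW_int) haemono
      _ = MI := by
        have hfg : Integrable (fun z : (Fin (M' + 1) → (Fin p → ℝ)) × (Fin n → ℝ) =>
            ((∏ j, prior (z.1 j)) * lik z.2 (z.1 i0)) *
            Real.log (joint z.2 (z.1 i0) / (ev z.2 * prior (z.1 i0))) +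
            (ev z.2 * ∏ j, prior (z.1 j)) *
            (Real.exp (f (z.1 i0) z.2) /
              (((M' + 1 : ℕ) : ℝ)⁻¹ * ∑ j, Real.exp (f (z.1 j) z.2)))) volume := hG2_int.add hQ_int
        have e1 : (∫ z : (Fin (M' + 1) → (Fin p → ℝ)) × (Fin n → ℝ),
              (((∏ j, prior (z.1 j)) * lik z.2 (z.1 i0)) *
            Real.log (joint z.2 (z.1 i0) / (ev z.2 * prior (z.1 i0))) +
              (ev z.2 * ∏ j, prior (z.1 j)) *
            (Real.exp (f (z.1 i0) z.2) /
              (((M' + 1 : ℕ) : ℝ)⁻¹ * ∑ j, Real.exp (f (z.1 j) z.2))) -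
              (∏ j, prior (z.1 j)) * lik z.2 (z.1 i0))) =
            (∫ z : (Fin (M' + 1) → (Fin p → ℝ)) × (Fin n → ℝ),
              (((∏ j, prior (z.1 j)) * lik z.2 (z.1 i0)) *
            Real.log (joint z.2 (z.1 i0) / (ev z.2 * prior (z.1 i0))) +
              (ev z.2 * ∏ j, prior (z.1 j)) *
            (Real.exp (f (z.1 i0) z.2) /
              (((M' + 1 : ℕ) : ℝ)⁻¹ * ∑ j, Real.exp (f (z.1 j) z.2))))) -
            ∫ z : (Fin (M' + 1) → (Fin p → ℝ)) × (Fin n → ℝ), (∏ j, prior (z.1 j)) * lik z.2 (z.1 i0) :=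
          integral_sub hfg hW_int
        have e2 : (∫ z : (Fin (M' + 1) → (Fin p → ℝ)) × (Fin n → ℝ),
              (((∏ j, prior (z.1 j)) * lik z.2 (z.1 i0)) *
            Real.log (joint z.2 (z.1 i0) / (ev z.2 * prior (z.1 i0))) +
              (ev z.2 * ∏ j, prior (z.1 j)) *
            (Real.exp (f (z.1 i0) z.2) /
              (((M' + 1 : ℕ) : ℝ)⁻¹ * ∑ j, Real.exp (f (z.1 j) z.2))))) =
            (∫ z : (Fin (M' + 1) → (Fin p → ℝ)) × (Fin n → ℝ), ((∏ j, prior (z.1 j)) * lik z.2 (z.1 i0)) *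
            Real.log (joint z.2 (z.1 i0) / (ev z.2 * prior (z.1 i0)))) +
            ∫ z : (Fin (M' + 1) → (Fin p → ℝ)) × (Fin n → ℝ), (ev z.2 * ∏ j, prior (z.1 j)) *
            (Real.exp (f (z.1 i0) z.2) /
              (((M' + 1 : ℕ) : ℝ)⁻¹ * ∑ j, Real.exp (f (z.1 j) z.2))) :=
          integral_add hG2_int hQ_int
        rw [e1, e2, hG2_one, hQ_one, hW_one]
        ring
  · -- LNCE ≤ log M
    have hpt2 : ∀ z : (Fin (M' + 1) → (Fin p → ℝ)) × (Fin n → ℝ),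
        ((∏ j, prior (z.1 j)) * lik z.2 (z.1 i0)) *
          Real.log (Real.exp (f (z.1 i0) z.2) /
            (((M' + 1 : ℕ) : ℝ)⁻¹ * ∑ j, Real.exp (f (z.1 j) z.2))) ≤
        ((∏ j, prior (z.1 j)) * lik z.2 (z.1 i0)) * Real.log ((M' + 1 : ℕ) : ℝ) := by
      intro z
      refine mul_le_mul_of_nonneg_left ?_
        (mul_nonneg (Finset.prod_nonneg fun j _ => hprior_nonneg _) (hlik_nonneg _ _))
      refine Real.log_le_log (hU_pos i0 z) ?_
      rw [div_le_iff₀ (hden_pos z), ← mul_assoc, mul_inv_cancel₀ hMc.ne', one_mul]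
      exact Finset.single_le_sum (f := fun j => Real.exp (f (z.1 j) z.2))
        (fun j _ => (Real.exp_pos _).le) (Finset.mem_univ i0)
    calc LNCE = ∫ z : (Fin (M' + 1) → (Fin p → ℝ)) × (Fin n → ℝ),
        ((∏ j, prior (z.1 j)) * lik z.2 (z.1 i0)) *
          Real.log (Real.exp (f (z.1 i0) z.2) /
            (((M' + 1 : ℕ) : ℝ)⁻¹ * ∑ j, Real.exp (f (z.1 j) z.2))) := hLNCE'
      _ ≤ ∫ z : (Fin (M' + 1) → (Fin p → ℝ)) × (Fin n → ℝ),
          ((∏ j, prior (z.1 j)) * lik z.2 (z.1 i0)) * Real.log ((M' + 1 : ℕ) : ℝ) :=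
        integral_mono hIntL (hW_int.mul_const _) hpt2
      _ = Real.log ((M' + 1 : ℕ) : ℝ) := by
        rw [integral_mul_const, hW_one, one_mul]
end
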